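/- arXiv:1301.0096 — 10 statements merged into one kernel-verified Lean document; each statement's English description precedes it below -/
import Mathlib

section
/- Let G be a group, let A, B ⊆ G be finite and nonempty, and let a ∈ A and b ∈ B. Then there exists a finite subgroup H of G such that |A| + |B| − |AB| ≤ |H| and aHb ⊆ AB. -/
open Pointwise

private theorem coreOlson {G : Type*} [Group G] [DecidableEq G] (C : ℕ) :
    ∀ (n : ℕ) (A B : Finset G), (1:G) ∈ A → (1:G) ∈ B → (A * B).card < C →
    (2 * (A * B).card - (A.card + B.card)) * C + B.card ≤ n →
    ∃ H : Subgroup G, (H : Set G).Finite ∧ (H : Set G) ⊆ (↑(A * B) : Set G) ∧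
      A.card + B.card ≤ (A * B).card + (H : Set G).ncard := by
  intro n
  induction n using Nat.strong_induction_on with
  | _ n ih =>
  intro A B hA hB hPC hn
  have hAsub : A ⊆ A * B := fun x hx => by
    have := Finset.mul_mem_mul hx hB; rwa [mul_one] at this
  have hBsub : B ⊆ A * B := fun x hx => by
    have := Finset.mul_mem_mul hA hx; rwa [one_mul] at this
  by_cases h1 : ∃ c ∈ B, c • B ≠ B ∧ (B \ c⁻¹ • B).card ≤ (A.image (· * c) \ A).card
  · obtain ⟨c, hcB, hcne, hba⟩ := h1
    set A' := A ∪ A.image (· * c) with hA'def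
    set B' := B ∩ c⁻¹ • B with hB'def
    have h1A' : (1:G) ∈ A' := Finset.mem_union_left _ hA
    have h1B' : (1:G) ∈ B' := by
      refine Finset.mem_inter_of_mem hB ?_
      rw [Finset.mem_smul_finset]
      exact ⟨c, hcB, by simp⟩
    have hprod : A' * B' ⊆ A * B := by
      intro z hz
      rw [Finset.mem_mul] at hz
      obtain ⟨x, hx, y, hy, rfl⟩ := hz
      rw [hB'def, Finset.mem_inter] at hy
      rcases Finset.mem_union.1 hx with hx | hx
      · exact Finset.mul_mem_mul hx hy.1
      · rw [Finset.mem_image] at hx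
        obtain ⟨a, ha, rfl⟩ := hx
        have hy2 := hy.2
        rw [Finset.mem_smul_finset] at hy2
        obtain ⟨w, hw, rfl⟩ := hy2
        have : a * c * (c⁻¹ • w) = a * w := by
          simp [smul_eq_mul, mul_assoc]
        rw [this]
        exact Finset.mul_mem_mul ha hw
    have hcardA' : A'.card = A.card + (A.image (· * c) \ A).card := by
      rw [hA'def, Finset.union_comm, ← Finset.card_sdiff_add_card]; omega
    have hcardB' : B'.card + (B \ c⁻¹ • B).card = B.card :=
      Finset.card_inter_add_card_sdiff B (c⁻¹ • B)
    have hbpos : 1 ≤ (B \ c⁻¹ • B).card := by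
      rcases Nat.eq_zero_or_pos (B \ c⁻¹ • B).card with h | h
      · exfalso
        rw [Finset.card_eq_zero, Finset.sdiff_eq_empty_iff_subset] at h
        have hsub2 : c • B ⊆ B := by
          intro z hz
          have := Finset.smul_finset_subset_smul_finset (a := c) h
          have hz2 := this hz
          rwa [smul_inv_smul] at hz2
        exact hcne (Finset.eq_of_subset_of_card_le hsub2
          (by rw [Finset.card_smul_finset]))
      · exact h
    have hPle : (A' * B').card ≤ (A * B).card := Finset.card_le_card hprod
    have hsum : A.card + B.card ≤ A'.card + B'.card := by omega
    have hB'lt : B'.card < B.card := by omega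
    have hmeas : (2 * (A' * B').card - (A'.card + B'.card)) * C + B'.card < n := by
      have hM'M : 2 * (A' * B').card - (A'.card + B'.card)
          ≤ 2 * (A * B).card - (A.card + B.card) := by omega
      have hmul := Nat.mul_le_mul_right C hM'M
      omega
    obtain ⟨H, hfin, hsub, hcard⟩ := ih _ hmeas A' B' h1A' h1B'
      (lt_of_le_of_lt hPle hPC) le_rfl
    refine ⟨H, hfin, subset_trans hsub ?_, ?_⟩
    · exact_mod_cast Finset.coe_subset.2 hprod
    · omega
  · by_cases h2 : ∃ d ∈ A, d • B ≠ B ∧ (A.image (· * d) \ A).card < (d • B \ B).card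
    · obtain ⟨d, hdA, hdne, hab⟩ := h2
      set A' := A ∩ A.image (· * d⁻¹) with hA'def
      set B' := B ∪ d • B with hB'def
      have h1A' : (1:G) ∈ A' := by
        refine Finset.mem_inter_of_mem hA ?_
        rw [Finset.mem_image]
        exact ⟨d, hdA, by simp⟩
      have h1B' : (1:G) ∈ B' := Finset.mem_union_left _ hB
      have hprod : A' * B' ⊆ A * B := by
        intro z hz
        rw [Finset.mem_mul] at hz
        obtain ⟨x, hx, y, hy, rfl⟩ := hz
        rw [hA'def, Finset.mem_inter] at hx
        rcases Finset.mem_union.1 hy with hy | hy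
        · exact Finset.mul_mem_mul hx.1 hy
        · rw [Finset.mem_smul_finset] at hy
          obtain ⟨w, hw, rfl⟩ := hy
          have hx2 := hx.2
          rw [Finset.mem_image] at hx2
          obtain ⟨a, ha, rfl⟩ := hx2
          have : a * d⁻¹ * (d • w) = a * w := by
            simp [smul_eq_mul, mul_assoc]
          rw [this]
          exact Finset.mul_mem_mul ha hw
      have himg : (A \ A.image (· * d⁻¹)).card = (A.image (· * d) \ A).card := by
        have h₁ : (A \ A.image (· * d⁻¹)).image (· * d) = A.image (· * d) \ A := by
          rw [Finset.image_sdiff _ _ (mul_left_injective d)]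
          congr 1
          rw [Finset.image_image]
          have : ((· * d) ∘ (· * d⁻¹)) = id := by
            funext x; simp
          rw [this, Finset.image_id]
        rw [← h₁, Finset.card_image_of_injective _ (mul_left_injective d)]
      have hcardA' : A'.card + (A.image (· * d) \ A).card = A.card := by
        rw [← himg, hA'def]
        exact Finset.card_inter_add_card_sdiff A (A.image (· * d⁻¹))
      have hcardB' : B'.card = B.card + (d • B \ B).card := by
        rw [hB'def, Finset.union_comm, ← Finset.card_sdiff_add_card]; omega
      have hB'sub : B' ⊆ A * B := by
        rw [hB'def]
        refine Finset.union_subset hBsub ?_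
        intro z hz
        rw [Finset.mem_smul_finset] at hz
        obtain ⟨w, hw, rfl⟩ := hz
        exact Finset.mul_mem_mul hdA hw
      have hPgeB' : B'.card ≤ (A * B).card := Finset.card_le_card hB'sub
      have hPgeA : A.card ≤ (A * B).card := Finset.card_le_card hAsub
      have hPle : (A' * B').card ≤ (A * B).card := Finset.card_le_card hprod
      have hsum : A.card + B.card + 1 ≤ A'.card + B'.card := by omega
      have hmeas : (2 * (A' * B').card - (A'.card + B'.card)) * C + B'.card < n := by
        have hMlt : 2 * (A' * B').card - (A'.card + B'.card) + 1
            ≤ 2 * (A * B).card - (A.card + B.card) := by omega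
        have hmul := Nat.mul_le_mul_right C hMlt
        have hB'C : B'.card < C := lt_of_le_of_lt hPgeB' hPC
        have hexp : (2 * (A' * B').card - (A'.card + B'.card) + 1) * C
            = (2 * (A' * B').card - (A'.card + B'.card)) * C + C := by ring
        omega
      obtain ⟨H, hfin, hsub, hcard⟩ := ih _ hmeas A' B' h1A' h1B'
        (lt_of_le_of_lt hPle hPC) le_rfl
      refine ⟨H, hfin, subset_trans hsub ?_, ?_⟩
      · exact_mod_cast Finset.coe_subset.2 hprod
      · omega
    · -- terminal case
      push_neg at h1 h2
      have hstabB : ∀ g ∈ MulAction.stabilizer G B, g ∈ B := by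
        intro g hg
        rw [MulAction.mem_stabilizer_iff] at hg
        have : g • (1:G) ∈ g • B := Finset.smul_mem_smul_finset hB
        rw [hg] at this
        simpa using this
      have hScoe : (MulAction.stabilizer G B : Set G) ⊆ (↑B : Set G) := by
        intro g hg; exact hstabB g hg
      have hSfin : (MulAction.stabilizer G B : Set G).Finite :=
        Set.Finite.subset B.finite_toSet hScoe
      refine ⟨MulAction.stabilizer G B, hSfin, ?_, ?_⟩
      · exact subset_trans hScoe (by exact_mod_cast Finset.coe_subset.2 hBsub)
      · have hABS : (↑(A ∩ B) : Set G) ⊆ (MulAction.stabilizer G B : Set G) := by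
          intro g hg
          rw [Finset.coe_inter] at hg
          obtain ⟨hgA, hgB⟩ := hg
          rw [SetLike.mem_coe, MulAction.mem_stabilizer_iff]
          by_contra hne
          have hF1 := h1 g hgB hne
          have hF2 := h2 g hgA hne
          have hbb : (B \ g⁻¹ • B).card = (g • B \ B).card := by
            have : g • (B \ g⁻¹ • B) = g • B \ B := by
              rw [Finset.smul_finset_sdiff, smul_inv_smul]
            rw [← Finset.card_smul_finset g (B \ g⁻¹ • B), this]
          omega
        have hcap : (A ∩ B).card ≤ (MulAction.stabilizer G B : Set G).ncard := by
          rw [← Set.ncard_coe_finset]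
          exact Set.ncard_le_ncard hABS hSfin
        have hcup : (A ∪ B).card ≤ (A * B).card :=
          Finset.card_le_card (Finset.union_subset hAsub hBsub)
        have := Finset.card_union_add_card_inter A B
        omega

theorem statement3 {G : Type*} [Group G] (A B : Set G)
    (hA : A.Finite) (hB : B.Finite) (hAne : A.Nonempty) (hBne : B.Nonempty)
    (a b : G) (ha : a ∈ A) (hb : b ∈ B) :
    ∃ H : Subgroup G, (H : Set G).Finite ∧
      A.ncard + B.ncard ≤ (A * B).ncard + (H : Set G).ncard ∧
      ∀ h ∈ H, a * h * b ∈ A * B := by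
  classical
  have hABfin : (A * B).Finite := hA.mul hB
  set A₁ : Finset G := hA.toFinset.image (fun x => a⁻¹ * x) with hA₁def
  set B₁ : Finset G := hB.toFinset.image (fun x => x * b⁻¹) with hB₁def
  have h1A : (1:G) ∈ A₁ := by
    rw [hA₁def, Finset.mem_image]
    exact ⟨a, hA.mem_toFinset.2 ha, inv_mul_cancel a⟩
  have h1B : (1:G) ∈ B₁ := by
    rw [hB₁def, Finset.mem_image]
    exact ⟨b, hB.mem_toFinset.2 hb, mul_inv_cancel b⟩
  obtain ⟨H, hfin, hsub, hcard⟩ := coreOlson ((A₁ * B₁).card + 1) _ A₁ B₁ h1A h1B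
    (Nat.lt_succ_self _) le_rfl
  have hinj : Function.Injective (fun x : G => a⁻¹ * x * b⁻¹) := by
    intro x y hxy
    simp only at hxy
    exact mul_left_cancel (mul_right_cancel hxy)
  have hkey : A₁ * B₁ = hABfin.toFinset.image (fun x => a⁻¹ * x * b⁻¹) := by
    ext z
    rw [Finset.mem_mul, Finset.mem_image]
    constructor
    · rintro ⟨x, hx, y, hy, rfl⟩
      rw [hA₁def, Finset.mem_image] at hx
      rw [hB₁def, Finset.mem_image] at hy
      obtain ⟨u, hu, rfl⟩ := hx
      obtain ⟨v, hv, rfl⟩ := hy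
      refine ⟨u * v, ?_, by group⟩
      rw [Set.Finite.mem_toFinset]
      exact Set.mul_mem_mul (hA.mem_toFinset.1 hu) (hB.mem_toFinset.1 hv)
    · rintro ⟨w, hw, rfl⟩
      rw [Set.Finite.mem_toFinset] at hw
      obtain ⟨u, hu, v, hv, rfl⟩ := hw
      refine ⟨a⁻¹ * u, ?_, v * b⁻¹, ?_, by group⟩
      · rw [hA₁def, Finset.mem_image]; exact ⟨u, hA.mem_toFinset.2 hu, rfl⟩
      · rw [hB₁def, Finset.mem_image]; exact ⟨v, hB.mem_toFinset.2 hv, rfl⟩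
  have hcA : A₁.card = A.ncard := by
    rw [hA₁def, Finset.card_image_of_injective _ (mul_right_injective a⁻¹),
      Set.ncard_eq_toFinset_card A hA]
  have hcB : B₁.card = B.ncard := by
    rw [hB₁def, Finset.card_image_of_injective _ (mul_left_injective b⁻¹),
      Set.ncard_eq_toFinset_card B hB]
  have hcAB : (A₁ * B₁).card = (A * B).ncard := by
    rw [hkey, Finset.card_image_of_injective _ hinj,
      Set.ncard_eq_toFinset_card (A * B) hABfin]
  refine ⟨H, hfin, by omega, ?_⟩
  intro h hh
  have hmem := hsub hh
  rw [hkey] at hmem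
  rw [Finset.coe_image, Set.mem_image] at hmem
  obtain ⟨w, hw, hw2⟩ := hmem
  rw [Finset.mem_coe, Set.Finite.mem_toFinset] at hw
  have : a * h * b = w := by rw [← hw2]; group
  rwa [this]
end

section
/- Let G be a group and let A, B ⊆ G be finite and nonempty. Then (A,B) is critical if and only if there exist finite sets A*, B* ⊆ G with A ⊆ A* and B ⊆ B* such that (A*,B*) is a tight critical pair and |A* ∖ A| + |B* ∖ B| < |A*| + |B*| − |A*B*|. -/
open Pointwise

theorem statement5 {G : Type*} [Group G] (A B : Set G)
    (hA : A.Finite) (hB : B.Finite) (hAne : A.Nonempty) (hBne : B.Nonempty) :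
    (A * B).ncard < A.ncard + B.ncard ↔
      ∃ A' B' : Set G, A'.Finite ∧ B'.Finite ∧ A ⊆ A' ∧ B ⊆ B' ∧
        -- (A', B') is critical
        (A' * B').ncard < A'.ncard + B'.ncard ∧
        -- (A', B') is tight
        (∀ A'' B'' : Set G, A' ⊆ A'' → B' ⊆ B'' → A'' * B'' = A' * B' →
          A'' = A' ∧ B'' = B') ∧
        -- |A' ∖ A| + |B' ∖ B| < δ(A', B')
        (A' \ A).ncard + (B' \ B).ncard + (A' * B').ncard < A'.ncard + B'.ncard := by
  have hABfin : (A * B).Finite := hA.mul hB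
  obtain ⟨a0, ha0⟩ := hAne
  obtain ⟨b0, hb0⟩ := hBne
  have hleft : ∀ A1 B1 : Set G, A1 * B1 = A * B → B ⊆ B1 →
      A1 ⊆ (· * b0⁻¹) '' (A * B) := by
    intro A1 B1 hprod hBB1 a ha
    exact ⟨a * b0, hprod ▸ Set.mul_mem_mul ha (hBB1 hb0), by group⟩
  have hright : ∀ A1 B1 : Set G, A1 * B1 = A * B → A ⊆ A1 →
      B1 ⊆ (a0⁻¹ * ·) '' (A * B) := by
    intro A1 B1 hprod hAA1 b hb
    exact ⟨a0 * b, hprod ▸ Set.mul_mem_mul (hAA1 ha0) hb, by group⟩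
  have hlfin : ((· * b0⁻¹) '' (A * B)).Finite := hABfin.image _
  have hrfin : ((a0⁻¹ * ·) '' (A * B)).Finite := hABfin.image _
  have hlcard : ((· * b0⁻¹) '' (A * B)).ncard = (A * B).ncard :=
    Set.ncard_image_of_injective _ (mul_left_injective b0⁻¹)
  have hrcard : ((a0⁻¹ * ·) '' (A * B)).ncard = (A * B).ncard :=
    Set.ncard_image_of_injective _ (mul_right_injective a0⁻¹)
  constructor
  · intro h
    set S : Set ℕ := {n | ∃ A1 B1 : Set G, A ⊆ A1 ∧ B ⊆ B1 ∧ A1 * B1 = A * B ∧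
        A1.ncard + B1.ncard = n} with hS
    have hSne : A.ncard + B.ncard ∈ S := ⟨A, B, subset_rfl, subset_rfl, rfl, rfl⟩
    have hbdd : BddAbove S := by
      refine ⟨2 * (A * B).ncard, ?_⟩
      rintro n ⟨A1, B1, hAA1, hBB1, hprod, rfl⟩
      have h1 : A1.ncard ≤ (A * B).ncard :=
        hlcard ▸ Set.ncard_le_ncard (hleft A1 B1 hprod hBB1) hlfin
      have h2 : B1.ncard ≤ (A * B).ncard :=
        hrcard ▸ Set.ncard_le_ncard (hright A1 B1 hprod hAA1) hrfin
      omega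
    obtain ⟨A', B', hAA', hBB', hprod, hcard⟩ := Nat.sSup_mem ⟨_, hSne⟩ hbdd
    have hA'fin : A'.Finite := hlfin.subset (hleft A' B' hprod hBB')
    have hB'fin : B'.Finite := hrfin.subset (hright A' B' hprod hAA')
    have hAle : A.ncard ≤ A'.ncard := Set.ncard_le_ncard hAA' hA'fin
    have hBle : B.ncard ≤ B'.ncard := Set.ncard_le_ncard hBB' hB'fin
    have hprodcard : (A' * B').ncard = (A * B).ncard := by rw [hprod]
    have hd1 : (A' \ A).ncard + A.ncard = A'.ncard :=
      Set.ncard_diff_add_ncard_of_subset hAA' hA'fin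
    have hd2 : (B' \ B).ncard + B.ncard = B'.ncard :=
      Set.ncard_diff_add_ncard_of_subset hBB' hB'fin
    refine ⟨A', B', hA'fin, hB'fin, hAA', hBB', by omega, ?_, by omega⟩
    intro A'' B'' h1 h2 h3
    have hprod'' : A'' * B'' = A * B := h3.trans hprod
    have hA''fin : A''.Finite := hlfin.subset (hleft A'' B'' hprod'' (hBB'.trans h2))
    have hB''fin : B''.Finite := hrfin.subset (hright A'' B'' hprod'' (hAA'.trans h1))
    have hmem : A''.ncard + B''.ncard ∈ S :=
      ⟨A'', B'', hAA'.trans h1, hBB'.trans h2, hprod'', rfl⟩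
    have hle : A''.ncard + B''.ncard ≤ A'.ncard + B'.ncard :=
      hcard ▸ le_csSup hbdd hmem
    have g1 : A'.ncard ≤ A''.ncard := Set.ncard_le_ncard h1 hA''fin
    have g2 : B'.ncard ≤ B''.ncard := Set.ncard_le_ncard h2 hB''fin
    exact ⟨(Set.eq_of_subset_of_ncard_le h1 (by omega) hA''fin).symm,
      (Set.eq_of_subset_of_ncard_le h2 (by omega) hB''fin).symm⟩
  · rintro ⟨A', B', hA'fin, hB'fin, hAA', hBB', _, _, hlt⟩
    have hA'B'fin : (A' * B').Finite := hA'fin.mul hB'fin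
    have hsub : A * B ⊆ A' * B' := Set.mul_subset_mul hAA' hBB'
    have h1 : (A * B).ncard ≤ (A' * B').ncard := Set.ncard_le_ncard hsub hA'B'fin
    have hd1 : (A' \ A).ncard + A.ncard = A'.ncard :=
      Set.ncard_diff_add_ncard_of_subset hAA' hA'fin
    have hd2 : (B' \ B).ncard + B.ncard = B'.ncard :=
      Set.ncard_diff_add_ncard_of_subset hBB' hB'fin
    omega
end

section
/- Let G be a group and let B ⊆ G be finite, nonempty, and a proper subset of G. Then there exists a finite nonempty set A ⊆ G with AB ≠ G such that: (1) for every finite nonempty A' ⊆ G with A'B ≠ G one has |A'| + |B| − |A'B| ≤ |A| + |B| − |AB| (i.e. A attains the maximum deficiency δ(B)); and (2) either A is a subgroup of G, or G ∖ (AB) is a finite subgroup of G. -/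
open Pointwise Set

namespace Statement6Aux

variable {G : Type*} [Group G]

noncomputable def dlt (B A : Set G) : ℤ :=
  (A.ncard : ℤ) + B.ncard - (A * B).ncard

def valid (B A : Set G) : Prop := A.Finite ∧ A.Nonempty ∧ A * B ≠ univ

lemma ncard_le_mul_right {A B : Set G} (hA : A.Finite) (hBf : B.Finite)
    (hBne : B.Nonempty) : A.ncard ≤ (A * B).ncard := by
  obtain ⟨b, hb⟩ := hBne
  have h1 : A * {b} ⊆ A * B := mul_subset_mul_left (singleton_subset_iff.mpr hb)
  have h2 : (A * {b}).ncard = A.ncard := by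
    rw [Set.mul_singleton, Set.ncard_image_of_injective _ (mul_left_injective b)]
  calc A.ncard = (A * {b}).ncard := h2.symm
    _ ≤ _ := Set.ncard_le_ncard h1 (hA.mul hBf)

lemma singleton_mul_ncard (g : G) (A : Set G) : ({g} * A).ncard = A.ncard := by
  rw [Set.singleton_mul, Set.ncard_image_of_injective _ (mul_right_injective g)]

lemma singleton_mul_eq_univ {g : G} {X : Set G} (h : {g} * X = univ) : X = univ := by
  ext x
  simp only [mem_univ, iff_true]
  have hx : g * x ∈ ({g} : Set G) * X := h ▸ mem_univ _
  obtain ⟨a, ha, b, hb, hab⟩ := Set.mem_mul.mp hx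
  have : a = g := ha
  subst this
  have : b = x := by
    have := hab
    exact mul_left_cancel this
  exact this ▸ hb

lemma frag_translate {B A : Set G} (g : G) (hA : valid B A) :
    valid B ({g} * A) ∧ dlt B ({g} * A) = dlt B A ∧ ({g} * A).ncard = A.ncard := by
  have hassoc : ({g} * A) * B = {g} * (A * B) := mul_assoc _ _ _
  have hc1 : ({g} * A).ncard = A.ncard := singleton_mul_ncard g A
  have hc2 : (({g} * A) * B).ncard = (A * B).ncard := by
    rw [hassoc, singleton_mul_ncard]
  refine ⟨⟨(finite_singleton g).mul hA.1, (singleton_nonempty g).mul hA.2.1, ?_⟩, ?_, hc1⟩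
  · rw [hassoc]
    exact fun h => hA.2.2 (singleton_mul_eq_univ h)
  · simp only [dlt, hc1, hc2]

lemma exists_max {B : Set G} (hBf : B.Finite) (hBne : B.Nonempty) (hBproper : B ≠ univ) :
    ∃ d : ℤ, 1 ≤ d ∧ (∃ A, valid B A ∧ dlt B A = d) ∧ ∀ A, valid B A → dlt B A ≤ d := by
  have honeB : ({1} : Set G) * B = B := by
    rw [show ({1} : Set G) = (1 : Set G) from rfl, one_mul]
  have h1v : valid B {1} := ⟨finite_singleton 1, singleton_nonempty 1, by rw [honeB]; exact hBproper⟩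
  have h1d : dlt B {1} = 1 := by
    simp only [dlt, honeB, Set.ncard_singleton]
    ring
  obtain ⟨d, hdP, hub⟩ := Int.exists_greatest_of_bdd (P := fun z => ∃ A, valid B A ∧ dlt B A = z)
    ⟨(B.ncard : ℤ), by
      rintro z ⟨A, hAv, rfl⟩
      have h := ncard_le_mul_right hAv.1 hBf hBne
      simp only [dlt]
      omega⟩
    ⟨1, {1}, h1v, h1d⟩
  exact ⟨d, hub 1 ⟨{1}, h1v, h1d⟩, hdP, fun A hA => hub _ ⟨A, hA, rfl⟩⟩

lemma frag_inter {B : Set G} (hBf : B.Finite) {d : ℤ}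
    (hmax : ∀ A, valid B A → dlt B A ≤ d)
    {A A' : Set G} (hA : valid B A) (hdA : dlt B A = d) (hA' : valid B A') (hdA' : dlt B A' = d)
    (hne : (A ∩ A').Nonempty) (hU : (A ∪ A') * B ≠ univ) :
    valid B (A ∩ A') ∧ dlt B (A ∩ A') = d := by
  have hvI : valid B (A ∩ A') :=
    ⟨hA.1.subset inter_subset_left, hne,
     fun h => hA.2.2 (univ_subset_iff.mp (h ▸ mul_subset_mul_right inter_subset_left))⟩
  have hvU : valid B (A ∪ A') := ⟨hA.1.union hA'.1, hA.2.1.mono subset_union_left, hU⟩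
  have e1 : (A ∪ A') * B = A * B ∪ A' * B := union_mul
  have e2 : (A ∩ A') * B ⊆ (A * B) ∩ (A' * B) :=
    subset_inter (mul_subset_mul_right inter_subset_left) (mul_subset_mul_right inter_subset_right)
  have n1 : (A ∪ A').ncard + (A ∩ A').ncard = A.ncard + A'.ncard :=
    ncard_union_add_ncard_inter A A' hA.1 hA'.1
  have n2 : ((A * B) ∪ (A' * B)).ncard + ((A * B) ∩ (A' * B)).ncard
      = (A * B).ncard + (A' * B).ncard :=
    ncard_union_add_ncard_inter _ _ (hA.1.mul hBf) (hA'.1.mul hBf)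
  have n3 : ((A ∩ A') * B).ncard ≤ ((A * B) ∩ (A' * B)).ncard :=
    ncard_le_ncard e2 ((hA.1.mul hBf).inter_of_left _)
  have hU' : dlt B (A ∪ A') ≤ d := hmax _ hvU
  have hI' : dlt B (A ∩ A') ≤ d := hmax _ hvI
  refine ⟨hvI, ?_⟩
  simp only [dlt, e1] at hU' hI' hdA hdA' ⊢
  omega

lemma dual_subset {B X : Set G} : (X * B)ᶜ * B⁻¹ ⊆ Xᶜ := by
  rintro z ⟨y, hy, b, hb, rfl⟩
  intro hz
  exact hy (Set.mem_mul.mpr ⟨y * b, hz, b⁻¹, Set.mem_inv.mp hb, by group⟩)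

lemma dual_ge [Finite G] {B X : Set G} (hXne : X.Nonempty) (hXB : X * B ≠ univ) :
    valid B⁻¹ ((X * B)ᶜ) ∧ dlt B X ≤ dlt B⁻¹ ((X * B)ᶜ) := by
  have hfin : ∀ s : Set G, s.Finite := fun s => s.toFinite
  have hv : valid B⁻¹ ((X * B)ᶜ) := by
    refine ⟨hfin _, nonempty_compl.mpr hXB, fun h => ?_⟩
    obtain ⟨x, hx⟩ := hXne
    have hsub2 : (univ : Set G) ⊆ Xᶜ := by rw [← h]; exact dual_subset
    exact (hsub2 (mem_univ x)) hx
  have c1 : X.ncard + Xᶜ.ncard = Nat.card G := ncard_add_ncard_compl X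
  have c2 : (X * B).ncard + (X * B)ᶜ.ncard = Nat.card G := ncard_add_ncard_compl _
  have c3 : ((X * B)ᶜ * B⁻¹).ncard ≤ Xᶜ.ncard := ncard_le_ncard dual_subset (hfin _)
  have c4 : (B⁻¹ : Set G).ncard = B.ncard := ncard_inv B
  refine ⟨hv, ?_⟩
  simp only [dlt, c4]
  omega

lemma exists_subgroup_frag {B : Set G} (hBf : B.Finite) {d : ℤ}
    (hmax : ∀ A, valid B A → dlt B A ≤ d)
    (hex : ∃ A, valid B A ∧ dlt B A = d)
    (hcase2 : ∀ A A', valid B A → dlt B A = d → valid B A' → dlt B A' = d →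
       (∀ A'', valid B A'' → dlt B A'' = d → A'.ncard ≤ A''.ncard) →
       (A ∩ A').Nonempty → (A ∪ A') * B = univ → A = A') :
    ∃ A, valid B A ∧ dlt B A = d ∧ (∃ H : Subgroup G, A = (H : Set G)) := by
  obtain ⟨A₀, hA₀v, hA₀d⟩ := hex
  have hSne : ({n | ∃ A, valid B A ∧ dlt B A = d ∧ A.ncard = n} : Set ℕ).Nonempty :=
    ⟨A₀.ncard, A₀, hA₀v, hA₀d, rfl⟩
  obtain ⟨A₁, hA₁v, hA₁d, hA₁c⟩ := Nat.sInf_mem hSne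
  have hmin : ∀ A'', valid B A'' → dlt B A'' = d → A₁.ncard ≤ A''.ncard := by
    intro A'' h1 h2
    rw [hA₁c]
    exact Nat.sInf_le ⟨A'', h1, h2, rfl⟩
  obtain ⟨a, ha⟩ := hA₁v.2.1
  obtain ⟨hAv, hAd, hAc⟩ := frag_translate a⁻¹ hA₁v
  set A : Set G := {a⁻¹} * A₁ with hAdef
  rw [hA₁d] at hAd
  have hminA : ∀ A'', valid B A'' → dlt B A'' = d → A.ncard ≤ A''.ncard := by
    intro A'' h1 h2
    rw [hAc]
    exact hmin A'' h1 h2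
  have h1A : (1 : G) ∈ A :=
    Set.mem_mul.mpr ⟨a⁻¹, rfl, a, ha, inv_mul_cancel a⟩
  have key : ∀ g ∈ A, {g} * A = A := by
    intro g hg
    obtain ⟨hgv, hgd, hgc⟩ := frag_translate g hAv
    rw [hAd] at hgd
    have hgmem : g ∈ ({g} * A) ∩ A :=
      ⟨Set.mem_mul.mpr ⟨g, rfl, 1, h1A, mul_one g⟩, hg⟩
    by_cases hU : ({g} * A ∪ A) * B = univ
    · exact hcase2 _ _ hgv hgd hAv hAd hminA ⟨g, hgmem⟩ hU
    · obtain ⟨hvI, hdI⟩ := frag_inter hBf hmax hgv hgd hAv hAd ⟨g, hgmem⟩ hU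
      have hIA : ({g} * A) ∩ A = A := by
        refine Set.eq_of_subset_of_ncard_le inter_subset_right ?_ hAv.1
        exact hminA _ hvI hdI
      have hsub : A ⊆ {g} * A := hIA.symm.subset.trans inter_subset_left
      exact (Set.eq_of_subset_of_ncard_le hsub (le_of_eq hgc) hgv.1).symm
  have hmul : ∀ {x y : G}, x ∈ A → y ∈ A → x * y ∈ A := by
    intro x y hx hy
    have := key x hx
    exact this ▸ Set.mem_mul.mpr ⟨x, rfl, y, hy, rfl⟩
  have hinv : ∀ {x : G}, x ∈ A → x⁻¹ ∈ A := by
    intro x hx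
    have h1 : (1 : G) ∈ {x} * A := (key x hx).symm ▸ h1A
    obtain ⟨u, hu, y, hy, hxy⟩ := Set.mem_mul.mp h1
    have hux : u = x := hu
    rw [hux] at hxy
    have hyx : y = x⁻¹ := eq_inv_of_mul_eq_one_right hxy
    exact hyx ▸ hy
  exact ⟨A, hAv, hAd, ⟨⟨⟨⟨A, hmul⟩, h1A⟩, hinv⟩, rfl⟩⟩

lemma case2_absurd [Finite G] {B : Set G} {d : ℤ} (hd1 : 1 ≤ d)
    (hmaxInv : ∀ C, valid B⁻¹ C → dlt B⁻¹ C ≤ d)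
    {A A' : Set G} (hA : valid B A) (hdA : dlt B A = d)
    (hA' : valid B A') (hdA' : dlt B A' = d)
    (hstar : ∀ C, valid B⁻¹ C → dlt B⁻¹ C = d → A'.ncard ≤ C.ncard)
    (hne : (A ∩ A').Nonempty) (hU : (A ∪ A') * B = univ) : False := by
  have hfin : ∀ s : Set G, s.Finite := fun s => s.toFinite
  obtain ⟨x, hxA, hxA'⟩ := hne
  obtain ⟨hCv, hCge⟩ := dual_ge hA.2.1 hA.2.2
  have hCd : dlt B⁻¹ ((A * B)ᶜ) = d := le_antisymm (hmaxInv _ hCv) (hdA ▸ hCge)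
  have hCcard : A'.ncard ≤ ((A * B)ᶜ).ncard := hstar _ hCv hCd
  have hsub : (A * B)ᶜ ⊆ (A' * B) \ (A * B) := by
    intro c hc
    refine ⟨?_, hc⟩
    have hcu : c ∈ A * B ∪ A' * B := by
      rw [← union_mul, hU]; exact mem_univ c
    exact hcu.resolve_left hc
  have hxB : ({x} : Set G) * B ⊆ (A' * B) ∩ (A * B) :=
    subset_inter (mul_subset_mul_right (singleton_subset_iff.mpr hxA'))
      (mul_subset_mul_right (singleton_subset_iff.mpr hxA))
  have hxBcard : B.ncard ≤ ((A' * B) ∩ (A * B)).ncard := by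
    calc B.ncard = (({x} : Set G) * B).ncard := (singleton_mul_ncard x B).symm
      _ ≤ _ := ncard_le_ncard hxB (hfin _)
  have hdiff : ((A' * B) ∩ (A * B)).ncard + ((A' * B) \ (A * B)).ncard = (A' * B).ncard :=
    ncard_inter_add_ncard_diff_eq_ncard _ _ (hfin _)
  have hCle : ((A * B)ᶜ).ncard ≤ ((A' * B) \ (A * B)).ncard :=
    ncard_le_ncard hsub (hfin _)
  simp only [dlt] at hdA'
  omega

end Statement6Aux

open Statement6Aux

theorem statement6 {G : Type*} [Group G] (B : Set G)
    (hB : B.Finite) (hBne : B.Nonempty) (hBproper : B ≠ Set.univ) :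
    ∃ A : Set G, A.Finite ∧ A.Nonempty ∧ A * B ≠ Set.univ ∧
      (∀ A' : Set G, A'.Finite → A'.Nonempty → A' * B ≠ Set.univ →
        (A'.ncard : ℤ) + B.ncard - (A' * B).ncard ≤
          (A.ncard : ℤ) + B.ncard - (A * B).ncard) ∧
      ((∃ H : Subgroup G, A = (H : Set G)) ∨
       (∃ H : Subgroup G, (H : Set G).Finite ∧ (A * B)ᶜ = (H : Set G))) := by
  classical
  obtain ⟨d, hd1, hex, hmax⟩ := exists_max hB hBne hBproper
  have main : ∃ A, valid B A ∧ dlt B A = d ∧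
      ((∃ H : Subgroup G, A = (H : Set G)) ∨
       (∃ H : Subgroup G, (H : Set G).Finite ∧ (A * B)ᶜ = (H : Set G))) := by
    cases finite_or_infinite G with
    | inr hGinf =>
      have hc2 : ∀ A A', valid B A → dlt B A = d → valid B A' → dlt B A' = d →
         (∀ A'', valid B A'' → dlt B A'' = d → A'.ncard ≤ A''.ncard) →
         (A ∩ A').Nonempty → (A ∪ A') * B = Set.univ → A = A' := by
        intro A A' hA _ hA' _ _ _ hU
        exfalso
        have hf : ((A ∪ A') * B).Finite := (hA.1.union hA'.1).mul hB
        rw [hU] at hf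
        exact Set.infinite_univ hf
      obtain ⟨A, hAv, hAd, hH⟩ := exists_subgroup_frag hB hmax hex hc2
      exact ⟨A, hAv, hAd, Or.inl hH⟩
    | inl hGfin =>
      have hBif : (B⁻¹ : Set G).Finite := Set.toFinite _
      have hBine : (B⁻¹ : Set G).Nonempty := hBne.inv
      have hBiproper : (B⁻¹ : Set G) ≠ Set.univ := by
        intro h
        apply hBproper
        have h2 := congrArg (fun s : Set G => s⁻¹) h
        simpa using h2
      obtain ⟨d', hd'1, hex', hmax'⟩ := exists_max hBif hBine hBiproper
      have hdle : d ≤ d' := by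
        obtain ⟨A₀, hA₀v, hA₀d⟩ := hex
        obtain ⟨hYv, hYge⟩ := dual_ge (B := B) hA₀v.2.1 hA₀v.2.2
        calc d = dlt B A₀ := hA₀d.symm
          _ ≤ dlt B⁻¹ ((A₀ * B)ᶜ) := hYge
          _ ≤ d' := hmax' _ hYv
      have hdge : d' ≤ d := by
        obtain ⟨K₀, hK₀v, hK₀d⟩ := hex'
        obtain ⟨hYv, hYge⟩ := dual_ge (B := B⁻¹) hK₀v.2.1 hK₀v.2.2
        rw [inv_inv] at hYv hYge
        calc d' = dlt B⁻¹ K₀ := hK₀d.symm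
          _ ≤ dlt B ((K₀ * B⁻¹)ᶜ) := hYge
          _ ≤ d := hmax _ hYv
      have hdd : d' = d := le_antisymm hdge hdle
      subst hdd
      set S : Set ℕ := {n | ∃ A, valid B A ∧ dlt B A = d' ∧ A.ncard = n} with hS
      set S' : Set ℕ := {n | ∃ C, valid B⁻¹ C ∧ dlt B⁻¹ C = d' ∧ C.ncard = n} with hS'
      have hSne : S.Nonempty := ⟨_, hex.choose, hex.choose_spec.1, hex.choose_spec.2, rfl⟩
      have hS'ne : S'.Nonempty := ⟨_, hex'.choose, hex'.choose_spec.1, hex'.choose_spec.2, rfl⟩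
      by_cases hαle : sInf S ≤ sInf S'
      · have hc2 : ∀ A A', valid B A → dlt B A = d' → valid B A' → dlt B A' = d' →
           (∀ A'', valid B A'' → dlt B A'' = d' → A'.ncard ≤ A''.ncard) →
           (A ∩ A').Nonempty → (A ∪ A') * B = Set.univ → A = A' := by
          intro A A' hA hdA hA' hdA' hmin hne hU
          exfalso
          refine case2_absurd hd1 hmax' hA hdA hA' hdA' ?_ hne hU
          intro C hCv hCd
          obtain ⟨Am, hAmv, hAmd, hAmc⟩ := Nat.sInf_mem hSne
          calc A'.ncard ≤ Am.ncard := hmin _ hAmv hAmd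
            _ = sInf S := hAmc
            _ ≤ sInf S' := hαle
            _ ≤ C.ncard := Nat.sInf_le ⟨C, hCv, hCd, rfl⟩
        obtain ⟨A, hAv, hAd, hH⟩ := exists_subgroup_frag hB hmax hex hc2
        exact ⟨A, hAv, hAd, Or.inl hH⟩
      · push_neg at hαle
        have hc2' : ∀ K K', valid B⁻¹ K → dlt B⁻¹ K = d' → valid B⁻¹ K' → dlt B⁻¹ K' = d' →
           (∀ K'', valid B⁻¹ K'' → dlt B⁻¹ K'' = d' → K'.ncard ≤ K''.ncard) →
           (K ∩ K').Nonempty → (K ∪ K') * B⁻¹ = Set.univ → K = K' := by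
          intro K K' hK hdK hK' hdK' hmin hne hU
          exfalso
          have hmaxInv : ∀ C, valid (B⁻¹)⁻¹ C → dlt (B⁻¹)⁻¹ C ≤ d' := by
            simp only [inv_inv]
            exact hmax
          refine case2_absurd hd1 hmaxInv hK hdK hK' hdK' ?_ hne hU
          intro C hCv hCd
          rw [inv_inv] at hCv hCd
          obtain ⟨Km, hKmv, hKmd, hKmc⟩ := Nat.sInf_mem hS'ne
          calc K'.ncard ≤ Km.ncard := hmin _ hKmv hKmd
            _ = sInf S' := hKmc
            _ ≤ sInf S := le_of_lt hαle
            _ ≤ C.ncard := Nat.sInf_le ⟨C, hCv, hCd, rfl⟩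
        obtain ⟨K, hKv, hKd, H, hKH⟩ := exists_subgroup_frag hBif hmax' hex' hc2'
        obtain ⟨hAv, hAge⟩ := dual_ge (B := B⁻¹) hKv.2.1 hKv.2.2
        rw [inv_inv] at hAv hAge
        set A : Set G := (K * B⁻¹)ᶜ with hAdef
        have hAd : dlt B A = d' := le_antisymm (hmax _ hAv) (hKd ▸ hAge)
        have hABsub : A * B ⊆ Kᶜ := by
          have h3 := dual_subset (B := B⁻¹) (X := K)
          rwa [inv_inv] at h3
        have hABeq : A * B = Kᶜ := by
          refine Set.eq_of_subset_of_ncard_le hABsub ?_ (Set.toFinite _)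
          have c1 : K.ncard + Kᶜ.ncard = Nat.card G := ncard_add_ncard_compl K
          have c2 : (K * B⁻¹).ncard + A.ncard = Nat.card G := ncard_add_ncard_compl _
          have c4 : (B⁻¹ : Set G).ncard = B.ncard := ncard_inv B
          have h1 : dlt B⁻¹ K = d' := hKd
          simp only [dlt] at h1 hAd
          omega
        refine ⟨A, hAv, hAd, Or.inr ⟨H, ?_, ?_⟩⟩
        · exact Set.toFinite _
        · rw [hABeq, compl_compl, hKH]
  obtain ⟨A, hAv, hAd, hstruct⟩ := main
  refine ⟨A, hAv.1, hAv.2.1, hAv.2.2, ?_, hstruct⟩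
  intro A' h1 h2 h3
  have h := hmax A' ⟨h1, h2, h3⟩
  exact h.trans hAd.ge
end

section
/- Let G be a group, let K be a finite subgroup of G, and let B ⊆ G be a finite set with KBK = B, |B| = 2|K|, and |B²| < 2|B|. Then there exist subgroups L ≤ K ≤ H ≤ G and an element x ∈ G such that: (1) B ⊆ xH = Hx; (2) the index [K : L] is at most 2; and (3) L is normal in H and the quotient H/L is either cyclic or isomorphic to a dihedral group (possibly the infinite dihedral group). -/
open Pointwise
namespace Stmt10
variable {G : Type*} [Group G]

lemma KK_eq (K : Subgroup G) : (K : Set G) * (K : Set G) = (K : Set G) :=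
  K.toSubmonoid.coe_mul_self_eq

lemma mem_coset_iff (K : Subgroup G) {x z : G} :
    z ∈ (K : Set G) * {x} ↔ z * x⁻¹ ∈ K := by
  rw [Set.mul_singleton]
  constructor
  · rintro ⟨k, hk, rfl⟩
    simpa [mul_assoc] using hk
  · intro h
    exact ⟨z * x⁻¹, h, by group⟩

lemma coset_disjoint (K : Subgroup G) {x y : G} (h : x * y⁻¹ ∉ K) :
    Disjoint ((K : Set G) * {x}) ((K : Set G) * {y}) := by
  rw [Set.disjoint_left]
  intro z hz hz'
  rw [mem_coset_iff] at hz hz'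
  apply h
  have := mul_mem (inv_mem hz) hz'
  simpa [mul_assoc] using this

lemma coset_finite (K : Subgroup G) (hK : (K : Set G).Finite) (x : G) :
    ((K : Set G) * {x}).Finite := by
  rw [Set.mul_singleton]; exact hK.image _

lemma coset_ncard (K : Subgroup G) (x : G) :
    ((K : Set G) * {x}).ncard = (K : Set G).ncard := by
  rw [Set.mul_singleton]
  exact Set.ncard_image_of_injective _ (mul_left_injective x)

/-- six coset-coincidences lemma -/
lemma lemC (K : Subgroup G) (hK : (K : Set G).Finite) {B : Set G} (b c : G)
    (hBK : B * (K : Set G) = B)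
    (hBeq : B = (K : Set G) * {b} ∪ (K : Set G) * {c})
    (hlt : (B * B).ncard < 4 * (K : Set G).ncard) :
    b * b * (c * c)⁻¹ ∈ K ∨ b * c * (c * b)⁻¹ ∈ K ∨ b * b * (b * c)⁻¹ ∈ K ∨
      b * b * (c * b)⁻¹ ∈ K ∨ b * c * (c * c)⁻¹ ∈ K ∨ c * b * (c * c)⁻¹ ∈ K := by
  by_contra hcon
  push_neg at hcon
  obtain ⟨h1, h2, h3, h4, h5, h6⟩ := hcon
  have hBB : B * B = ((K : Set G) * {b * b} ∪ (K : Set G) * {c * b}) ∪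
      ((K : Set G) * {b * c} ∪ (K : Set G) * {c * c}) := by
    have h0 : ∀ x : G, B * ((K : Set G) * {x}) = (K : Set G) * {b * x} ∪ (K : Set G) * {c * x} := by
      intro x
      rw [← mul_assoc, hBK]
      conv_lhs => rw [hBeq]
      rw [Set.union_mul, mul_assoc, mul_assoc, Set.singleton_mul_singleton,
        Set.singleton_mul_singleton]
    conv_lhs => rw [show B * B = B * ((K : Set G) * {b} ∪ (K : Set G) * {c}) by rw [← hBeq]]
    rw [Set.mul_union, h0 b, h0 c]
  have hd1 : Disjoint ((K : Set G) * {b * b}) ((K : Set G) * {c * b}) := coset_disjoint K h4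
  have hd2 : Disjoint ((K : Set G) * {b * c}) ((K : Set G) * {c * c}) := coset_disjoint K h5
  have hd3 : Disjoint ((K : Set G) * {b * b} ∪ (K : Set G) * {c * b})
      ((K : Set G) * {b * c} ∪ (K : Set G) * {c * c}) := by
    apply Disjoint.union_left <;> apply Disjoint.union_right
    · exact coset_disjoint K h3
    · exact coset_disjoint K h1
    · refine coset_disjoint K (fun h => h2 ?_)
      have he : (c * b * (b * c)⁻¹)⁻¹ = b * c * (c * b)⁻¹ := by group
      exact he ▸ inv_mem h
    · exact coset_disjoint K h6
  have hfin : ∀ x : G, ((K : Set G) * {x}).Finite := coset_finite K hK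
  have hcard : (B * B).ncard = 4 * (K : Set G).ncard := by
    rw [hBB]
    rw [Set.ncard_union_eq hd3 ((hfin _).union (hfin _)) ((hfin _).union (hfin _)),
      Set.ncard_union_eq hd1 (hfin _) (hfin _), Set.ncard_union_eq hd2 (hfin _) (hfin _),
      coset_ncard, coset_ncard, coset_ncard, coset_ncard]
    ring
  omega

lemma lemD (K : Subgroup G) (hK : (K : Set G).Finite) (b : G)
    (hcard : ((K : Set G) * {b} * (K : Set G)).ncard = 2 * (K : Set G).ncard)
    (hdbl : (((K : Set G) * {b} * K) * ((K : Set G) * {b} * K)).ncard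
      < 2 * ((K : Set G) * {b} * (K : Set G)).ncard) :
    ∃ t, t ∈ K ∧ b * t * b⁻¹ ∉ K ∧
      (∀ k, k ∈ K → b * k * b⁻¹ ∈ K ∨ b * (k * t⁻¹) * b⁻¹ ∈ K) ∧
      (b * (b * t * b⁻¹) * b⁻¹ ∈ K ∨ b * ((b * t * b⁻¹) * t⁻¹) * b⁻¹ ∈ K ∨
        b * (t * (b * t * b⁻¹)) * b⁻¹ ∈ K ∨ b * (t * (b * t * b⁻¹) * t⁻¹) * b⁻¹ ∈ K) := by
  set B : Set G := (K : Set G) * {b} * (K : Set G) with hBdef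
  have hKfin : B.Finite := by
    have : ((K : Set G) * {b}).Finite := coset_finite K hK b
    exact (this.mul hK)
  have hKpos : 0 < (K : Set G).ncard := by
    rw [Set.ncard_pos hK]
    exact ⟨1, one_mem K⟩
  have hBK : B * (K : Set G) = B := by
    rw [hBdef, mul_assoc, KK_eq]
  have hmemB : ∀ k₁ k₂ : G, k₁ ∈ K → k₂ ∈ K → k₁ * b * k₂ ∈ B := by
    intro k₁ k₂ h1 h2
    exact Set.mul_mem_mul (Set.mul_mem_mul h1 rfl) h2
  have hcos_in : ∀ k, k ∈ K → (K : Set G) * {b * k} ⊆ B := by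
    intro k hk z hz
    rw [mem_coset_iff] at hz
    have : z = (z * (b * k)⁻¹) * b * k := by group
    rw [this]
    exact hmemB _ _ hz hk
  -- find t
  have hex : ∃ t, t ∈ K ∧ b * t * b⁻¹ ∉ K := by
    by_contra hno
    push_neg at hno
    have hsub : B ⊆ (K : Set G) * {b} := by
      rintro z ⟨y, hy, k2, hk2, rfl⟩
      rw [mem_coset_iff] at hy
      rw [mem_coset_iff]
      have he : y * k2 * b⁻¹ = (y * b⁻¹) * (b * k2 * b⁻¹) := by group
      rw [he]
      exact mul_mem hy (hno k2 hk2)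
    have hle := Set.ncard_le_ncard hsub (coset_finite K hK b)
    rw [hcard, coset_ncard] at hle
    omega
  obtain ⟨t, htK, htn⟩ := hex
  have hcov : ∀ k, k ∈ K → b * k * b⁻¹ ∈ K ∨ b * (k * t⁻¹) * b⁻¹ ∈ K := by
    intro k hk
    by_cases h1 : b * k * b⁻¹ ∈ K
    · exact Or.inl h1
    by_cases h2 : b * (k * t⁻¹) * b⁻¹ ∈ K
    · exact Or.inr h2
    exfalso
    -- three disjoint cosets inside B
    have hd1 : Disjoint ((K : Set G) * {b}) ((K : Set G) * {b * k}) := by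
      apply coset_disjoint
      intro h
      apply h1
      have he : (b * (b * k)⁻¹)⁻¹ = b * k * b⁻¹ := by group
      exact he ▸ inv_mem h
    have hd2 : Disjoint ((K : Set G) * {b}) ((K : Set G) * {b * t}) := by
      apply coset_disjoint
      intro h
      apply htn
      have he : (b * (b * t)⁻¹)⁻¹ = b * t * b⁻¹ := by group
      exact he ▸ inv_mem h
    have hd3 : Disjoint ((K : Set G) * {b * k}) ((K : Set G) * {b * t}) := by
      apply coset_disjoint
      intro h
      apply h2
      have he : b * k * (b * t)⁻¹ = b * (k * t⁻¹) * b⁻¹ := by group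
      exact he ▸ h
    have hb_in : (K : Set G) * {b} ⊆ B := by
      have := hcos_in 1 (one_mem K)
      rwa [mul_one] at this
    have hsub : ((K : Set G) * {b} ∪ (K : Set G) * {b * k}) ∪ (K : Set G) * {b * t} ⊆ B :=
      Set.union_subset (Set.union_subset hb_in (hcos_in k hk)) (hcos_in t htK)
    have hfin : ∀ x : G, ((K : Set G) * {x}).Finite := coset_finite K hK
    have hcard3 : (((K : Set G) * {b} ∪ (K : Set G) * {b * k}) ∪ (K : Set G) * {b * t}).ncard
        = 3 * (K : Set G).ncard := by
      rw [Set.ncard_union_eq (Disjoint.union_left hd2 hd3) ((hfin _).union (hfin _)) (hfin _),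
        Set.ncard_union_eq hd1 (hfin _) (hfin _), coset_ncard, coset_ncard, coset_ncard]
      ring
    have hle := Set.ncard_le_ncard hsub hKfin
    rw [hcard3, hcard] at hle
    omega
  refine ⟨t, htK, htn, hcov, ?_⟩
  -- establish B = Kb ∪ Kbt
  have hb_in : (K : Set G) * {b} ⊆ B := by
    have := hcos_in 1 (one_mem K)
    rwa [mul_one] at this
  have hBeq : B = (K : Set G) * {b} ∪ (K : Set G) * {b * t} := by
    apply Set.Subset.antisymm
    · rintro z ⟨y, hy, k2, hk2, rfl⟩
      rw [mem_coset_iff] at hy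
      rcases hcov k2 hk2 with h | h
      · left
        rw [mem_coset_iff]
        have he : y * k2 * b⁻¹ = (y * b⁻¹) * (b * k2 * b⁻¹) := by group
        rw [he]
        exact mul_mem hy h
      · right
        rw [mem_coset_iff]
        have he : y * k2 * (b * t)⁻¹ = (y * b⁻¹) * (b * (k2 * t⁻¹) * b⁻¹) := by group
        rw [he]
        exact mul_mem hy h
    · exact Set.union_subset hb_in (hcos_in t htK)
  have hsix := lemC K hK b (b * t) hBK hBeq (by rw [hcard] at hdbl; omega)
  rcases hsix with h | h | h | h | h | h
  · -- b*b*((bt)*(bt))⁻¹ ∈ K  ⇒  b*(t*u)*b⁻¹ ∈ K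
    right; right; left
    have he : (b * b * (b * t * (b * t))⁻¹)⁻¹ = b * (t * (b * t * b⁻¹)) * b⁻¹ := by simp [mul_inv_rev, mul_assoc]
    exact he ▸ inv_mem h
  · right; left
    have he : b * (b * t) * (b * t * b)⁻¹ = b * ((b * t * b⁻¹) * t⁻¹) * b⁻¹ := by group
    exact he ▸ h
  · left
    have he : (b * b * (b * (b * t))⁻¹)⁻¹ = b * (b * t * b⁻¹) * b⁻¹ := by simp [mul_inv_rev, mul_assoc]
    exact he ▸ inv_mem h
  · exfalso
    apply htn
    have he : (b * b * (b * t * b)⁻¹)⁻¹ = b * t * b⁻¹ := by simp [mul_inv_rev, mul_assoc]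
    exact he ▸ inv_mem h
  · exfalso
    apply htn
    have he : (b * (b * t) * (b * t * (b * t))⁻¹)⁻¹ = b * t * b⁻¹ := by simp [mul_inv_rev, mul_assoc]
    exact he ▸ inv_mem h
  · right; right; right
    have he : (b * t * b * (b * t * (b * t))⁻¹)⁻¹ = b * (t * (b * t * b⁻¹) * t⁻¹) * b⁻¹ := by simp [mul_inv_rev, mul_assoc]
    exact he ▸ inv_mem h

lemma lemB (K : Subgroup G) (b t : G) (htK : t ∈ K)
    (hcov : ∀ k, k ∈ K → b * k * b⁻¹ ∈ K ∨ b * (k * t⁻¹) * b⁻¹ ∈ K)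
    (hu4 : b * (b * t * b⁻¹) * b⁻¹ ∈ K ∨ b * ((b * t * b⁻¹) * t⁻¹) * b⁻¹ ∈ K ∨
        b * (t * (b * t * b⁻¹)) * b⁻¹ ∈ K ∨ b * (t * (b * t * b⁻¹) * t⁻¹) * b⁻¹ ∈ K) :
    ∀ k, k ∈ K → b * k * b⁻¹ ∈
      Subgroup.closure ((K : Set G) ∪ {x : G | b * x * b⁻¹ ∈ K}) := by
  set H := Subgroup.closure ((K : Set G) ∪ {x : G | b * x * b⁻¹ ∈ K}) with hH
  have hKH : ∀ k, k ∈ K → k ∈ H := fun k hk => Subgroup.subset_closure (Or.inl hk)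
  have hJH : ∀ x, b * x * b⁻¹ ∈ K → x ∈ H := fun x hx => Subgroup.subset_closure (Or.inr hx)
  have hu : b * t * b⁻¹ ∈ H := by
    rcases hu4 with h | h | h | h
    · exact hJH _ h
    · have he : b * t * b⁻¹ = ((b * t * b⁻¹) * t⁻¹) * t := by group
      rw [he]
      exact mul_mem (hJH _ h) (hKH t htK)
    · have he : b * t * b⁻¹ = t⁻¹ * (t * (b * t * b⁻¹)) := by group
      rw [he]
      exact mul_mem (inv_mem (hKH t htK)) (hJH _ h)
    · have he : b * t * b⁻¹ = t⁻¹ * (t * (b * t * b⁻¹) * t⁻¹) * t := by group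
      rw [he]
      exact mul_mem (mul_mem (inv_mem (hKH t htK)) (hJH _ h)) (hKH t htK)
  intro k hk
  rcases hcov k hk with h | h
  · exact hKH _ h
  · have he : b * k * b⁻¹ = (b * (k * t⁻¹) * b⁻¹) * (b * t * b⁻¹) := by group
    rw [he]
    exact mul_mem (hKH _ h) hu

lemma coset_eq_iff (K : Subgroup G) {x y : G} (h : x * y⁻¹ ∈ K) :
    (K : Set G) * {x} = (K : Set G) * {y} := by
  ext z
  rw [mem_coset_iff, mem_coset_iff]
  constructor
  · intro hz
    have := mul_mem hz h
    simpa [mul_assoc] using this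
  · intro hz
    have := mul_mem hz (inv_mem h)
    simpa [mul_assoc] using this

lemma singleton_mul_mem_iff {S : Set G} {x z : G} :
    z ∈ ({x} : Set G) * S ↔ x⁻¹ * z ∈ S := by
  rw [Set.singleton_mul]
  constructor
  · rintro ⟨s, hs, rfl⟩; simpa [← mul_assoc] using hs
  · intro h; exact ⟨x⁻¹ * z, h, by group⟩

lemma mul_singleton_mem_iff {S : Set G} {x z : G} :
    z ∈ S * ({x} : Set G) ↔ z * x⁻¹ ∈ S := by
  rw [Set.mul_singleton]
  constructor
  · rintro ⟨s, hs, rfl⟩; simpa [mul_assoc] using hs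
  · intro h; exact ⟨z * x⁻¹, h, by group⟩

lemma conj_closure_comm (H : Subgroup G) (b : G)
    (h : H.map (MulAut.conj b).toMonoidHom = H) :
    ({b} : Set G) * (H : Set G) = (H : Set G) * {b} := by
  have key : ∀ g : G, g ∈ H ↔ b * g * b⁻¹ ∈ H := by
    intro g
    constructor
    · intro hg
      rw [← h]
      exact ⟨g, hg, rfl⟩
    · intro hg
      rw [← h] at hg
      obtain ⟨y, hy, hy2⟩ := hg
      have : y = g := by
        have : b * y * b⁻¹ = b * g * b⁻¹ := hy2
        group at this
        simpa using mul_left_cancel (mul_right_cancel this)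
      rwa [← this]
  ext z
  rw [singleton_mul_mem_iff, mul_singleton_mem_iff]
  have := key (b⁻¹ * z)
  constructor
  · intro hz
    have h2 := this.mp hz
    have e : b * (b⁻¹ * z) * b⁻¹ = z * b⁻¹ := by group
    rwa [e] at h2
  · intro hz
    apply this.mpr
    have e : b * (b⁻¹ * z) * b⁻¹ = z * b⁻¹ := by group
    rwa [e]

lemma cyclic_or_dihedral {Γ : Type*} [Group Γ] (σ τ : Γ)
    (hσ : σ * σ = 1) (hτ : τ * τ = 1)
    (hgen : ∀ g : Γ, g ∈ Subgroup.closure {σ, τ}) :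
    IsCyclic Γ ∨ ∃ n : ℕ, Nonempty (Γ ≃* DihedralGroup n) := by
  have hσi : σ⁻¹ = σ := inv_eq_of_mul_eq_one_right hσ
  have hτi : τ⁻¹ = τ := inv_eq_of_mul_eq_one_right hτ
  set ρ := σ * τ with hρ
  by_cases hmem : σ ∈ Subgroup.zpowers ρ
  · left
    have hτm : τ ∈ Subgroup.zpowers ρ := by
      have : τ = σ⁻¹ * ρ := by rw [hρ]; group
      rw [this]
      exact mul_mem (inv_mem hmem) (Subgroup.mem_zpowers ρ)
    refine ⟨⟨ρ, fun g => ?_⟩⟩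
    have := hgen g
    have hle : Subgroup.closure {σ, τ} ≤ Subgroup.zpowers ρ := by
      rw [Subgroup.closure_le]
      intro x hx
      rcases hx with h | h
      · subst h; exact hmem
      · simp only [Set.mem_singleton_iff] at h; subst h; exact hτm
    exact hle this
  · right
    have hconj : ∀ m : ℤ, σ * ρ ^ m * σ⁻¹ = ρ ^ (-m) := by
      intro m
      have h1 : σ * ρ * σ⁻¹ = ρ⁻¹ := by
        rw [hρ, mul_inv_rev, hσi, hτi]
        calc σ * (σ * τ) * σ = (σ * σ) * (τ * σ) := by group
        _ = τ * σ := by rw [hσ, one_mul]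
      calc σ * ρ ^ m * σ⁻¹ = (σ * ρ * σ⁻¹) ^ m := by rw [conj_zpow]
      _ = (ρ⁻¹) ^ m := by rw [h1]
      _ = ρ ^ (-m) := by rw [inv_zpow, zpow_neg]
    set n := orderOf ρ with hn
    refine ⟨n, ⟨?_⟩⟩
    have hf : (AddMonoidHom.mk' (fun m : ℤ => Additive.ofMul (ρ ^ m))
        (fun a b => by simp [zpow_add])) (n : ℤ) = 0 := by
      show Additive.ofMul (ρ ^ ((n : ℕ) : ℤ)) = 0
      rw [zpow_natCast, pow_orderOf_eq_one]
      rfl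
    set χ : ZMod n →+ Additive Γ := ZMod.lift n ⟨_, hf⟩ with hχ
    set e : ZMod n → Γ := fun i => Additive.toMul (χ i) with he
    have he_int : ∀ m : ℤ, e ((m : ℤ) : ZMod n) = ρ ^ m := by
      intro m
      simp only [he, hχ, ZMod.lift_coe]
      rfl
    have he_add : ∀ i j, e (i + j) = e i * e j := by
      intro i j
      simp only [he, map_add]
      rfl
    have he_zero : e 0 = 1 := by
      simp only [he, map_zero]; rfl
    have he_inv : ∀ i, e (-i) = (e i)⁻¹ := by
      intro i
      have : e (-i) * e i = 1 := by rw [← he_add, neg_add_cancel, he_zero]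
      exact eq_inv_of_mul_eq_one_left this
    have hker : ∀ a : ZMod n, e a = 1 → a = 0 := by
      intro a ha
      obtain ⟨m, rfl⟩ := ZMod.intCast_surjective a
      rw [he_int] at ha
      have hdvd : ((n : ℕ) : ℤ) ∣ m := orderOf_dvd_iff_zpow_eq_one.mpr ha
      exact (ZMod.intCast_zmod_eq_zero_iff_dvd m n).mpr hdvd
    have he_mem : ∀ a : ZMod n, e a ∈ Subgroup.zpowers ρ := by
      intro a
      obtain ⟨m, rfl⟩ := ZMod.intCast_surjective a
      rw [he_int]
      exact zpow_mem (Subgroup.mem_zpowers ρ) m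
    have hswap : ∀ i, e i * σ = σ * e (-i) := by
      intro i
      obtain ⟨m, rfl⟩ := ZMod.intCast_surjective i
      rw [he_int]
      have : e ((-m : ℤ) : ZMod n) = ρ ^ (-m) := he_int (-m)
      rw [show ((-(m:ℤ) : ℤ) : ZMod n) = -((m : ℤ) : ZMod n) by push_cast; ring] at this
      rw [this]
      have := hconj m
      calc ρ ^ m * σ = σ * (σ⁻¹ * ρ ^ m * σ) := by group
      _ = σ * ρ ^ (-m) := by
          congr 1
          have h2 : σ⁻¹ * ρ ^ m * σ = σ * ρ ^ m * σ⁻¹ := by rw [hσi]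
          rw [h2, hconj m]
    -- the homomorphism
    let φf : DihedralGroup n → Γ := fun x =>
      match x with
      | DihedralGroup.r i => e i
      | DihedralGroup.sr i => σ * e i
    have hmul : ∀ x y : DihedralGroup n, φf (x * y) = φf x * φf y := by
      rintro (i | i) (j | j)
      · show e (i + j) = e i * e j
        exact he_add i j
      · show σ * e (j - i) = e i * (σ * e j)
        rw [← mul_assoc, hswap i, sub_eq_neg_add ]
        rw [he_add, mul_assoc]
      · show σ * e (i + j) = (σ * e i) * e j
        rw [he_add, mul_assoc]
      · show e (j - i) = (σ * e i) * (σ * e j)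
        rw [sub_eq_neg_add, he_add]
        rw [show (σ * e i) * (σ * e j) = σ * (e i * σ) * e j by group, hswap i]
        rw [show σ * (σ * e (-i)) * e j = (σ * σ) * (e (-i) * e j) by group, hσ, one_mul]
    let φ : DihedralGroup n →* Γ := MonoidHom.mk' φf hmul
    have hinj : Function.Injective φ := by
      rintro (i | i) (j | j) h
      · have : e i = e j := h
        have h2 : e (i - j) = 1 := by
          rw [sub_eq_add_neg, he_add, he_inv, this, mul_inv_cancel]
        have := hker _ h2
        rw [sub_eq_zero] at this
        rw [this]
      · exfalso
        have : e i = σ * e j := h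
        have h2 : σ = e i * (e j)⁻¹ := by rw [this]; group
        rw [← he_inv, ← he_add] at h2
        exact hmem (h2 ▸ he_mem _)
      · exfalso
        have : σ * e i = e j := h
        have h2 : σ = e j * (e i)⁻¹ := by rw [← this]; group
        rw [← he_inv, ← he_add] at h2
        exact hmem (h2 ▸ he_mem _)
      · have : σ * e i = σ * e j := h
        have h2 : e i = e j := mul_left_cancel this
        have h3 : e (i - j) = 1 := by
          rw [sub_eq_add_neg, he_add, he_inv, h2, mul_inv_cancel]
        have := hker _ h3
        rw [sub_eq_zero] at this
        rw [this]
    have hsurj : Function.Surjective φ := by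
      have hσr : σ ∈ φ.range := by
        refine ⟨DihedralGroup.sr 0, ?_⟩
        show σ * e 0 = σ
        rw [he_zero, mul_one]
      have hτr : τ ∈ φ.range := by
        refine ⟨DihedralGroup.sr 1, ?_⟩
        show σ * e 1 = τ
        have : ((1 : ℤ) : ZMod n) = (1 : ZMod n) := by push_cast; ring
        rw [show (1 : ZMod n) = ((1 : ℤ) : ZMod n) from this.symm, he_int]
        rw [zpow_one, hρ, ← mul_assoc, hσ, one_mul]
      intro g
      have hle : Subgroup.closure {σ, τ} ≤ φ.range := by
        rw [Subgroup.closure_le]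
        intro x hx
        rcases hx with h | h
        · subst h; exact hσr
        · simp only [Set.mem_singleton_iff] at h; subst h; exact hτr
      exact hle (hgen g)
    exact (MulEquiv.ofBijective φ ⟨hinj, hsurj⟩).symm



end Stmt10

open Stmt10 in
theorem statement10 {G : Type*} [Group G] (K : Subgroup G) (B : Set G)
    (hK : (K : Set G).Finite) (hB : B.Finite)
    (hKBK : (K : Set G) * B * (K : Set G) = B)
    (hBcard : B.ncard = 2 * (K : Set G).ncard)
    (hB2 : (B * B).ncard < 2 * B.ncard) :
    ∃ (L H : Subgroup G) (x : G), L ≤ K ∧ K ≤ H ∧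
      B ⊆ ({x} : Set G) * (H : Set G) ∧
      ({x} : Set G) * (H : Set G) = (H : Set G) * {x} ∧
      L.relIndex K ≤ 2 ∧
      ∃ hN : (L.subgroupOf H).Normal,
        letI : (L.subgroupOf H).Normal := hN
        (IsCyclic (H ⧸ L.subgroupOf H) ∨
          ∃ n : ℕ, Nonempty ((H ⧸ L.subgroupOf H) ≃* DihedralGroup n)) := by
  classical
  have hKpos : 0 < (K : Set G).ncard := by
    rw [Set.ncard_pos hK]
    exact ⟨1, one_mem K⟩
  have hKB : (K : Set G) * B = B := by
    conv_lhs => rw [← hKBK]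
    rw [← mul_assoc, ← mul_assoc, KK_eq]
    exact hKBK
  have hBK : B * (K : Set G) = B := by
    conv_lhs => rw [← hKBK]
    rw [mul_assoc, KK_eq]
    exact hKBK
  have hBne : B.Nonempty := by
    rw [← Set.ncard_pos hB, hBcard]
    omega
  obtain ⟨b, hbB⟩ := hBne
  have hcos_subB : ∀ z, z ∈ B → (K : Set G) * {z} ⊆ B := by
    intro z hz
    have h1 : (K : Set G) * {z} ⊆ (K : Set G) * B :=
      Set.mul_subset_mul_left (Set.singleton_subset_iff.mpr hz)
    rwa [hKB] at h1
  have hex_c : ∃ c, c ∈ B ∧ c * b⁻¹ ∉ K := by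
    by_contra hno
    push_neg at hno
    have hsub : B ⊆ (K : Set G) * {b} := by
      intro z hz
      rw [mem_coset_iff]
      exact hno z hz
    have hle := Set.ncard_le_ncard hsub (coset_finite K hK b)
    rw [hBcard, coset_ncard] at hle
    omega
  obtain ⟨c, hcB, hcb⟩ := hex_c
  have hbc : b * c⁻¹ ∉ K := by
    intro h
    apply hcb
    have he : (b * c⁻¹)⁻¹ = c * b⁻¹ := by group
    exact he ▸ inv_mem h
  have hBeq : B = (K : Set G) * {b} ∪ (K : Set G) * {c} := by
    refine (Set.eq_of_subset_of_ncard_le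
      (Set.union_subset (hcos_subB b hbB) (hcos_subB c hcB)) ?_ hB).symm
    rw [Set.ncard_union_eq (coset_disjoint K hbc) (coset_finite K hK b) (coset_finite K hK c),
      coset_ncard, coset_ncard, hBcard]
    omega
  by_cases hsplit : ∃ t, t ∈ K ∧ b * t * c⁻¹ ∈ K
  · -- macro case β : B is a single double coset K b K
    obtain ⟨t₀, ht₀K, ht₀c⟩ := hsplit
    have hKc_eq : (K : Set G) * {c} = (K : Set G) * {b * t₀} := by
      apply coset_eq_iff
      have he : (b * t₀ * c⁻¹)⁻¹ = c * (b * t₀)⁻¹ := by group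
      exact he ▸ inv_mem ht₀c
    have hBKbK : B = (K : Set G) * {b} * (K : Set G) := by
      apply Set.Subset.antisymm
      · rw [hBeq, hKc_eq]
        apply Set.union_subset
        · intro z hz
          rw [mem_coset_iff] at hz
          have he : z = (z * b⁻¹) * b * 1 := by group
          rw [he]
          exact Set.mul_mem_mul (Set.mul_mem_mul hz rfl) (one_mem K)
        · intro z hz
          rw [mem_coset_iff] at hz
          have he : z = (z * (b * t₀)⁻¹) * b * t₀ := by group
          rw [he]
          exact Set.mul_mem_mul (Set.mul_mem_mul hz rfl) ht₀K
      · have h1 : (K : Set G) * {b} * (K : Set G) ⊆ (K : Set G) * B * (K : Set G) :=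
          Set.mul_subset_mul_right
            (Set.mul_subset_mul_left (Set.singleton_subset_iff.mpr hbB))
        rwa [hKBK] at h1
    have hcard' : ((K : Set G) * {b} * (K : Set G)).ncard = 2 * (K : Set G).ncard := by
      rw [← hBKbK]; exact hBcard
    have hdbl' : (((K : Set G) * {b} * K) * ((K : Set G) * {b} * K)).ncard
        < 2 * ((K : Set G) * {b} * (K : Set G)).ncard := by
      rw [← hBKbK]; exact hB2
    obtain ⟨t, htK, htn, hcov, hu4⟩ := lemD K hK b hcard' hdbl'
    -- mirrored data for b⁻¹
    have hKinv : ((K : Set G))⁻¹ = (K : Set G) := inv_coe_set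
    have hBinv : (K : Set G) * {b⁻¹} * (K : Set G) = B⁻¹ := by
      rw [hBKbK, mul_inv_rev, mul_inv_rev, hKinv, Set.inv_singleton, ← mul_assoc]
    have hcardinv : ((K : Set G) * {b⁻¹} * (K : Set G)).ncard = 2 * (K : Set G).ncard := by
      rw [hBinv, Set.ncard_inv]; exact hBcard
    have hdblinv : (((K : Set G) * {b⁻¹} * K) * ((K : Set G) * {b⁻¹} * K)).ncard
        < 2 * ((K : Set G) * {b⁻¹} * (K : Set G)).ncard := by
      rw [hBinv, ← mul_inv_rev, Set.ncard_inv, Set.ncard_inv]; exact hB2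
    obtain ⟨s, hsK, hsn, hcov', hu4'⟩ := lemD K hK b⁻¹ hcardinv hdblinv
    have hBb := lemB K b t htK hcov hu4
    have hBb' := lemB K b⁻¹ s hsK hcov' hu4'
    simp only [inv_inv] at hBb'
    set H : Subgroup G := Subgroup.closure ((K : Set G) ∪ {x : G | b * x * b⁻¹ ∈ K})
      with hHdef
    set Jsub : Subgroup G := K.comap (MulAut.conj b).toMonoidHom with hJsubdef
    have hJmem : ∀ g : G, g ∈ Jsub ↔ b * g * b⁻¹ ∈ K := by
      intro g
      rw [hJsubdef, Subgroup.mem_comap]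
      simp [MulAut.conj_apply]
    set P : Subgroup G := K ⊓ Jsub with hPdef
    have hPmem : ∀ g : G, g ∈ P ↔ g ∈ K ∧ b * g * b⁻¹ ∈ K := by
      intro g
      rw [hPdef, Subgroup.mem_inf, hJmem]
    have hPK : ∀ p, p ∈ P → p ∈ K := fun p hp => ((hPmem p).mp hp).1
    have hPJ : ∀ p, p ∈ P → b * p * b⁻¹ ∈ K := fun p hp => ((hPmem p).mp hp).2
    have htP : t ∉ P := fun h => htn ((hPmem t).mp h).2
    have covK : ∀ k, k ∈ K → k ∈ P ∨ k * t⁻¹ ∈ P := by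
      intro k hk
      rcases hcov k hk with h | h
      · exact Or.inl ((hPmem k).mpr ⟨hk, h⟩)
      · exact Or.inr ((hPmem _).mpr ⟨mul_mem hk (inv_mem htK), h⟩)
    -- generic normalization lemma
    have hnormal : ∀ (W : Subgroup G) (w₀ : G), P ≤ W → w₀ ∈ W → w₀ ∉ P →
        (∀ w, w ∈ W → w ∈ P ∨ w * w₀⁻¹ ∈ P) →
        ∀ w, w ∈ W → ∀ p, p ∈ P → w * p * w⁻¹ ∈ P := by
      intro W w₀ hPW hw₀ hw₀P cov
      have hstep : ∀ p, p ∈ P → w₀ * p * w₀⁻¹ ∈ P := by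
        intro p hp
        rcases cov (w₀ * p) (mul_mem hw₀ (hPW hp)) with h | h
        · exfalso
          apply hw₀P
          have he : w₀ = (w₀ * p) * p⁻¹ := by group
          rw [he]
          exact mul_mem h (inv_mem hp)
        · have he : w₀ * p * w₀⁻¹ = (w₀ * p) * w₀⁻¹ := by group
          rw [he]
          exact h
      intro w hw p hp
      rcases cov w hw with h | h
      · exact mul_mem (mul_mem h hp) (inv_mem h)
      · have he : w * p * w⁻¹ = (w * w₀⁻¹) * (w₀ * p * w₀⁻¹) * (w * w₀⁻¹)⁻¹ := by group
        rw [he]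
        exact mul_mem (mul_mem h (hstep p hp)) (inv_mem h)
    have hKnorm := hnormal K t inf_le_left htK htP covK
    -- find j₀ ∈ Jsub \ K
    have hinjconj : ∀ d : G, Function.Injective (fun g : G => d * g * d⁻¹) := by
      intro d x y h
      dsimp at h
      exact mul_left_cancel (mul_right_cancel h)
    have hJcoe : (Jsub : Set G) = (fun g : G => b⁻¹ * g * b) '' (K : Set G) := by
      ext x
      constructor
      · intro hx
        refine ⟨b * x * b⁻¹, (hJmem x).mp hx, ?_⟩
        show b⁻¹ * (b * x * b⁻¹) * b = x
        group
      · rintro ⟨k, hk, rfl⟩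
        show b⁻¹ * k * b ∈ Jsub
        rw [hJmem]
        have he : b * (b⁻¹ * k * b) * b⁻¹ = k := by group
        rw [he]
        exact hk
    have hJinj : Function.Injective (fun g : G => b⁻¹ * g * b) := by
      intro x y h
      dsimp at h
      exact mul_left_cancel (mul_right_cancel h)
    have hJfin : (Jsub : Set G).Finite := by
      rw [hJcoe]; exact hK.image _
    have hJcard : (Jsub : Set G).ncard = (K : Set G).ncard := by
      rw [hJcoe]; exact Set.ncard_image_of_injective _ hJinj
    have hex_j : ∃ j, j ∈ Jsub ∧ j ∉ K := by
      by_contra hno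
      push_neg at hno
      have hsub : (Jsub : Set G) ⊆ (K : Set G) := fun x hx => hno x hx
      have heq := Set.eq_of_subset_of_ncard_le hsub (le_of_eq hJcard.symm) hK
      apply htn
      rw [← hJmem]
      show t ∈ (Jsub : Set G)
      rw [heq]
      exact htK
    obtain ⟨j₀, hj₀J, hj₀K⟩ := hex_j
    have hj₀P : j₀ ∉ P := fun h => hj₀K ((hPmem j₀).mp h).1
    have hPfin : (P : Set G).Finite := hK.subset (fun x hx => ((hPmem x).mp hx).1)
    have hPt_disj : Disjoint ((P : Set G)) ((P : Set G) * {t}) := by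
      rw [Set.disjoint_left]
      intro z hz hz'
      rw [mem_coset_iff] at hz'
      apply htP
      have he : t = (z * t⁻¹)⁻¹ * z := by group
      rw [he]
      exact mul_mem (inv_mem hz') hz
    have hKeq2 : (K : Set G) = (P : Set G) ∪ (P : Set G) * {t} := by
      apply Set.Subset.antisymm
      · intro k hk
        rcases covK k hk with h | h
        · exact Or.inl h
        · right
          rw [mem_coset_iff]
          exact h
      · apply Set.union_subset
        · exact fun x hx => hPK x hx
        · intro z hz
          rw [mem_coset_iff] at hz
          have he : z = (z * t⁻¹) * t := by group
          rw [he]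
          exact mul_mem (hPK _ hz) htK
    have hcardK2 : (K : Set G).ncard = 2 * (P : Set G).ncard := by
      rw [hKeq2, Set.ncard_union_eq hPt_disj hPfin (coset_finite P hPfin t), coset_ncard]
      ring
    have hPj_disj : Disjoint ((P : Set G)) ((P : Set G) * {j₀}) := by
      rw [Set.disjoint_left]
      intro z hz hz'
      rw [mem_coset_iff] at hz'
      apply hj₀P
      have he : j₀ = (z * j₀⁻¹)⁻¹ * z := by group
      rw [he]
      exact mul_mem (inv_mem hz') hz
    have hJsup : (P : Set G) ∪ (P : Set G) * {j₀} ⊆ (Jsub : Set G) := by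
      apply Set.union_subset
      · exact fun x hx => SetLike.mem_coe.mpr ((hJmem x).mpr ((hPmem x).mp hx).2)
      · intro z hz
        rw [mem_coset_iff] at hz
        have he : z = (z * j₀⁻¹) * j₀ := by group
        rw [he]
        exact mul_mem ((hJmem _).mpr ((hPmem _).mp hz).2) hj₀J
    have hJeq2 : (Jsub : Set G) = (P : Set G) ∪ (P : Set G) * {j₀} := by
      refine (Set.eq_of_subset_of_ncard_le hJsup ?_ hJfin).symm
      rw [Set.ncard_union_eq hPj_disj hPfin (coset_finite P hPfin j₀), coset_ncard, hJcard]
      omega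
    have covJ : ∀ j, j ∈ Jsub → j ∈ P ∨ j * j₀⁻¹ ∈ P := by
      intro j hj
      have : j ∈ (P : Set G) ∪ (P : Set G) * {j₀} := by
        rw [← hJeq2]; exact hj
      rcases this with h | h
      · exact Or.inl h
      · right
        rw [mem_coset_iff] at h
        exact h
    have hJnorm := hnormal Jsub j₀ inf_le_right hj₀J hj₀P covJ
    -- H basics
    have hKH : ∀ k, k ∈ K → k ∈ H := fun k hk => Subgroup.subset_closure (Or.inl hk)
    have hJH : ∀ j, j ∈ Jsub → j ∈ H :=
      fun j hj => Subgroup.subset_closure (Or.inr ((hJmem j).mp hj))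
    have htH : t ∈ H := hKH t htK
    have hj₀H : j₀ ∈ H := hJH j₀ hj₀J
    -- P is normal in H
    have hHnorm : ∀ h, h ∈ H → ∀ p, p ∈ P → h * p * h⁻¹ ∈ P := by
      intro h hh
      rw [hHdef] at hh
      refine Subgroup.closure_induction ?_ ?_ ?_ ?_ hh
      · rintro x (hx | hx)
        · exact hKnorm x hx
        · exact hJnorm x ((hJmem x).mpr hx)
      · intro p hp
        simpa using hp
      · intro x y _ _ ihx ihy p hp
        have he : (x * y) * p * (x * y)⁻¹ = x * (y * p * y⁻¹) * x⁻¹ := by group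
        rw [he]
        exact ihx _ (ihy _ hp)
      · intro x _ ih p hp
        have hsub2 : (fun q : G => x * q * x⁻¹) '' (P : Set G) ⊆ (P : Set G) := by
          rintro z ⟨q, hq, rfl⟩
          exact ih q hq
        have heq2 := Set.eq_of_subset_of_ncard_le hsub2
          (le_of_eq (Set.ncard_image_of_injective _ (hinjconj x)).symm) hPfin
        have : p ∈ (fun q : G => x * q * x⁻¹) '' (P : Set G) := by
          rw [heq2]; exact hp
        obtain ⟨q, hq, hqe⟩ := this
        have he : x⁻¹ * p * x⁻¹⁻¹ = q := by
          rw [← hqe]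
          show x⁻¹ * (x * q * x⁻¹) * x⁻¹⁻¹ = q
          group
        rw [he]
        exact hq
    have hN : (P.subgroupOf H).Normal := by
      constructor
      rintro ⟨n, hnH⟩ hn ⟨g, hgH⟩
      rw [Subgroup.mem_subgroupOf] at hn ⊢
      exact hHnorm g hgH n hn
    haveI := hN
    -- quotient generated by two involutions
    have ht2 : t * t ∈ P := by
      rcases covK (t * t) (mul_mem htK htK) with h | h
      · exact h
      · exfalso
        apply htP
        have he : t = (t * t) * t⁻¹ := by group
        rw [he]
        exact h
    have hj2 : j₀ * j₀ ∈ P := by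
      rcases covJ (j₀ * j₀) (mul_mem hj₀J hj₀J) with h | h
      · exact h
      · exfalso
        apply hj₀P
        have he : j₀ = (j₀ * j₀) * j₀⁻¹ := by group
        rw [he]
        exact h
    set π := QuotientGroup.mk' (P.subgroupOf H) with hπdef
    set τ : H ⧸ P.subgroupOf H := π ⟨t, htH⟩ with hτdef
    set σ : H ⧸ P.subgroupOf H := π ⟨j₀, hj₀H⟩ with hσdef
    have hτ2 : τ * τ = 1 := by
      rw [hτdef, ← map_mul]
      exact (QuotientGroup.eq_one_iff _).mpr (Subgroup.mem_subgroupOf.mpr ht2)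
    have hσ2 : σ * σ = 1 := by
      rw [hσdef, ← map_mul]
      exact (QuotientGroup.eq_one_iff _).mpr (Subgroup.mem_subgroupOf.mpr hj2)
    have hgen : ∀ q : H ⧸ P.subgroupOf H, q ∈ Subgroup.closure {σ, τ} := by
      intro q
      obtain ⟨⟨g, hgH⟩, rfl⟩ := QuotientGroup.mk'_surjective _ q
      have hgH' : g ∈ Subgroup.closure ((K : Set G) ∪ {x : G | b * x * b⁻¹ ∈ K}) := by
        rw [← hHdef]; exact hgH
      revert hgH
      refine Subgroup.closure_induction
        (p := fun g hg => ∀ hgH : g ∈ H, π ⟨g, hgH⟩ ∈ Subgroup.closure {σ, τ}) ?_ ?_ ?_ ?_ hgH'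
      · rintro x (hx | hx) hxH
        · rcases covK x hx with h | h
          · have : π ⟨x, hxH⟩ = 1 :=
              (QuotientGroup.eq_one_iff _).mpr (Subgroup.mem_subgroupOf.mpr h)
            rw [this]
            exact one_mem _
          · have hxt : x * t⁻¹ ∈ H := mul_mem hxH (inv_mem htH)
            have he : (⟨x, hxH⟩ : H) = ⟨x * t⁻¹, hxt⟩ * ⟨t, htH⟩ := by
              apply Subtype.ext
              show x = (x * t⁻¹) * t
              group
            rw [he, map_mul]
            have : π ⟨x * t⁻¹, hxt⟩ = 1 :=
              (QuotientGroup.eq_one_iff _).mpr (Subgroup.mem_subgroupOf.mpr h)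
            rw [this, one_mul]
            exact Subgroup.subset_closure (Or.inr rfl)
        · have hxJ : x ∈ Jsub := (hJmem x).mpr hx
          rcases covJ x hxJ with h | h
          · have : π ⟨x, hxH⟩ = 1 :=
              (QuotientGroup.eq_one_iff _).mpr (Subgroup.mem_subgroupOf.mpr h)
            rw [this]
            exact one_mem _
          · have hxj : x * j₀⁻¹ ∈ H := mul_mem hxH (inv_mem hj₀H)
            have he : (⟨x, hxH⟩ : H) = ⟨x * j₀⁻¹, hxj⟩ * ⟨j₀, hj₀H⟩ := by
              apply Subtype.ext
              show x = (x * j₀⁻¹) * j₀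
              group
            rw [he, map_mul]
            have : π ⟨x * j₀⁻¹, hxj⟩ = 1 :=
              (QuotientGroup.eq_one_iff _).mpr (Subgroup.mem_subgroupOf.mpr h)
            rw [this, one_mul]
            exact Subgroup.subset_closure (Or.inl rfl)
      · intro h1H
        have : π ⟨1, h1H⟩ = 1 := map_one π ▸ by
          congr 1
        rw [show (⟨1, h1H⟩ : H) = 1 from rfl, map_one]
        exact one_mem _
      · intro x y hx hy ihx ihy hxyH
        have hxH : x ∈ H := by rw [hHdef]; exact hx
        have hyH : y ∈ H := by rw [hHdef]; exact hy
        have he : (⟨x * y, hxyH⟩ : H) = ⟨x, hxH⟩ * ⟨y, hyH⟩ := rfl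
        rw [he, map_mul]
        exact mul_mem (ihx hxH) (ihy hyH)
      · intro x hx ih hxiH
        have hxH : x ∈ H := by rw [hHdef]; exact hx
        have he : (⟨x⁻¹, hxiH⟩ : H) = (⟨x, hxH⟩)⁻¹ := rfl
        rw [he, map_inv]
        exact inv_mem (ih hxH)
    have hdich := cyclic_or_dihedral σ τ hσ2 hτ2 hgen
    -- conjugation stability of H
    have hconjfun : ⇑(MulAut.conj b).toMonoidHom = fun g : G => b * g * b⁻¹ := by
      funext g
      simp [MulAut.conj_apply]
    have hseteq : {z : G | b⁻¹ * z * b ∈ K} = (fun g : G => b * g * b⁻¹) '' (K : Set G) := by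
      ext z
      constructor
      · intro hz
        refine ⟨b⁻¹ * z * b, hz, ?_⟩
        show b * (b⁻¹ * z * b) * b⁻¹ = z
        group
      · rintro ⟨k, hk, rfl⟩
        show b⁻¹ * (b * k * b⁻¹) * b ∈ K
        have he : b⁻¹ * (b * k * b⁻¹) * b = k := by group
        rw [he]
        exact hk
    have hmapH : H.map (MulAut.conj b).toMonoidHom = H := by
      rw [hHdef, MonoidHom.map_closure, Set.image_union, hconjfun]
      have himJ : (fun g : G => b * g * b⁻¹) '' {x : G | b * x * b⁻¹ ∈ K} = (K : Set G) := by
        ext z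
        constructor
        · rintro ⟨x, hx, rfl⟩
          exact hx
        · intro hz
          refine ⟨b⁻¹ * z * b, ?_, ?_⟩
          · show b * (b⁻¹ * z * b) * b⁻¹ ∈ K
            have he : b * (b⁻¹ * z * b) * b⁻¹ = z := by group
            rw [he]
            exact hz
          · show b * (b⁻¹ * z * b) * b⁻¹ = z
            group
      rw [himJ]
      apply le_antisymm
      · rw [Subgroup.closure_le]
        rintro x (⟨k, hk, rfl⟩ | hx)
        · exact hBb k hk
        · exact hKH x hx
      · rw [Subgroup.closure_le]
        rintro x (hx | hx)
        · exact Subgroup.subset_closure (Or.inr hx)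
        · have hk : b * x * b⁻¹ ∈ K := hx
          have h2 := hBb' (b * x * b⁻¹) hk
          have he : b⁻¹ * (b * x * b⁻¹) * b = x := by group
          rw [he] at h2
          have hsets : ((K : Set G) ∪ {z : G | b⁻¹ * z * b ∈ K})
              = ((fun g : G => b * g * b⁻¹) '' (K : Set G) ∪ (K : Set G)) := by
            rw [hseteq, Set.union_comm]
          rwa [hsets] at h2
    have hcomm := conj_closure_comm H b hmapH
    refine ⟨P, H, b, inf_le_left, ?_, ?_, hcomm, ?_, hN, hdich⟩
    · intro k hk
      exact hKH k hk
    · intro z hz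
      rw [hBKbK] at hz
      obtain ⟨y, hy, k2, hk2, rfl⟩ := hz
      rw [mem_coset_iff] at hy
      rw [singleton_mul_mem_iff]
      have hJ1 : b⁻¹ * (y * b⁻¹) * b ∈ Jsub := by
        rw [hJmem]
        have he : b * (b⁻¹ * (y * b⁻¹) * b) * b⁻¹ = y * b⁻¹ := by group
        rw [he]
        exact hy
      have he : b⁻¹ * (y * k2) = (b⁻¹ * (y * b⁻¹) * b) * k2 := by group
      rw [he]
      exact mul_mem (hJH _ hJ1) (hKH _ hk2)
    · show (P.subgroupOf K).index ≤ 2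
      have : (P.subgroupOf K).index = 2 := by
        rw [Subgroup.index_eq_two_iff]
        refine ⟨(⟨t, htK⟩ : K)⁻¹, fun x => ?_⟩
        by_cases hx : (x : G) ∈ P
        · refine Or.inr ⟨Subgroup.mem_subgroupOf.mpr hx, ?_⟩
          intro hcon
          rw [Subgroup.mem_subgroupOf] at hcon
          apply htP
          have hmem : ((x * (⟨t, htK⟩ : K)⁻¹ : K) : G) ∈ P := hcon
          have hco : ((x * (⟨t, htK⟩ : K)⁻¹ : K) : G) = (x : G) * t⁻¹ := rfl
          rw [hco] at hmem
          have he : t = ((x : G) * t⁻¹)⁻¹ * (x : G) := by group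
          rw [he]
          exact mul_mem (inv_mem hmem) hx
        · rcases covK (x : G) x.2 with h | h
          · exact absurd h hx
          · refine Or.inl ⟨?_, fun hcon => hx (Subgroup.mem_subgroupOf.mp hcon)⟩
            rw [Subgroup.mem_subgroupOf]
            exact h
      omega
  · -- macro case α : b and c both normalize K
    push_neg at hsplit
    have hbK1 : ∀ k, k ∈ K → b * k * b⁻¹ ∈ K := by
      intro k hk
      have hbk : b * k ∈ B := by
        rw [← hBK]
        exact Set.mul_mem_mul hbB hk
      rw [hBeq] at hbk
      rcases hbk with h | h
      · rw [mem_coset_iff] at h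
        exact h
      · exfalso
        rw [mem_coset_iff] at h
        exact hsplit k hk h
    have hinjconj : ∀ d : G, Function.Injective (fun g : G => d * g * d⁻¹) := by
      intro d x y h
      dsimp at h
      exact mul_left_cancel (mul_right_cancel h)
    have himb : (fun g : G => b * g * b⁻¹) '' (K : Set G) = (K : Set G) := by
      refine Set.eq_of_subset_of_ncard_le ?_ ?_ hK
      · rintro z ⟨k, hk, rfl⟩
        exact hbK1 k hk
      · rw [Set.ncard_image_of_injective _ (hinjconj b)]
    have hbK2 : ∀ k, k ∈ K → b⁻¹ * k * b ∈ K := by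
      intro k hk
      have : k ∈ (fun g : G => b * g * b⁻¹) '' (K : Set G) := by rw [himb]; exact hk
      obtain ⟨k', hk', he⟩ := this
      have h2 : b⁻¹ * k * b = k' := by
        rw [← he]
        group
      rw [h2]
      exact hk'
    have hcK1 : ∀ k, k ∈ K → c * k * c⁻¹ ∈ K := by
      intro k hk
      have hck : c * k ∈ B := by
        rw [← hBK]
        exact Set.mul_mem_mul hcB hk
      rw [hBeq] at hck
      rcases hck with h | h
      · exfalso
        rw [mem_coset_iff] at h
        apply hcb
        have he : c * b⁻¹ = (c * k * b⁻¹) * (b * k⁻¹ * b⁻¹) := by group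
        rw [he]
        exact mul_mem h (hbK1 k⁻¹ (inv_mem hk))
      · rw [mem_coset_iff] at h
        exact h
    have himc : (fun g : G => c * g * c⁻¹) '' (K : Set G) = (K : Set G) := by
      refine Set.eq_of_subset_of_ncard_le ?_ ?_ hK
      · rintro z ⟨k, hk, rfl⟩
        exact hcK1 k hk
      · rw [Set.ncard_image_of_injective _ (hinjconj c)]
    have hcK2 : ∀ k, k ∈ K → c⁻¹ * k * c ∈ K := by
      intro k hk
      have : k ∈ (fun g : G => c * g * c⁻¹) '' (K : Set G) := by rw [himc]; exact hk
      obtain ⟨k', hk', he⟩ := this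
      have h2 : c⁻¹ * k * c = k' := by
        rw [← he]
        group
      rw [h2]
      exact hk'
    have htn1 : ∀ k, k ∈ K → (b⁻¹ * c) * k * (b⁻¹ * c)⁻¹ ∈ K := by
      intro k hk
      have he : (b⁻¹ * c) * k * (b⁻¹ * c)⁻¹ = b⁻¹ * (c * k * c⁻¹) * b := by group
      rw [he]
      exact hbK2 _ (hcK1 k hk)
    have htn2 : ∀ k, k ∈ K → (b⁻¹ * c)⁻¹ * k * (b⁻¹ * c) ∈ K := by
      intro k hk
      have he : (b⁻¹ * c)⁻¹ * k * (b⁻¹ * c) = c⁻¹ * (b * k * b⁻¹) * c := by group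
      rw [he]
      exact hcK2 _ (hbK1 k hk)
    have huK : c * b⁻¹ ∉ K := hcb
    have hsix := lemC K hK b c hBK hBeq (by omega)
    have hcase : (c * b⁻¹) * (b⁻¹ * c) ∈ K ∨ (c * b⁻¹) * (b⁻¹ * c)⁻¹ ∈ K := by
      rcases hsix with h | h | h | h | h | h
      · left
        have he : (c * b⁻¹) * (b⁻¹ * c) = c⁻¹ * (b * b * (c * c)⁻¹)⁻¹ * c := by group
        rw [he]
        exact hcK2 _ (inv_mem h)
      · right
        have he : (c * b⁻¹) * (b⁻¹ * c)⁻¹ = b⁻¹ * (b * c * (c * b)⁻¹) * b := by group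
        rw [he]
        exact hbK2 _ h
      · exfalso
        apply huK
        have he : c * b⁻¹ = (b⁻¹ * (b * b * (b * c)⁻¹) * b)⁻¹ := by group
        rw [he]
        exact inv_mem (hbK2 _ h)
      · exfalso
        apply huK
        have he : c * b⁻¹ = (b * b * (c * b)⁻¹)⁻¹ := by group
        rw [he]
        exact inv_mem h
      · exfalso
        apply huK
        have he : c * b⁻¹ = (b * c * (c * c)⁻¹)⁻¹ := by group
        rw [he]
        exact inv_mem h
      · exfalso
        apply huK
        have he : c * b⁻¹ = (c⁻¹ * (c * b * (c * c)⁻¹) * c)⁻¹ := by group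
        rw [he]
        exact inv_mem (hcK2 _ h)
    set t : G := b⁻¹ * c with htdef
    set u : G := c * b⁻¹ with hudef
    set H : Subgroup G := Subgroup.closure ((K : Set G) ∪ {t}) with hHdef
    have hKH : ∀ k, k ∈ K → k ∈ H := fun k hk => Subgroup.subset_closure (Or.inl hk)
    have htH : t ∈ H := Subgroup.subset_closure (Or.inr rfl)
    have htnorm : t ∈ Subgroup.normalizer (K : Set G) := by
      rw [Subgroup.mem_normalizer_iff]
      intro h
      constructor
      · intro hh
        exact htn1 h hh
      · intro hh
        have he : h = t⁻¹ * (t * h * t⁻¹) * t := by group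
        rw [he]
        exact htn2 _ hh
    have hHle : H ≤ Subgroup.normalizer (K : Set G) := by
      rw [hHdef, Subgroup.closure_le]
      rintro x (hx | hx)
      · exact Subgroup.le_normalizer hx
      · rw [Set.mem_singleton_iff] at hx
        subst hx
        exact htnorm
    have hN : (K.subgroupOf H).Normal := by
      constructor
      rintro ⟨n, hnH⟩ hn ⟨g, hgH⟩
      rw [Subgroup.mem_subgroupOf] at hn ⊢
      exact (Subgroup.mem_normalizer_iff.mp (hHle hgH) n).mp hn
    haveI := hN
    have hzpow : ∀ (n : ℤ) (k : G), k ∈ K → t ^ n * k * (t ^ n)⁻¹ ∈ K := by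
      intro n k hk
      exact (Subgroup.mem_normalizer_iff.mp (zpow_mem htnorm n) k).mp hk
    have hstr : ∀ g (_ : g ∈ H), ∃ k, k ∈ K ∧ ∃ n : ℤ, g = k * t ^ n := by
      intro g hg
      rw [hHdef] at hg
      refine Subgroup.closure_induction ?_ ?_ ?_ ?_ hg
      · rintro x (hx | hx)
        · exact ⟨x, hx, 0, by simp⟩
        · rw [Set.mem_singleton_iff] at hx
          exact ⟨1, one_mem K, 1, by simp [hx]⟩
      · exact ⟨1, one_mem K, 0, by simp⟩
      · rintro x y hx hy ⟨k, hk, n, rfl⟩ ⟨k', hk', m, rfl⟩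
        refine ⟨k * (t ^ n * k' * (t ^ n)⁻¹), mul_mem hk (hzpow n k' hk'), n + m, ?_⟩
        rw [zpow_add]
        group
      · rintro x hx ⟨k, hk, n, rfl⟩
        refine ⟨t ^ (-n) * k⁻¹ * (t ^ (-n))⁻¹, hzpow (-n) k⁻¹ (inv_mem hk), -n, ?_⟩
        rw [zpow_neg]
        group
    have hcyc : IsCyclic (H ⧸ K.subgroupOf H) := by
      refine ⟨⟨(QuotientGroup.mk' (K.subgroupOf H)) ⟨t, htH⟩, fun q => ?_⟩⟩
      obtain ⟨⟨g, hgH⟩, rfl⟩ := QuotientGroup.mk'_surjective _ q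
      obtain ⟨k, hk, n, hgeq⟩ := hstr g hgH
      refine ⟨n, ?_⟩
      dsimp only
      have h1 : (⟨g, hgH⟩ : H) = ⟨k, hKH k hk⟩ * (⟨t, htH⟩ : H) ^ n := by
        apply Subtype.ext
        push_cast
        exact hgeq
      rw [h1, map_mul, map_zpow]
      have h2 : (QuotientGroup.mk' (K.subgroupOf H)) (⟨k, hKH k hk⟩ : H) = 1 :=
        (QuotientGroup.eq_one_iff _).mpr (Subgroup.mem_subgroupOf.mpr hk)
      rw [h2, one_mul]
    have hconjfun : ⇑(MulAut.conj b).toMonoidHom = fun g : G => b * g * b⁻¹ := by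
      funext g
      simp [MulAut.conj_apply]
    have hmapH : H.map (MulAut.conj b).toMonoidHom = H := by
      rw [hHdef, MonoidHom.map_closure, Set.image_union, Set.image_singleton, hconjfun, himb]
      have hbtu : (fun g : G => b * g * b⁻¹) t = u := by
        show b * t * b⁻¹ = u
        rw [htdef, hudef]
        group
      rw [hbtu]
      apply le_antisymm
      · rw [Subgroup.closure_le]
        rintro x (hx | hx)
        · exact hKH x hx
        · rw [Set.mem_singleton_iff] at hx
          subst hx
          rcases hcase with h | h
          · have he : u = (u * t) * t⁻¹ := by group
            rw [he]
            exact mul_mem (hKH _ h) (inv_mem htH)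
          · have he : u = (u * t⁻¹) * t := by group
            rw [he]
            exact mul_mem (hKH _ h) htH
      · rw [Subgroup.closure_le]
        rintro x (hx | hx)
        · exact Subgroup.subset_closure (Or.inl hx)
        · rw [Set.mem_singleton_iff] at hx
          subst hx
          rcases hcase with h | h
          · have he : t = u⁻¹ * (u * t) := by group
            rw [he]
            exact mul_mem (inv_mem (Subgroup.subset_closure (Or.inr rfl)))
              (Subgroup.subset_closure (Or.inl h))
          · have he : t = (u * t⁻¹)⁻¹ * u := by group
            rw [he]
            exact mul_mem (inv_mem (Subgroup.subset_closure (Or.inl h)))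
              (Subgroup.subset_closure (Or.inr rfl))
    have hcomm := conj_closure_comm H b hmapH
    refine ⟨K, H, b, le_refl K, ?_, ?_, hcomm, ?_, hN, Or.inl hcyc⟩
    · intro k hk
      exact hKH k hk
    · intro z hz
      rw [hBeq] at hz
      rw [singleton_mul_mem_iff]
      rcases hz with h | h
      · rw [mem_coset_iff] at h
        have he : b⁻¹ * z = b⁻¹ * (z * b⁻¹) * b := by group
        rw [he]
        exact hKH _ (hbK2 _ h)
      · rw [mem_coset_iff] at h
        have he : b⁻¹ * z = (b⁻¹ * (z * c⁻¹) * b) * t := by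
          rw [htdef]
          group
        rw [he]
        exact mul_mem (hKH _ (hbK2 _ h)) htH
    · rw [Subgroup.relIndex_self]
      omega
end

section
/- Let a group G act transitively on nonempty sets X and Y with all point stabilizers finite, and let r be a G-invariant relation between X and Y (i.e. r(x,y) holds iff r(g•x, g•y) holds, for all g ∈ G, x ∈ X, y ∈ Y). Write N(x) = {y ∈ Y : r(x,y)} and N(y) = {x ∈ X : r(x,y)}. Fix x₀ ∈ X and y₀ ∈ Y. Then: (a) if N(x₀) is finite, then N(x) is finite for every x ∈ X, N(y) is finite for every y ∈ Y, and |Stab_G(y₀)| · |N(x₀)| = |Stab_G(x₀)| · |N(y₀)|; (b) if Y ∖ N(x₀) is finite, then Y ∖ N(x) is finite for every x ∈ X, X ∖ N(y) is finite for every y ∈ Y, and |Stab_G(y₀)| · |Y ∖ N(x₀)| = |Stab_G(x₀)| · |X ∖ N(y₀)|. -/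
open MulAction Set

private noncomputable def key_equiv {G Y : Type*} [Group G] [MulAction G Y]
    (ht : MulAction.IsPretransitive G Y) (P : Y → Prop) (y₀ : Y) :
    {g : G // P (g • y₀)} ≃ {y : Y // P y} × MulAction.stabilizer G y₀ := by
  classical
  choose c hc using fun y => ht.exists_smul_eq y₀ y
  refine Equiv.symm ⟨fun p => ⟨c p.1.1 * p.2.1, ?_⟩,
    fun g => (⟨g.1 • y₀, g.2⟩, ⟨(c (g.1 • y₀))⁻¹ * g.1, ?_⟩), ?_, ?_⟩
  · have h : (c p.1.1 * p.2.1) • y₀ = p.1.1 := by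
      rw [mul_smul, p.2.2, hc]
    rw [h]; exact p.1.2
  · simp [MulAction.mem_stabilizer_iff, mul_smul, inv_smul_eq_iff, hc]
  · rintro ⟨⟨y, hy⟩, ⟨s, hs⟩⟩
    have h1 : (c y * s) • y₀ = y := by
      rw [mul_smul, hs, hc]
    ext
    · simp [h1]
    · simp [h1, mul_assoc]
  · rintro ⟨g, hg⟩
    ext
    simp [mul_smul, hc]

private lemma key {G X Y : Type*} [Group G] [MulAction G X] [MulAction G Y]
    (htX : MulAction.IsPretransitive G X) (htY : MulAction.IsPretransitive G Y)
    (hsX : ∀ x : X, Finite (MulAction.stabilizer G x))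
    (hsY : ∀ y : Y, Finite (MulAction.stabilizer G y))
    (r : X → Y → Prop)
    (hr : ∀ (g : G) (x : X) (y : Y), r x y ↔ r (g • x) (g • y))
    (x₀ : X) (y₀ : Y) :
    (({y : Y | r x₀ y}).Finite →
      (∀ x : X, {y : Y | r x y}.Finite) ∧ (∀ y : Y, {x : X | r x y}.Finite)) ∧
    Nat.card (MulAction.stabilizer G y₀) * {y : Y | r x₀ y}.ncard =
      Nat.card (MulAction.stabilizer G x₀) * {x : X | r x y₀}.ncard := by
  classical
  -- equiv via inversion
  have einv : {g : G // r x₀ (g • y₀)} ≃ {g : G // r (g • x₀) y₀} := by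
    refine ⟨fun g => ⟨g.1⁻¹, ?_⟩, fun g => ⟨g.1⁻¹, ?_⟩, ?_, ?_⟩
    · have := (hr g.1⁻¹ x₀ (g.1 • y₀)).mp g.2
      simpa using this
    · have := (hr g.1⁻¹ (g.1 • x₀) y₀).mp g.2
      simpa using this
    · rintro ⟨g, hg⟩; simp
    · rintro ⟨g, hg⟩; simp
  have eY := key_equiv htY (fun y => r x₀ y) y₀
  have eX := key_equiv htX (fun x => r x y₀) x₀
  constructor
  · intro h
    have h1 : ∀ x : X, {y : Y | r x y}.Finite := by
      intro x
      obtain ⟨g, hg⟩ := htX.exists_smul_eq x₀ x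
      have : {y : Y | r x y} = (fun y => g • y) '' {y : Y | r x₀ y} := by
        ext y
        simp only [Set.mem_image, Set.mem_setOf_eq]
        constructor
        · intro hy
          refine ⟨g⁻¹ • y, ?_, by simp⟩
          have := (hr g⁻¹ x y).mp hy
          rwa [← hg, inv_smul_smul] at this
        · rintro ⟨y', hy', rfl⟩
          rw [← hg]
          exact (hr g x₀ y').mp hy'
      rw [this]; exact h.image _
    have hT : Finite {g : G // r x₀ (g • y₀)} := by
      have : Finite {y : Y // r x₀ y} := h.to_subtype
      have : Finite ({y : Y // r x₀ y} × MulAction.stabilizer G y₀) := by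
        have := hsY y₀; exact Finite.instProd
      exact Finite.of_equiv _ eY.symm
    have hT' : Finite {g : G // r (g • x₀) y₀} := Finite.of_equiv _ einv
    have h2 : {x : X | r x y₀}.Finite := by
      have hset : {x : X | r x y₀} ⊆ (fun g : G => g • x₀) '' {g : G | r (g • x₀) y₀} := by
        intro x hx
        obtain ⟨g, hg⟩ := htX.exists_smul_eq x₀ x
        exact ⟨g, by rwa [Set.mem_setOf_eq, hg], hg⟩
      have : ({g : G | r (g • x₀) y₀}).Finite := Set.finite_coe_iff.mp hT'
      exact (this.image _).subset hset
    refine ⟨h1, ?_⟩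
    intro y
    obtain ⟨g, hg⟩ := htY.exists_smul_eq y₀ y
    have : {x : X | r x y} = (fun x => g • x) '' {x : X | r x y₀} := by
      ext x
      simp only [Set.mem_image, Set.mem_setOf_eq]
      constructor
      · intro hx
        refine ⟨g⁻¹ • x, ?_, by simp⟩
        have := (hr g⁻¹ x y).mp hx
        rwa [← hg, inv_smul_smul] at this
      · rintro ⟨x', hx', rfl⟩
        rw [← hg]
        exact (hr g x' y₀).mp hx'
    rw [this]; exact h2.image _
  · have c1 : Nat.card {g : G // r x₀ (g • y₀)} =
        {y : Y | r x₀ y}.ncard * Nat.card (MulAction.stabilizer G y₀) := by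
      rw [Nat.card_congr eY, Nat.card_prod]
      congr 1
    have c2 : Nat.card {g : G // r (g • x₀) y₀} =
        {x : X | r x y₀}.ncard * Nat.card (MulAction.stabilizer G x₀) := by
      rw [Nat.card_congr eX, Nat.card_prod]
      congr 1
    have c3 := Nat.card_congr einv
    rw [c1, c2] at c3
    rw [mul_comm (Nat.card (MulAction.stabilizer G y₀)),
      mul_comm (Nat.card (MulAction.stabilizer G x₀))]
    exact c3

theorem statement11 {G X Y : Type*} [Group G] [MulAction G X] [MulAction G Y]
    [Nonempty X] [Nonempty Y]
    (htX : MulAction.IsPretransitive G X) (htY : MulAction.IsPretransitive G Y)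
    (hsX : ∀ x : X, Finite (MulAction.stabilizer G x))
    (hsY : ∀ y : Y, Finite (MulAction.stabilizer G y))
    (r : X → Y → Prop)
    (hr : ∀ (g : G) (x : X) (y : Y), r x y ↔ r (g • x) (g • y))
    (x₀ : X) (y₀ : Y) :
    -- (a)
    (({y : Y | r x₀ y}).Finite →
      (∀ x : X, {y : Y | r x y}.Finite) ∧ (∀ y : Y, {x : X | r x y}.Finite) ∧
      Nat.card (MulAction.stabilizer G y₀) * {y : Y | r x₀ y}.ncard =
        Nat.card (MulAction.stabilizer G x₀) * {x : X | r x y₀}.ncard) ∧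
    -- (b)
    (({y : Y | ¬ r x₀ y}).Finite →
      (∀ x : X, {y : Y | ¬ r x y}.Finite) ∧ (∀ y : Y, {x : X | ¬ r x y}.Finite) ∧
      Nat.card (MulAction.stabilizer G y₀) * {y : Y | ¬ r x₀ y}.ncard =
        Nat.card (MulAction.stabilizer G x₀) * {x : X | ¬ r x y₀}.ncard) := by
  obtain ⟨ka, kc⟩ := key htX htY hsX hsY r hr x₀ y₀
  obtain ⟨ka', kc'⟩ := key htX htY hsX hsY (fun x y => ¬ r x y)
    (fun g x y => not_congr (hr g x y)) x₀ y₀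
  exact ⟨fun h => ⟨(ka h).1, (ka h).2, kc⟩, fun h => ⟨(ka' h).1, (ka' h).2, kc'⟩⟩
end

section
/- Let a group G act transitively on nonempty sets X and Y with all point stabilizers finite, and let r be a G-invariant relation between X and Y (i.e. r(x,y) holds iff r(g•x, g•y) holds). Suppose there are positive integers d₁ and d₂ with gcd(d₁, d₂) = 1 such that for every x ∈ X the set {y ∈ Y : r(x,y)} is finite with cardinality d₁, and for every y ∈ Y the set {x ∈ X : r(x,y)} is finite with cardinality d₂. Then G acts transitively on incident pairs: for all x, x' ∈ X and y, y' ∈ Y with r(x,y) and r(x',y'), there exists g ∈ G with g•x = x' and g•y = y'. -/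
open MulAction

/-- Orbit–stabilizer theorem in `Nat.card` form, for the action of a subgroup. -/
lemma statement12_aux_orbit {G A : Type*} [Group G] [MulAction G A] (H : Subgroup G) (a : A) :
    (MulAction.orbit H a).ncard * Nat.card {g : G // g ∈ H ∧ g • a = a} = Nat.card H := by
  have e1 : Nat.card {g : G // g ∈ H ∧ g • a = a} = Nat.card (stabilizer H a) :=
    Nat.card_congr ⟨fun p => ⟨⟨p.1, p.2.1⟩, p.2.2⟩, fun q => ⟨q.1.1, q.1.2, q.2⟩,
      fun p => rfl, fun q => rfl⟩
  rw [← Nat.card_coe_set_eq, e1, ← Nat.card_prod]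
  exact Nat.card_congr (MulAction.orbitProdStabilizerEquivGroup H a)

theorem statement12 {G X Y : Type*} [Group G] [MulAction G X] [MulAction G Y]
    [Nonempty X] [Nonempty Y]
    (htX : MulAction.IsPretransitive G X) (htY : MulAction.IsPretransitive G Y)
    (hsX : ∀ x : X, Finite (MulAction.stabilizer G x))
    (hsY : ∀ y : Y, Finite (MulAction.stabilizer G y))
    (r : X → Y → Prop)
    (hr : ∀ (g : G) (x : X) (y : Y), r x y ↔ r (g • x) (g • y))
    (d₁ d₂ : ℕ) (hd₁ : 0 < d₁) (hd₂ : 0 < d₂) (hcop : Nat.gcd d₁ d₂ = 1)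
    (hN₁ : ∀ x : X, {y : Y | r x y}.Finite ∧ {y : Y | r x y}.ncard = d₁)
    (hN₂ : ∀ y : Y, {x : X | r x y}.Finite ∧ {x : X | r x y}.ncard = d₂) :
    ∀ (x x' : X) (y y' : Y), r x y → r x' y' →
      ∃ g : G, g • x = x' ∧ g • y = y' := by
  classical
  have hsplit : ∀ (g : G) (u : X) (v : Y) (u' : X) (v' : Y),
      g • (u, v) = (u', v') → g • u = u' ∧ g • v = v' := by
    intro g u v u' v' h
    rwa [Prod.smul_mk, Prod.mk.injEq] at h
  suffices key : ∀ (x : X) (y y₂ : Y), r x y → r x y₂ → ∃ g : G, g • x = x ∧ g • y = y₂ by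
    intro x x' y y' hxy hx'y'
    obtain ⟨g₁, hg₁⟩ := htX.exists_smul_eq x' x
    have h2 : r x (g₁ • y') := by rw [← hg₁]; exact (hr g₁ x' y').mp hx'y'
    obtain ⟨h, hhx, hhy⟩ := key x y (g₁ • y') hxy h2
    refine ⟨g₁⁻¹ * h, ?_, ?_⟩
    · rw [mul_smul, hhx, ← hg₁, inv_smul_smul]
    · rw [mul_smul, hhy, inv_smul_smul]
  intro x y y₂ hxy hxy₂
  set Q := Quotient (MulAction.orbitRel G (X × Y)) with hQ
  set q : Y → Q := fun z => ⟦(x, z)⟧ with hq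
  set q' : X → Q := fun u => ⟦(u, y)⟧ with hq'
  have hqe : ∀ (p p' : X × Y), (⟦p⟧ : Q) = ⟦p'⟧ ↔ ∃ g : G, g • p' = p := fun p p' => by
    rw [Quotient.eq]
    exact MulAction.orbitRel_apply.trans MulAction.mem_orbit_iff
  set Rx : Finset Y := (hN₁ x).1.toFinset with hRx
  set Ly : Finset X := (hN₂ y).1.toFinset with hLy
  have hmemR : ∀ z : Y, z ∈ Rx ↔ r x z := fun z => by
    rw [hRx, Set.Finite.mem_toFinset]; rfl
  have hmemL : ∀ u : X, u ∈ Ly ↔ r u y := fun u => by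
    rw [hLy, Set.Finite.mem_toFinset]; rfl
  have hRcard : Rx.card = d₁ := by
    rw [hRx, ← Set.ncard_eq_toFinset_card _ (hN₁ x).1]; exact (hN₁ x).2
  have hLcard : Ly.card = d₂ := by
    rw [hLy, ← Set.ncard_eq_toFinset_card _ (hN₂ y).1]; exact (hN₂ y).2
  set sX := Nat.card (MulAction.stabilizer G x) with hsXdef
  set sY := Nat.card (MulAction.stabilizer G y) with hsYdef
  haveI := hsX x
  haveI := hsY y
  have hsXpos : 0 < sX := Nat.card_pos
  -- fiber cardinalities, X side
  have fibX : ∀ y₁ : Y, r x y₁ →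
      (Rx.filter (fun z => q z = q y₁)).card
        * Nat.card (MulAction.stabilizer G (x, y₁)) = sX := by
    intro y₁ hry₁
    have hset : (↑(Rx.filter (fun z => q z = q y₁)) : Set Y)
        = MulAction.orbit (MulAction.stabilizer G x) y₁ := by
      ext z
      rw [Finset.coe_filter, Set.mem_setOf_eq, MulAction.mem_orbit_iff, hmemR]
      constructor
      · rintro ⟨hrz, hz⟩
        obtain ⟨g, hg⟩ := (hqe _ _).mp hz
        obtain ⟨hgx, hgy⟩ := hsplit g x y₁ x z hg
        exact ⟨⟨g, hgx⟩, hgy⟩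
      · rintro ⟨⟨g, hgx⟩, hgy⟩
        have hgx' : g • x = x := hgx
        have hgy' : g • y₁ = z := hgy
        constructor
        · have := (hr g x y₁).mp hry₁
          rw [hgx', hgy'] at this
          exact this
        · exact (hqe _ _).mpr ⟨g, by rw [Prod.smul_mk, hgx', hgy']⟩
    have hcards : (Rx.filter (fun z => q z = q y₁)).card
        = (MulAction.orbit (MulAction.stabilizer G x) y₁).ncard := by
      rw [← hset, Set.ncard_coe_finset]
    have hpair : Nat.card {g : G // g ∈ MulAction.stabilizer G x ∧ g • y₁ = y₁}
        = Nat.card (MulAction.stabilizer G (x, y₁)) := by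
      refine Nat.card_congr (Equiv.subtypeEquivRight fun g => ?_)
      simp [MulAction.mem_stabilizer_iff, Prod.ext_iff]
    rw [hcards, ← hpair]
    exact statement12_aux_orbit (MulAction.stabilizer G x) y₁
  -- fiber cardinalities, Y side
  have fibY : ∀ x₂ : X, r x₂ y →
      (Ly.filter (fun u => q' u = q' x₂)).card
        * Nat.card (MulAction.stabilizer G (x₂, y)) = sY := by
    intro x₂ hrx₂
    have hset : (↑(Ly.filter (fun u => q' u = q' x₂)) : Set X)
        = MulAction.orbit (MulAction.stabilizer G y) x₂ := by
      ext u
      rw [Finset.coe_filter, Set.mem_setOf_eq, MulAction.mem_orbit_iff, hmemL]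
      constructor
      · rintro ⟨hru, hu⟩
        obtain ⟨g, hg⟩ := (hqe _ _).mp hu
        obtain ⟨hgx, hgy⟩ := hsplit g x₂ y u y hg
        exact ⟨⟨g, hgy⟩, hgx⟩
      · rintro ⟨⟨g, hgy⟩, hgx⟩
        have hgy' : g • y = y := hgy
        have hgx' : g • x₂ = u := hgx
        constructor
        · have := (hr g x₂ y).mp hrx₂
          rw [hgx', hgy'] at this
          exact this
        · exact (hqe _ _).mpr ⟨g, by rw [Prod.smul_mk, hgx', hgy']⟩
    have hcards : (Ly.filter (fun u => q' u = q' x₂)).card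
        = (MulAction.orbit (MulAction.stabilizer G y) x₂).ncard := by
      rw [← hset, Set.ncard_coe_finset]
    have hpair : Nat.card {g : G // g ∈ MulAction.stabilizer G y ∧ g • x₂ = x₂}
        = Nat.card (MulAction.stabilizer G (x₂, y)) := by
      refine Nat.card_congr (Equiv.subtypeEquivRight fun g => ?_)
      simp [MulAction.mem_stabilizer_iff, Prod.ext_iff, and_comm]
    rw [hcards, ← hpair]
    exact statement12_aux_orbit (MulAction.stabilizer G y) x₂
  -- the two fiberings have the same image
  have himg : Rx.image q = Ly.image q' := by
    ext c
    simp only [Finset.mem_image]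
    constructor
    · rintro ⟨y₁, hy₁, rfl⟩
      have hry₁ := (hmemR y₁).mp hy₁
      obtain ⟨g, hg⟩ := htY.exists_smul_eq y₁ y
      refine ⟨g • x, ?_, ?_⟩
      · rw [hmemL]
        have := (hr g x y₁).mp hry₁
        rwa [hg] at this
      · exact (hqe _ _).mpr ⟨g, by rw [Prod.smul_mk, hg]⟩
    · rintro ⟨x₂, hx₂, rfl⟩
      have hrx₂ := (hmemL x₂).mp hx₂
      obtain ⟨g, hg⟩ := htX.exists_smul_eq x₂ x
      refine ⟨g • y, ?_, ?_⟩
      · rw [hmemR]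
        have := (hr g x₂ y).mp hrx₂
        rwa [hg] at this
      · exact (hqe _ _).mpr ⟨g, by rw [Prod.smul_mk, hg]⟩
  -- per-class balance equation
  have hfib : ∀ c ∈ Rx.image q,
      (Rx.filter (fun z => q z = c)).card * sY
        = (Ly.filter (fun u => q' u = c)).card * sX := by
    intro c hc
    obtain ⟨y₁, hy₁, hqy₁⟩ := Finset.mem_image.mp hc
    obtain ⟨x₂, hx₂, hqx₂⟩ := Finset.mem_image.mp (himg ▸ hc)
    have hry₁ := (hmemR y₁).mp hy₁
    have hrx₂ := (hmemL x₂).mp hx₂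
    have e1 := fibX y₁ hry₁
    have e2 := fibY x₂ hrx₂
    have horb : (⟦(x, y₁)⟧ : Q) = ⟦(x₂, y)⟧ := by
      show q y₁ = q' x₂
      rw [hqy₁, hqx₂]
    have e3 : Nat.card (MulAction.stabilizer G (x, y₁))
        = Nat.card (MulAction.stabilizer G (x₂, y)) := by
      obtain ⟨g, hg⟩ := (hqe _ _).mp horb
      have hrel : MulAction.orbitRel G (X × Y) (x, y₁) (x₂, y) :=
        MulAction.orbitRel_apply.mpr (MulAction.mem_orbit_iff.mpr ⟨g, hg⟩)
      exact Nat.card_congr (MulAction.stabilizerEquivStabilizerOfOrbitRel hrel).toEquiv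
    have hfe1 : Rx.filter (fun z => q z = c) = Rx.filter (fun z => q z = q y₁) := by
      apply Finset.filter_congr
      intro z _
      rw [hqy₁]
    have hfe2 : Ly.filter (fun u => q' u = c) = Ly.filter (fun u => q' u = q' x₂) := by
      apply Finset.filter_congr
      intro u _
      rw [hqx₂]
    rw [hfe1, hfe2]
    calc (Rx.filter (fun z => q z = q y₁)).card * sY
        = (Rx.filter (fun z => q z = q y₁)).card
            * ((Ly.filter (fun u => q' u = q' x₂)).card
              * Nat.card (MulAction.stabilizer G (x₂, y))) := by rw [e2]
      _ = (Ly.filter (fun u => q' u = q' x₂)).card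
            * ((Rx.filter (fun z => q z = q y₁)).card
              * Nat.card (MulAction.stabilizer G (x, y₁))) := by rw [e3]; ring
      _ = (Ly.filter (fun u => q' u = q' x₂)).card * sX := by rw [e1]
  -- global balance
  have hsum : d₁ * sY = d₂ * sX := by
    have h1 : Rx.card = ∑ c ∈ Rx.image q, (Rx.filter (fun z => q z = c)).card :=
      Finset.card_eq_sum_card_fiberwise fun z hz => Finset.mem_image_of_mem q hz
    have h2 : Ly.card = ∑ c ∈ Rx.image q, (Ly.filter (fun u => q' u = c)).card :=
      Finset.card_eq_sum_card_fiberwise fun u hu => by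
        rw [himg]; exact Finset.mem_image_of_mem q' hu
    rw [← hRcard, ← hLcard, h1, h2, Finset.sum_mul, Finset.sum_mul]
    exact Finset.sum_congr rfl hfib
  -- the class of (x, y)
  have hyR : y ∈ Rx := (hmemR y).mpr hxy
  have hc₀ : q y ∈ Rx.image q := Finset.mem_image_of_mem q hyR
  have heq := hfib (q y) hc₀
  set a₀ := (Rx.filter (fun z => q z = q y)).card with ha₀def
  set b₀ := (Ly.filter (fun u => q' u = q y)).card with hb₀def
  have hdvd : d₁ ∣ a₀ := by
    have h4 : a₀ * d₂ * sX = d₁ * b₀ * sX := by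
      calc a₀ * d₂ * sX = a₀ * (d₂ * sX) := by ring
        _ = a₀ * (d₁ * sY) := by rw [hsum]
        _ = d₁ * (a₀ * sY) := by ring
        _ = d₁ * (b₀ * sX) := by rw [heq]
        _ = d₁ * b₀ * sX := by ring
    have h5 : a₀ * d₂ = d₁ * b₀ := Nat.eq_of_mul_eq_mul_right hsXpos h4
    exact Nat.Coprime.dvd_of_dvd_mul_right hcop ⟨b₀, h5⟩
  have hle : a₀ ≤ d₁ := hRcard ▸ Finset.card_filter_le _ _
  have hpos : 0 < a₀ :=
    Finset.card_pos.mpr ⟨y, Finset.mem_filter.mpr ⟨hyR, rfl⟩⟩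
  have ha₀ : a₀ = d₁ := Nat.le_antisymm hle (Nat.le_of_dvd hpos hdvd)
  have hall : Rx.filter (fun z => q z = q y) = Rx :=
    Finset.eq_of_subset_of_card_le (Finset.filter_subset _ _)
      (by rw [hRcard, ← ha₀])
  have hy₂mem : y₂ ∈ Rx.filter (fun z => q z = q y) := by
    rw [hall]; exact (hmemR y₂).mpr hxy₂
  have hq₂ : q y₂ = q y := (Finset.mem_filter.mp hy₂mem).2
  obtain ⟨g, hg⟩ := (hqe _ _).mp hq₂
  obtain ⟨hgx, hgy⟩ := hsplit g x y x y₂ hg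
  exact ⟨g, hgx, hgy⟩
end

section
/- Let Δ = (X,Y) be a G-duet with w(Δ) finite, and let T ⊆ X be a finite nonempty block of imprimitivity. Then: (1) w(T) divides w(N(T)); (2) if T ≠ X and w(N(T)) = w(T), then Δ is disconnected; (3) if δ(T) > 0, then w(N(T)) = w(T)·⌈w(Δ)/w(T)⌉. -/
open Pointwise


-- orbit-stabilizer, Nat.card form
lemma aux_orbit_stab {K Y : Type*} [Group K] [MulAction K Y] (y : Y) :
    (MulAction.orbit K y).ncard * Nat.card (MulAction.stabilizer K y) = Nat.card K := by
  rw [← Nat.card_coe_set_eq, ← Nat.card_prod]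
  exact Nat.card_congr (MulAction.orbitProdStabilizerEquivGroup K y)

lemma aux_dvd_orbit {K Y : Type*} [Group K] [MulAction K Y] (m : ℕ) (y : Y)
    (hst : Nat.card (MulAction.stabilizer K y) ∣ m) :
    Nat.card K ∣ m * (MulAction.orbit K y).ncard := by
  obtain ⟨u, hu⟩ := hst
  exact ⟨u, by rw [hu, ← aux_orbit_stab (K := K) y]; ring⟩

lemma aux_dvd {K Y : Type*} [Group K] [Finite K] [MulAction K Y] (m : ℕ)
    (hstab : ∀ y : Y, Nat.card (MulAction.stabilizer K y) ∣ m)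
    (n : ℕ) (S : Set Y) (hS : S.Finite) (hn : S.ncard = n)
    (hinv : ∀ (k : K) (y : Y), y ∈ S → k • y ∈ S) :
    Nat.card K ∣ m * S.ncard := by
  induction n using Nat.strong_induction_on generalizing S with
  | _ n ih =>
    rcases S.eq_empty_or_nonempty with hSe | ⟨y, hy⟩
    · simp [hSe]
    · have hOsub : MulAction.orbit K y ⊆ S := by
        rintro _ ⟨k, rfl⟩; exact hinv k y hy
      have hOfin : (MulAction.orbit K y).Finite := hS.subset hOsub
      have hOne : (MulAction.orbit K y).Nonempty := ⟨y, MulAction.mem_orbit_self y⟩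
      have hsplit : (S \ MulAction.orbit K y).ncard + (MulAction.orbit K y).ncard = S.ncard :=
        Set.ncard_diff_add_ncard_of_subset hOsub hS
      have hlt : (S \ MulAction.orbit K y).ncard < n := by
        have := Set.ncard_pos hOfin |>.mpr hOne
        omega
      have hinv' : ∀ (k : K) (z : Y), z ∈ S \ MulAction.orbit K y →
          k • z ∈ S \ MulAction.orbit K y := by
        rintro k z ⟨hzS, hzO⟩
        refine ⟨hinv k z hzS, fun hmem => hzO ?_⟩
        obtain ⟨k₂, hk₂⟩ := hmem
        exact ⟨k⁻¹ * k₂, by show (k⁻¹ * k₂) • y = z; simp only at hk₂; rw [mul_smul, hk₂, inv_smul_smul]⟩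
      have h1 := ih _ hlt (S \ MulAction.orbit K y) hS.diff rfl hinv'
      have h2 := aux_dvd_orbit m y (hstab y)
      have : m * S.ncard = m * (S \ MulAction.orbit K y).ncard
          + m * (MulAction.orbit K y).ncard := by rw [← Nat.mul_add, hsplit]
      rw [this]
      exact Nat.dvd_add h1 h2

section
variable {G X Y : Type*} [Group G] [MulAction G X] [MulAction G Y]

-- point stabilizers are contained in the block stabilizer
lemma aux_stab_le_block (T : Set X) (hTblock : ∀ g : G, g • T = T ∨ g • T ∩ T = ∅)
    {x : X} (hx : x ∈ T) : MulAction.stabilizer G x ≤ MulAction.stabilizer G T := by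
  intro g hg
  rcases hTblock g with h | h
  · exact h
  · exfalso
    have hmem : g • x ∈ g • T ∩ T := ⟨Set.smul_mem_smul_set hx, by rw [hg]; exact hx⟩
    rw [h] at hmem; exact hmem

-- the block stabilizer is transitive on the block
lemma aux_orbit_block (htX : MulAction.IsPretransitive G X)
    (T : Set X) (hTblock : ∀ g : G, g • T = T ∨ g • T ∩ T = ∅)
    {t : X} (ht : t ∈ T) : MulAction.orbit (MulAction.stabilizer G T) t = T := by
  ext t'
  constructor
  · rintro ⟨h, rfl⟩
    have : (h : G) • t ∈ (h : G) • T := Set.smul_mem_smul_set ht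
    rwa [h.2] at this
  · intro ht'
    obtain ⟨g, hg⟩ := htX.exists_smul_eq t t'
    have hgH : g ∈ MulAction.stabilizer G T := by
      rcases hTblock g with h | h
      · exact h
      · exfalso
        have hmem : t' ∈ g • T ∩ T := ⟨by rw [← hg]; exact Set.smul_mem_smul_set ht, ht'⟩
        rw [h] at hmem; exact hmem
    exact ⟨⟨g, hgH⟩, hg⟩

-- the stabilizer of t inside the block stabilizer is the full stabilizer
noncomputable def auxStabEquiv (T : Set X) (hTblock : ∀ g : G, g • T = T ∨ g • T ∩ T = ∅)
    {t : X} (ht : t ∈ T) :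
    MulAction.stabilizer (MulAction.stabilizer G T) t ≃ MulAction.stabilizer G t where
  toFun s := ⟨(s.1 : G), s.2⟩
  invFun g := ⟨⟨g.1, aux_stab_le_block T hTblock ht g.2⟩, by
    have : (g : G) • t = t := g.2
    exact this⟩
  left_inv s := by ext; rfl
  right_inv g := by ext; rfl

-- weight of the block stabilizer
lemma aux_card_block (htX : MulAction.IsPretransitive G X)
    (T : Set X) (hTblock : ∀ g : G, g • T = T ∨ g • T ∩ T = ∅)
    {t : X} (ht : t ∈ T) (wX : ℕ) (hsX : Nat.card (MulAction.stabilizer G t) = wX) :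
    Nat.card (MulAction.stabilizer G T) = wX * T.ncard := by
  have h1 : Nat.card (MulAction.stabilizer G T)
      = (MulAction.orbit (MulAction.stabilizer G T) t).ncard
        * Nat.card (MulAction.stabilizer (MulAction.stabilizer G T) t) := by
    rw [← Nat.card_coe_set_eq, ← Nat.card_prod]
    exact (Nat.card_congr (MulAction.orbitProdStabilizerEquivGroup (MulAction.stabilizer G T) t)).symm
  rw [h1, aux_orbit_block htX T hTblock ht, Nat.card_congr (auxStabEquiv T hTblock ht), hsX,
    Nat.mul_comm]

-- the stabilizer-in-H of y embeds into the stabilizer of y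
def auxStabHom (H : Subgroup G) (y : Y) :
    MulAction.stabilizer H y →* MulAction.stabilizer G y where
  toFun s := ⟨(s.1 : G), s.2⟩
  map_one' := rfl
  map_mul' _ _ := rfl

lemma auxStabHom_inj (H : Subgroup G) (y : Y) : Function.Injective (auxStabHom H y) := by
  intro a b hab
  have : ((a : H) : G) = ((b : H) : G) := congrArg (fun z => ((z : MulAction.stabilizer G y) : G)) hab
  ext
  exact this

end

/-- The bipartite graph of the duet: vertices `X ⊕ Y`, with an edge between
`x : X` and `y : Y` exactly when `r x y` holds. -/
def duetGraph {X Y : Type*} (r : X → Y → Prop) : SimpleGraph (X ⊕ Y) :=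
  SimpleGraph.fromRel (fun a b => ∃ x y, a = Sum.inl x ∧ b = Sum.inr y ∧ r x y)

theorem statement14 {G X Y : Type*} [Group G] [MulAction G X] [MulAction G Y]
    [Nonempty X] [Nonempty Y]
    (htX : MulAction.IsPretransitive G X) (htY : MulAction.IsPretransitive G Y)
    (r : X → Y → Prop)
    (hr : ∀ (g : G) (x : X) (y : Y), r x y ↔ r (g • x) (g • y))
    (wX wY d : ℕ) (hwX : 0 < wX) (hwY : 0 < wY)
    (hsX : ∀ x : X, Nat.card (MulAction.stabilizer G x) = wX)
    (hsY : ∀ y : Y, Nat.card (MulAction.stabilizer G y) = wY)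
    -- w(Δ) is finite : each N(x) is finite, of weight wY * d
    (hd : ∀ x : X, {y : Y | r x y}.Finite ∧ {y : Y | r x y}.ncard = d)
    (T : Set X) (hTfin : T.Finite) (hTne : T.Nonempty)
    (hTblock : ∀ g : G, g • T = T ∨ g • T ∩ T = ∅) :
    -- (1) w(T) divides w(N(T))
    (wX * T.ncard ∣ wY * {y : Y | ∃ t ∈ T, r t y}.ncard) ∧
    -- (2) if T ≠ X and w(N(T)) = w(T) then Δ is disconnected
    (T ≠ Set.univ → wY * {y : Y | ∃ t ∈ T, r t y}.ncard = wX * T.ncard →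
      ¬ (duetGraph r).Connected) ∧
    -- (3) if δ(T) > 0 then w(N(T)) = w(T)·⌈w(Δ)/w(T)⌉
    (wY * {y : Y | ∃ t ∈ T, r t y}.ncard < wX * T.ncard + wY * d →
      wY * {y : Y | ∃ t ∈ T, r t y}.ncard =
        wX * T.ncard * ((wY * d + wX * T.ncard - 1) / (wX * T.ncard))) := by
  set H := MulAction.stabilizer G T with hH
  set N := {y : Y | ∃ t ∈ T, r t y} with hN
  obtain ⟨t₀, ht₀⟩ := hTne
  -- N is finite
  have hNfin : N.Finite := by
    have : N = ⋃ t ∈ T, {y : Y | r t y} := by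
      ext y; simp [hN, Set.mem_setOf_eq]
    rw [this]
    exact hTfin.biUnion (fun t _ => (hd t).1)
  -- card of H
  have hcardH : Nat.card H = wX * T.ncard :=
    aux_card_block htX T hTblock ht₀ wX (hsX t₀)
  have hTpos : 0 < T.ncard := (Set.ncard_pos hTfin).mpr ⟨t₀, ht₀⟩
  have hHpos : 0 < Nat.card H := by rw [hcardH]; positivity
  haveI hHfin : Finite H := (Nat.card_pos_iff.mp hHpos).2
  -- stabilizers in H divide wY
  have hstabdvd : ∀ y : Y, Nat.card (MulAction.stabilizer H y) ∣ wY := by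
    intro y
    rw [← hsY y]
    exact Subgroup.card_dvd_of_injective (auxStabHom H y) (auxStabHom_inj H y)
  -- N is H-invariant
  have hNinv : ∀ (h : H) (y : Y), y ∈ N → h • y ∈ N := by
    rintro h y ⟨t, ht, hty⟩
    refine ⟨(h : G) • t, ?_, (hr (h : G) t y).mp hty⟩
    have : (h : G) • t ∈ (h : G) • T := Set.smul_mem_smul_set ht
    rwa [h.2] at this
  -- Part 1
  have part1 : wX * T.ncard ∣ wY * N.ncard := by
    rw [← hcardH]
    exact aux_dvd wY hstabdvd N.ncard N hNfin rfl hNinv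
  refine ⟨part1, ?_, ?_⟩
  · -- Part 2
    intro hTneU heq
    -- N is nonempty
    have hNpos : 0 < N.ncard := by
      by_contra h
      push_neg at h
      interval_cases hn : N.ncard
      omega
    obtain ⟨y₀, hy₀⟩ := (Set.ncard_pos hNfin).mp hNpos
    -- key: for every y ∈ N, orbit H y = N and stabilizer G y ≤ H
    have key : ∀ y ∈ N, MulAction.orbit H y = N ∧ MulAction.stabilizer G y ≤ H := by
      intro y hy
      set s := Nat.card (MulAction.stabilizer H y) with hs
      have hOsub : MulAction.orbit H y ⊆ N := by rintro _ ⟨k, rfl⟩; exact hNinv k y hy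
      have hos : (MulAction.orbit H y).ncard * s = wX * T.ncard := by
        rw [← hcardH]; exact aux_orbit_stab y
      have hOle : (MulAction.orbit H y).ncard ≤ N.ncard := Set.ncard_le_ncard hOsub hNfin
      have hOpos : 0 < (MulAction.orbit H y).ncard :=
        (Set.ncard_pos (hNfin.subset hOsub)).mpr ⟨y, MulAction.mem_orbit_self y⟩
      have hsle : s ≤ wY := Nat.le_of_dvd hwY (hstabdvd y)
      have hspos : 0 < s := by
        by_contra h
        push_neg at h
        interval_cases hsc : s
        omega
      -- wY * N.ncard = O.ncard * s ≤ O.ncard * wY ≤ N.ncard * wY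
      have hchain : (MulAction.orbit H y).ncard * s = wY * N.ncard := by omega
      have h1 : (MulAction.orbit H y).ncard * s ≤ (MulAction.orbit H y).ncard * wY :=
        Nat.mul_le_mul_left _ hsle
      have h2 : (MulAction.orbit H y).ncard * wY ≤ N.ncard * wY :=
        Nat.mul_le_mul_right _ hOle
      have hOeq : (MulAction.orbit H y).ncard = N.ncard := by nlinarith
      have hseq : s = wY := by nlinarith
      have hON : MulAction.orbit H y = N :=
        Set.eq_of_subset_of_ncard_le hOsub (le_of_eq hOeq.symm) hNfin
      refine ⟨hON, ?_⟩
      -- stabilizer G y ≤ H from card equality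
      have hbij : Function.Bijective (auxStabHom H y) := by
        haveI : Finite (MulAction.stabilizer G y) := by
          have := hsY y
          exact (Nat.card_pos_iff.mp (by omega)).2
        rw [Nat.bijective_iff_injective_and_card]
        exact ⟨auxStabHom_inj H y, by rw [← hs, hseq, hsY y]⟩
      intro g hg
      obtain ⟨sh, hsh⟩ := hbij.2 ⟨g, hg⟩
      have : ((sh.1 : H) : G) = g := congrArg Subtype.val hsh
      rw [← this]
      exact sh.1.2
    -- key2: neighbors of N are in T
    have key2 : ∀ x y, y ∈ N → r x y → x ∈ T := by
      intro x y hy hxy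
      obtain ⟨t, ht, hty⟩ := hy
      obtain ⟨g, hg⟩ := htX.exists_smul_eq t x
      have hginvy : g⁻¹ • y ∈ N := by
        refine ⟨t, ht, ?_⟩
        have := (hr g⁻¹ x y).mp hxy
        rwa [← hg, inv_smul_smul] at this
      obtain ⟨hON, hstab⟩ := key y (⟨t, ht, hty⟩)
      rw [← hON] at hginvy
      obtain ⟨h, hh⟩ := hginvy
      have hgh : (g * (h : G)) ∈ MulAction.stabilizer G y := by
        have : (g * (h : G)) • y = y := by
          rw [mul_smul]
          simp only at hh
          rw [show ((h : G) • y = g⁻¹ • y) from hh.symm ▸ rfl, smul_inv_smul]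
        exact this
      have hgH : g ∈ H := by
        have := hstab hgh
        have hginH : g * (h : G) * (h : G)⁻¹ ∈ H := H.mul_mem this (H.inv_mem h.2)
        simpa using hginH
      have : x ∈ g • T := by rw [← hg]; exact Set.smul_mem_smul_set ht
      rwa [hgH] at this
    -- disconnectedness
    intro hconn
    obtain ⟨x₁, hx₁⟩ := Set.ne_univ_iff_exists_notMem T |>.mp hTneU
    set S' : Set (X ⊕ Y) := Sum.inl '' T ∪ Sum.inr '' N with hS'
    have hclosed : ∀ a b : X ⊕ Y, (duetGraph r).Adj a b → b ∈ S' → a ∈ S' := by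
      intro a b hab hb
      rw [duetGraph, SimpleGraph.fromRel_adj] at hab
      obtain ⟨-, h | h⟩ := hab
      · obtain ⟨x, y, rfl, rfl, hxy⟩ := h
        rcases hb with ⟨x', hx', hx'e⟩ | ⟨y', hy', hy'e⟩
        · exact absurd hx'e (by simp)
        · have hyy : y' = y := by injection hy'e
          exact Or.inl ⟨x, key2 x y (hyy ▸ hy') hxy, rfl⟩
      · obtain ⟨x, y, rfl, rfl, hxy⟩ := h
        rcases hb with ⟨x', hx', hx'e⟩ | ⟨y', hy', hy'e⟩
        · have hxx : x' = x := by injection hx'e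
          exact Or.inr ⟨y, ⟨x, hxx ▸ hx', hxy⟩, rfl⟩
        · exact absurd hy'e (by simp)
    have hwalk : ∀ (a b : X ⊕ Y), (duetGraph r).Walk a b → b ∈ S' → a ∈ S' := by
      intro a b p
      induction p with
      | nil => exact id
      | cons h p ih => exact fun hb => hclosed _ _ h (ih hb)
    obtain ⟨p⟩ := hconn.preconnected (Sum.inl x₁) (Sum.inl t₀)
    have : Sum.inl x₁ ∈ S' := hwalk _ _ p (Or.inl ⟨t₀, ht₀, rfl⟩)
    rcases this with ⟨x', hx', hx'e⟩ | ⟨y', hy', hy'e⟩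
    · have : x' = x₁ := by injection hx'e
      exact hx₁ (this ▸ hx')
    · exact absurd hy'e (by simp)
  · -- Part 3
    intro hdef
    obtain ⟨k, hk⟩ := part1
    set B := wX * T.ncard with hB
    set A := wY * d with hA
    have hBpos : 0 < B := by positivity
    have hAle : A ≤ B * k := by
      rw [← hk, hA]
      refine Nat.mul_le_mul_left _ ?_
      rw [← (hd t₀).2]
      exact Set.ncard_le_ncard (fun y hy => ⟨t₀, ht₀, hy⟩) hNfin
    have hlt : B * k < B + A := by rw [← hk]; exact hdef
    have hcomm : k * B = B * k := Nat.mul_comm k B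
    have hdiv : (A + B - 1) / B = k := by
      apply le_antisymm
      · have h1 : A + B - 1 < (k + 1) * B := by
          have h2 : (k + 1) * B = k * B + B := by ring
          omega
        exact Nat.lt_succ_iff.mp (Nat.div_lt_iff_lt_mul hBpos |>.mpr h1)
      · rw [Nat.le_div_iff_mul_le hBpos]
        omega
    rw [hk, hdiv]
end

section
/- Let G be a group and let A, B ⊆ G be finite and nonempty, with 1 ∈ B and with B a generating set of G (the subgroup generated by B is all of G). Then either AB = G, or 2|AB| ≥ 2|A| + |B|. -/
open Pointwise

section Olson

variable {G : Type*} [Group G] [DecidableEq G]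

/-- The family of finite "fragment candidates": nonempty `X` with `X*C ≠ G`. -/
private def FF (C X : Finset G) : Prop :=
  X.Nonempty ∧ (↑(X * C) : Set G) ≠ Set.univ

private lemma smul_mul_eq (g : G) (X C : Finset G) : (g • X) * C = g • (X * C) := by
  rw [← Finset.singleton_mul, ← Finset.singleton_mul, mul_assoc]

private lemma coe_univ_of_smul {g : G} {S : Finset G}
    (h : (↑(g • S) : Set G) = Set.univ) : (↑S : Set G) = Set.univ := by
  ext y
  simp only [Set.mem_univ, iff_true]
  have hy : g • y ∈ (↑(g • S) : Set G) := by rw [h]; trivial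
  rw [Finset.coe_smul_finset] at hy
  obtain ⟨z, hz, hzy⟩ := hy
  have : z = y := smul_left_cancel g hzy
  exact this ▸ hz

private lemma FF_smul {C X : Finset G} (g : G) (h : FF C X) : FF C (g • X) := by
  refine ⟨?_, fun hu => h.2 ?_⟩
  · obtain ⟨y, hy⟩ := h.1
    exact ⟨g • y, Finset.mem_smul_finset.mpr ⟨y, hy, rfl⟩⟩
  rw [smul_mul_eq] at hu
  exact coe_univ_of_smul hu

/-- Extract a minimizer `M` of `|X*C| - |X|` over `FF C`, of minimal cardinality. -/
private lemma exists_min (C : Finset G) (h1 : (1 : G) ∈ C) (hne : ∃ X, FF C X) :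
    ∃ M, FF C M ∧ (∀ X, FF C X → (M * C).card + X.card ≤ (X * C).card + M.card) ∧
      ∀ X, FF C X → (X * C).card + M.card ≤ (M * C).card + X.card → M.card ≤ X.card := by
  classical
  have hsub : ∀ X : Finset G, X.card ≤ (X * C).card :=
    fun X => Finset.card_le_card (Finset.subset_mul_left X h1)
  set s : Set ℕ := {n | ∃ X, FF C X ∧ (X * C).card = X.card + n} with hs
  have hsne : s.Nonempty := by
    obtain ⟨X, hX⟩ := hne
    exact ⟨(X * C).card - X.card, X, hX, by have := hsub X; omega⟩
  set κ := sInf s with hκ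
  have hκmem : κ ∈ s := Nat.sInf_mem hsne
  set t : Set ℕ := {n | ∃ X, FF C X ∧ (X * C).card = X.card + κ ∧ X.card = n} with ht
  have htne : t.Nonempty := by
    obtain ⟨X, hX, hXκ⟩ := hκmem
    exact ⟨X.card, X, hX, hXκ, rfl⟩
  obtain ⟨M, hMF, hMκ, hMα⟩ := Nat.sInf_mem htne
  have hκle : ∀ X, FF C X → X.card + κ ≤ (X * C).card := by
    intro X hX
    have h1' : κ ≤ (X * C).card - X.card :=
      Nat.sInf_le ⟨X, hX, by have := hsub X; omega⟩
    have := hsub X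
    omega
  refine ⟨M, hMF, ?_, ?_⟩
  · intro X hX
    have := hκle X hX
    omega
  · intro X hX hle
    have h2 := hκle X hX
    have h3 : (X * C).card = X.card + κ := by omega
    have : sInf t ≤ X.card := Nat.sInf_le ⟨X, hX, h3, rfl⟩
    omega

/-- Key lemma (Hamidoune): if the minimizer is "small" relative to `G`,
then `2κ ≥ |C|`. -/
private lemma keylemma (C : Finset G) (h1 : (1 : G) ∈ C)
    (hgen : Subgroup.closure (C : Set G) = ⊤)
    (M : Finset G) (hM : FF C M)
    (hκ : ∀ X, FF C X → (M * C).card + X.card ≤ (X * C).card + M.card)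
    (hα : ∀ X, FF C X → (X * C).card + M.card ≤ (M * C).card + X.card → M.card ≤ X.card)
    (hbig : (Set.univ : Set G).Finite → M.card + (M * C).card ≤ Nat.card G) :
    C.card + 2 * M.card ≤ 2 * (M * C).card := by
  classical
  obtain ⟨m0, hm0⟩ := hM.1
  set M₀ := m0⁻¹ • M with hM₀def
  have hcard₀ : M₀.card = M.card := Finset.card_smul_finset _ _
  have hcardP₀ : (M₀ * C).card = (M * C).card := by
    rw [smul_mul_eq, Finset.card_smul_finset]
  have hFFM₀ : FF C M₀ := FF_smul _ hM
  have h1M : (1 : G) ∈ M₀ := by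
    rw [hM₀def, Finset.mem_smul_finset]
    exact ⟨m0, hm0, by simp⟩
  -- Step 1: M₀ is invariant under left-translation by its own elements
  have key : ∀ x ∈ M₀, x • M₀ = M₀ := by
    intro x hx
    set N := x • M₀ with hNdef
    have hFFN : FF C N := FF_smul _ hFFM₀
    have hcardN : N.card = M.card := by rw [hNdef, Finset.card_smul_finset, hcard₀]
    have hcardPN : (N * C).card = (M * C).card := by
      rw [hNdef, smul_mul_eq, Finset.card_smul_finset, hcardP₀]
    have hxN : x ∈ N := by
      rw [hNdef, Finset.mem_smul_finset]
      exact ⟨1, h1M, by simp⟩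
    have hxI : x ∈ M₀ ∩ N := Finset.mem_inter.mpr ⟨hx, hxN⟩
    have hInterF : FF C (M₀ ∩ N) := by
      refine ⟨⟨x, hxI⟩, fun hu => hFFM₀.2 ?_⟩
      have hsub : (M₀ ∩ N) * C ⊆ M₀ * C :=
        Finset.mul_subset_mul_right Finset.inter_subset_left
      apply Set.eq_univ_of_univ_subset
      rw [← hu]
      exact_mod_cast hsub
    have hInterκ := hκ _ hInterF
    have hIpos : 1 ≤ (M₀ ∩ N).card := Finset.card_pos.mpr ⟨x, hxI⟩
    -- submodularity ingredients
    have hUeq : (M₀ ∪ N) * C = (M₀ * C) ∪ (N * C) := Finset.union_mul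
    have hIsub : (M₀ ∩ N) * C ⊆ (M₀ * C) ∩ (N * C) := by
      apply Finset.subset_inter
      · exact Finset.mul_subset_mul_right Finset.inter_subset_left
      · exact Finset.mul_subset_mul_right Finset.inter_subset_right
    have hsubmod : ((M₀ ∪ N) * C).card + ((M₀ ∩ N) * C).card
        ≤ (M₀ * C).card + (N * C).card := by
      rw [hUeq]
      have h2 := Finset.card_le_card hIsub
      have h3 := Finset.card_union_add_card_inter (M₀ * C) (N * C)
      omega
    have hcardMN := Finset.card_union_add_card_inter M₀ N
    by_cases hU : (↑((M₀ ∪ N) * C) : Set G) = Set.univ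
    · exfalso
      have hfin : (Set.univ : Set G).Finite := by
        rw [← hU]; exact Finset.finite_toSet _
      have hcardG : Nat.card G = ((M₀ ∪ N) * C).card := by
        rw [← Set.ncard_univ, ← hU, Set.ncard_coe_finset]
      have hb := hbig hfin
      omega
    · have hUnionF : FF C (M₀ ∪ N) := ⟨⟨x, Finset.mem_union_left _ hx⟩, hU⟩
      have hUκ := hκ _ hUnionF
      have hαI := hα _ hInterF (by omega)
      have hIM : M₀ ∩ N = M₀ :=
        Finset.eq_of_subset_of_card_le Finset.inter_subset_left (by omega)
      have hIN : M₀ ∩ N = N :=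
        Finset.eq_of_subset_of_card_le Finset.inter_subset_right (by omega)
      rw [← hIN, hIM]
  -- Step 2: M₀ is a subgroup (as a finset)
  have hmul : ∀ a ∈ M₀, ∀ b ∈ M₀, a * b ∈ M₀ := by
    intro a ha b hb
    rw [← key a ha, Finset.mem_smul_finset]
    exact ⟨b, hb, rfl⟩
  have hinv : ∀ a ∈ M₀, a⁻¹ ∈ M₀ := by
    intro a ha
    have h1' : (1 : G) ∈ a • M₀ := by rw [key a ha]; exact h1M
    rw [Finset.mem_smul_finset] at h1'
    obtain ⟨b, hb, hab⟩ := h1'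
    have hab' : a * b = 1 := hab
    have hba : a⁻¹ = b := (eq_inv_of_mul_eq_one_right hab').symm
    rw [hba]
    exact hb
  -- Step 3: final counting with the finite subgroup H := M₀
  by_cases hCH : ∀ c ∈ C, c ∈ M₀
  · exfalso
    let K : Subgroup G :=
      { carrier := ↑M₀
        one_mem' := h1M
        mul_mem' := fun ha hb => hmul _ ha _ hb
        inv_mem' := fun ha => hinv _ ha }
    have hle : Subgroup.closure (C : Set G) ≤ K :=
      (Subgroup.closure_le K).mpr (fun c hc => hCH c hc)
    rw [hgen] at hle
    apply hFFM₀.2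
    apply Set.eq_univ_of_forall
    intro g
    have hgM : g ∈ M₀ := hle (Subgroup.mem_top g)
    have hg1 : g * 1 ∈ M₀ * C := Finset.mul_mem_mul hgM h1
    rw [mul_one] at hg1
    exact hg1
  · push_neg at hCH
    obtain ⟨c, hc, hcM⟩ := hCH
    have hsub2 : C ⊆ M₀ * C := Finset.subset_mul_right C h1M
    have hcS : M₀ * {c} ⊆ M₀ * C :=
      Finset.mul_subset_mul_left (Finset.singleton_subset_iff.mpr hc)
    have hdisj : Disjoint M₀ (M₀ * {c}) := by
      rw [Finset.disjoint_left]
      intro a haM haMc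
      rw [Finset.mem_mul] at haMc
      obtain ⟨h, hh, d, hd, hhc⟩ := haMc
      rw [Finset.mem_singleton] at hd
      rw [hd] at hhc
      apply hcM
      have hca : c = h⁻¹ * a := by rw [← hhc]; group
      rw [hca]
      exact hmul _ (hinv _ hh) _ haM
    have hcard1 : (M₀ * {c}).card = M₀.card := by
      have himg : M₀ * {c} = M₀.image (· * c) := by
        ext y
        simp only [Finset.mem_mul, Finset.mem_image, Finset.mem_singleton]
        constructor
        · rintro ⟨u, hu, v, hv, huv⟩
          exact ⟨u, hu, hv ▸ huv⟩
        · rintro ⟨u, hu, huv⟩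
          exact ⟨u, hu, c, rfl, huv⟩
      rw [himg]
      exact Finset.card_image_of_injective _ (mul_left_injective c)
    have hunion : M₀ ∪ (M₀ * {c}) ⊆ M₀ * C :=
      Finset.union_subset (Finset.subset_mul_left M₀ h1) hcS
    have h2H : M₀.card + (M₀ * {c}).card ≤ (M₀ * C).card := by
      rw [← Finset.card_union_of_disjoint hdisj]
      exact Finset.card_le_card hunion
    have hCcard : C.card ≤ (M₀ * C).card := Finset.card_le_card hsub2
    omega

/-- Duality: the complement of `M*C` is a fragment candidate for `C⁻¹`. -/
private lemma dual [Fintype G] (C M : Finset G) (hMne : M.Nonempty)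
    (hMC : (↑(M * C) : Set G) ≠ Set.univ) :
    ∃ Y : Finset G, FF C⁻¹ Y ∧ (Y * C⁻¹).card + M.card ≤ Fintype.card G ∧
      Y.card + (M * C).card = Fintype.card G := by
  classical
  set Y := (M * C)ᶜ with hY
  have hYsub : Y * C⁻¹ ⊆ Mᶜ := by
    intro x hx
    rw [Finset.mem_mul] at hx
    obtain ⟨y, hy, z, hz, hyz⟩ := hx
    rw [Finset.mem_inv] at hz
    obtain ⟨c, hc, hcz⟩ := hz
    rw [Finset.mem_compl]
    intro hxM
    have hyY : y ∈ Y := hy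
    rw [hY, Finset.mem_compl] at hyY
    apply hyY
    have : y = x * c := by rw [← hyz, ← hcz]; group
    rw [this]
    exact Finset.mul_mem_mul hxM hc
  refine ⟨Y, ⟨?_, ?_⟩, ?_, ?_⟩
  · -- Y nonempty
    obtain ⟨g, hg⟩ := (Set.ne_univ_iff_exists_notMem _).mp hMC
    exact ⟨g, Finset.mem_compl.mpr (fun h => hg (Finset.mem_coe.mpr h))⟩
  · -- Y * C⁻¹ ≠ univ
    intro hu
    obtain ⟨m, hm⟩ := hMne
    have : m ∈ (↑(Y * C⁻¹) : Set G) := by rw [hu]; trivial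
    have : m ∈ Mᶜ := hYsub this
    rw [Finset.mem_compl] at this
    exact this hm
  · -- card bound
    have h2 := Finset.card_le_card hYsub
    have h3 := Finset.card_add_card_compl M
    omega
  · -- card equality
    have h3 := Finset.card_add_card_compl (M * C)
    have h4 : Y.card = (M * C)ᶜ.card := by rw [hY]
    omega

/-- The Finset version of Olson's theorem. -/
private theorem finmain (B : Finset G) (h1 : (1 : G) ∈ B)
    (hgen : Subgroup.closure (B : Set G) = ⊤)
    (A : Finset G) (hAne : A.Nonempty) (hAB : (↑(A * B) : Set G) ≠ Set.univ) :
    2 * A.card + B.card ≤ 2 * (A * B).card := by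
  classical
  have hFFA : FF B A := ⟨hAne, hAB⟩
  obtain ⟨M, hM, hκ, hα⟩ := exists_min B h1 ⟨A, hFFA⟩
  have hAineq := hκ A hFFA
  by_cases hbig : (Set.univ : Set G).Finite → M.card + (M * B).card ≤ Nat.card G
  · have h2κ := keylemma B h1 hgen M hM hκ hα hbig
    omega
  · push_neg at hbig
    obtain ⟨hfin, hlt⟩ := hbig
    have hFinG : Finite G := Set.finite_univ_iff.mp hfin
    cases nonempty_fintype G
    have hNG : Nat.card G = Fintype.card G := Nat.card_eq_fintype_card
    rw [hNG] at hlt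
    -- switch to B⁻¹
    have h1' : (1 : G) ∈ B⁻¹ := by
      rw [Finset.mem_inv]
      exact ⟨1, h1, inv_one⟩
    have hgen' : Subgroup.closure (↑(B⁻¹) : Set G) = ⊤ := by
      rw [Finset.coe_inv, Subgroup.closure_inv]
      exact hgen
    obtain ⟨Y, hYF, hY1, hY2⟩ := dual B M hM.1 hM.2
    obtain ⟨N, hN, hκ', hα'⟩ := exists_min B⁻¹ h1' ⟨Y, hYF⟩
    obtain ⟨Z, hZF, hZ1, hZ2⟩ := dual B⁻¹ N hN.1 hN.2
    simp only [inv_inv] at hZF hZ1 hZ2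
    -- arithmetic facts
    have f1 := hκ Z hZF          -- |MB| + |Z| ≤ |ZB| + |M|
    have f2 := hκ' Y hYF         -- |NB⁻¹| + |Y| ≤ |YB⁻¹| + |N|
    have f3 : N.card ≤ Y.card := by
      apply hα' Y hYF
      omega
    have hbig' : (Set.univ : Set G).Finite → N.card + (N * B⁻¹).card ≤ Nat.card G := by
      intro _
      rw [hNG]
      omega
    have h2κ' := keylemma B⁻¹ h1' hgen' N hN hκ' hα' hbig'
    have hBinv : (B⁻¹).card = B.card := Finset.card_inv B
    omega

end Olson

theorem statement16 {G : Type*} [Group G] (A B : Set G)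
    (hA : A.Finite) (hB : B.Finite) (hAne : A.Nonempty) (hBne : B.Nonempty)
    (h1 : (1 : G) ∈ B) (hgen : Subgroup.closure B = ⊤) :
    A * B = Set.univ ∨ 2 * A.ncard + B.ncard ≤ 2 * (A * B).ncard := by
  classical
  by_cases h : A * B = Set.univ
  · exact Or.inl h
  · right
    set A' := hA.toFinset with hA'
    set B' := hB.toFinset with hB'
    have hcoeA : (↑A' : Set G) = A := hA.coe_toFinset
    have hcoeB : (↑B' : Set G) = B := hB.coe_toFinset
    have hABeq : (↑(A' * B') : Set G) = A * B := by
      rw [Finset.coe_mul, hcoeA, hcoeB]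
    have h1' : (1 : G) ∈ B' := by
      rw [← Finset.mem_coe, hcoeB]
      exact h1
    have hAne' : A'.Nonempty := by
      obtain ⟨a, ha⟩ := hAne
      exact ⟨a, by rw [← Finset.mem_coe, hcoeA]; exact ha⟩
    have hmain := finmain B' h1' (by rw [hcoeB]; exact hgen) A' hAne'
      (by rw [hABeq]; exact h)
    have e1 : A.ncard = A'.card := by rw [← hcoeA, Set.ncard_coe_finset]
    have e2 : B.ncard = B'.card := by rw [← hcoeB, Set.ncard_coe_finset]
    have e3 : (A * B).ncard = (A' * B').card := by rw [← hABeq, Set.ncard_coe_finset]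
    omega
end

section
/- Let Δ = (X,Y) be a G-duet with w(Δ) finite and positive (i.e. the relation r is nonempty), and let A ⊆ X be finite and nonempty such that the only block of imprimitivity of X containing A is X itself, and such that N(A) ≠ Y. Then 2·δ(A) ≤ w(A); moreover, if G is finite then 3·δ(A) ≤ |G|. -/
open Pointwise

open Set

namespace Duet17

variable {G : Type*} [Group G]

/-- membership in the family of "incomplete" finite sets for relation set `C`. -/
def QQ (C V : Set G) : Prop := V.Finite ∧ V.Nonempty ∧ V * C ≠ Set.univ

/-- connectivity: minimal boundary increment. -/
noncomputable def kap (C : Set G) : ℕ :=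
  sInf {n | ∃ V : Set G, QQ C V ∧ (V * C).ncard = V.ncard + n}

lemma ncard_smul (g : G) (s : Set G) : (g • s).ncard = s.ncard := by
  rw [← Set.image_smul]; exact Set.ncard_image_of_injective _ (MulAction.injective g)

lemma ncard_inv (s : Set G) : s⁻¹.ncard = s.ncard := by
  rw [← Set.image_inv_eq_inv]; exact Set.ncard_image_of_injective _ inv_injective

lemma smul_ne_univ {g : G} {s : Set G} (h : s ≠ univ) : g • s ≠ univ := by
  intro hc
  apply h
  have := congrArg (fun t => g⁻¹ • t) hc
  simpa [smul_smul] using this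

lemma QQ.smul {C V : Set G} (h : QQ C V) (g : G) : QQ C (g • V) :=
  ⟨h.1.smul_set, h.2.1.smul_set, by
    rw [smul_mul_assoc]
    exact smul_ne_univ h.2.2⟩

lemma beta_mem {C V : Set G} (hCfin : C.Finite) (h1 : (1:G) ∈ C) (hV : QQ C V) :
    ∃ n, (V * C).ncard = V.ncard + n ∧ kap C ≤ n := by
  have hsub : V ⊆ V * C := Set.subset_mul_left V h1
  have hfin : (V * C).Finite := hV.1.mul hCfin
  have hle : V.ncard ≤ (V * C).ncard := Set.ncard_le_ncard hsub hfin
  refine ⟨(V * C).ncard - V.ncard, by omega, Nat.sInf_le ⟨V, hV, by omega⟩⟩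

lemma grow {C V : Set G} (hCfin : C.Finite) (h1 : (1:G) ∈ C) (hV : QQ C V) :
    V.ncard + kap C ≤ (V * C).ncard := by
  obtain ⟨n, hn, hk⟩ := beta_mem hCfin h1 hV
  omega

lemma frag_exists {C : Set G} (hCfin : C.Finite) (h1 : (1:G) ∈ C)
    (hne : ∃ V, QQ C V) :
    ∃ V, QQ C V ∧ (V * C).ncard = V.ncard + kap C := by
  obtain ⟨V, hV⟩ := hne
  obtain ⟨n, hn, -⟩ := beta_mem hCfin h1 hV
  have : {n | ∃ V : Set G, QQ C V ∧ (V * C).ncard = V.ncard + n}.Nonempty := ⟨n, V, hV, hn⟩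
  exact Nat.sInf_mem this

lemma atom_exists {C : Set G} (hCfin : C.Finite) (h1 : (1:G) ∈ C)
    (hne : ∃ V, QQ C V) :
    ∃ K : Set G, QQ C K ∧ (K * C).ncard = K.ncard + kap C ∧
      (∀ V, QQ C V → (V * C).ncard = V.ncard + kap C → K.ncard ≤ V.ncard) ∧ (1:G) ∈ K := by
  obtain ⟨V₀, hV₀, hfrag₀⟩ := frag_exists hCfin h1 hne
  have hane : {n | ∃ V : Set G, (QQ C V ∧ (V * C).ncard = V.ncard + kap C) ∧ V.ncard = n}.Nonempty :=
    ⟨V₀.ncard, V₀, ⟨hV₀, hfrag₀⟩, rfl⟩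
  obtain ⟨K₀, ⟨hK₀, hfragK₀⟩, hcard⟩ := Nat.sInf_mem hane
  obtain ⟨k₀, hk₀⟩ := hK₀.2.1
  refine ⟨k₀⁻¹ • K₀, hK₀.smul k₀⁻¹, ?_, ?_, ?_⟩
  · rw [smul_mul_assoc, ncard_smul, ncard_smul]; exact hfragK₀
  · intro V hV hfrag
    rw [ncard_smul, hcard]
    exact Nat.sInf_le ⟨V, ⟨hV, hfrag⟩, rfl⟩
  · exact ⟨k₀, hk₀, inv_mul_cancel k₀⟩

lemma rev_mem {C V : Set G} [Finite G] (hV : QQ C V) :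
    QQ C⁻¹ (V * C)ᶜ ∧ (V * C)ᶜ * C⁻¹ ⊆ Vᶜ := by
  have hsub : (V * C)ᶜ * C⁻¹ ⊆ Vᶜ := by
    rintro x ⟨w, hw, b, hb, rfl⟩
    intro hx
    have hb' : b⁻¹ ∈ C := by simpa using hb
    have : (w * b) * b⁻¹ ∈ V * C := Set.mul_mem_mul hx hb'
    rw [mul_assoc, mul_inv_cancel, mul_one] at this
    exact hw this
  refine ⟨⟨Set.toFinite _, Set.nonempty_compl.mpr hV.2.2, fun hc => ?_⟩, hsub⟩
  have : Vᶜ = univ := univ_subset_iff.mp (hc ▸ hsub)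
  obtain ⟨v, hv⟩ := hV.2.1
  have : v ∈ Vᶜ := this ▸ mem_univ v
  exact this hv

lemma kap_rev_le {C : Set G} [Finite G] (hCfin : C.Finite) (h1 : (1:G) ∈ C)
    (hne : ∃ V, QQ C V) : kap C⁻¹ ≤ kap C := by
  obtain ⟨V, hV, hfrag⟩ := frag_exists hCfin h1 hne
  obtain ⟨hWQ, hWsub⟩ := rev_mem hV
  have h1' : (1:G) ∈ C⁻¹ := by simpa using h1
  have hgrow := grow (Set.toFinite C⁻¹) h1' hWQ
  have hle : ((V * C)ᶜ * C⁻¹).ncard ≤ Vᶜ.ncard := Set.ncard_le_ncard hWsub (Set.toFinite _)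
  have e1 : (V * C).ncard + (V * C)ᶜ.ncard = Nat.card G := Set.ncard_add_ncard_compl _
  have e2 : V.ncard + Vᶜ.ncard = Nat.card G := Set.ncard_add_ncard_compl _
  omega


/-- One-sided main inequality, given an atom all whose "union translates" stay incomplete. -/
lemma main_ineq {C K : Set G} (hCfin : C.Finite) (h1 : (1:G) ∈ C)
    (hgen : ∀ H : Subgroup G, C ⊆ (H : Set G) → H = ⊤)
    (hK : QQ C K) (hKfrag : (K * C).ncard = K.ncard + kap C)
    (hKmin : ∀ V, QQ C V → (V * C).ncard = V.ncard + kap C → K.ncard ≤ V.ncard)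
    (hK1 : (1:G) ∈ K)
    (hbad : ∀ g ∈ K, (K ∪ g • K) * C ≠ Set.univ) :
    C.ncard ≤ 2 * kap C := by
  -- step 1: K is stable under left multiplication by its elements
  have hstable : ∀ g ∈ K, g • K = K := by
    intro g hg
    have hgK : QQ C (g • K) := hK.smul g
    have hIne : (K ∩ g • K).Nonempty := ⟨g, hg, ⟨1, hK1, by simp⟩⟩
    have hIQ : QQ C (K ∩ g • K) := by
      refine ⟨hK.1.subset inter_subset_left, hIne, fun hc => hK.2.2 ?_⟩
      exact univ_subset_iff.mp (hc ▸ Set.mul_subset_mul_right inter_subset_left)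
    have hUQ : QQ C (K ∪ g • K) := ⟨hK.1.union hgK.1, hK.2.1.mono subset_union_left, hbad g hg⟩
    have hIgrow := grow hCfin h1 hIQ
    have hUgrow := grow hCfin h1 hUQ
    -- submodularity
    have hU : (K ∪ g • K) * C = (K * C) ∪ (g • K) * C := Set.union_mul
    have hIsub : (K ∩ g • K) * C ⊆ (K * C) ∩ ((g • K) * C) :=
      subset_inter (Set.mul_subset_mul_right inter_subset_left)
        (Set.mul_subset_mul_right inter_subset_right)
    have hKCfin : (K * C).Finite := hK.1.mul hCfin
    have hgKCfin : ((g • K) * C).Finite := hgK.1.mul hCfin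
    have hsubmod : ((K ∪ g • K) * C).ncard + ((K ∩ g • K) * C).ncard ≤
        (K * C).ncard + ((g • K) * C).ncard := by
      rw [hU, ← Set.ncard_union_add_ncard_inter (K * C) ((g • K) * C) hKCfin hgKCfin]
      exact Nat.add_le_add le_rfl (Set.ncard_le_ncard hIsub (hKCfin.inter_of_left _))
    have hgKC : ((g • K) * C).ncard = (K * C).ncard := by
      rw [smul_mul_assoc, ncard_smul]
    have hUI : (K ∪ g • K).ncard + (K ∩ g • K).ncard = K.ncard + (g • K).ncard :=
      Set.ncard_union_add_ncard_inter _ _ hK.1 hgK.1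
    have hgKcard : (g • K).ncard = K.ncard := ncard_smul g K
    -- squeeze: the intersection is a fragment
    have hIfrag : ((K ∩ g • K) * C).ncard = (K ∩ g • K).ncard + kap C := by omega
    have hIKcard : K.ncard ≤ (K ∩ g • K).ncard := hKmin _ hIQ hIfrag
    have hIK : K ∩ g • K = K :=
      Set.eq_of_subset_of_ncard_le inter_subset_left hIKcard hK.1
    have hsub : K ⊆ g • K := hIK.symm.subset.trans inter_subset_right
    exact (Set.eq_of_subset_of_ncard_le hsub (by omega) (hgK.1)).symm
  -- step 2: K is (the carrier of) a subgroup
  have hmul : ∀ a ∈ K, ∀ b ∈ K, a * b ∈ K := by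
    intro a ha b hb
    have : a * b ∈ a • K := ⟨b, hb, rfl⟩
    rwa [hstable a ha] at this
  have hinv : ∀ a ∈ K, a⁻¹ ∈ K := by
    intro a ha
    have h1' : (1:G) ∈ a • K := by rw [hstable a ha]; exact hK1
    rw [Set.mem_smul_set] at h1'
    obtain ⟨k, hk, hk1⟩ := h1'
    rw [smul_eq_mul] at hk1
    have : k = a⁻¹ := eq_inv_of_mul_eq_one_right hk1
    rwa [this] at hk
  set H : Subgroup G := Subgroup.mk
    (Submonoid.mk (Subsemigroup.mk K (fun {a b} ha hb => hmul a ha b hb)) hK1)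
    (fun {a} ha => hinv a ha) with hH
  -- step 3: C is not inside K
  have hCK : ¬ C ⊆ K := by
    intro hCsub
    have : H = ⊤ := hgen H hCsub
    have hKuniv : K = univ := by
      have h2 := congrArg (fun (H : Subgroup G) => (H : Set G)) this
      simpa [hH, Subgroup.coe_top] using h2
    apply hK.2.2
    apply univ_subset_iff.mp
    intro x _
    exact ⟨x, hKuniv ▸ mem_univ x, 1, h1, mul_one x⟩
  obtain ⟨b', hb'C, hb'K⟩ := not_subset.mp hCK
  -- step 4: |K| ≤ kap C
  have hdisj : Disjoint K (K * {b'}) := by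
    rw [Set.disjoint_left]
    rintro x hxK ⟨k, hk, b, hb, rfl⟩
    rw [mem_singleton_iff] at hb
    subst hb
    exact hb'K (by simpa using hmul _ (hinv _ hk) _ hxK)
  have hKb' : (K * {b'}).ncard = K.ncard := by
    rw [Set.mul_singleton]
    exact Set.ncard_image_of_injective _ (mul_left_injective b')
  have hsubU : K ∪ K * {b'} ⊆ K * C := by
    apply union_subset (Set.subset_mul_left K h1)
    exact Set.mul_subset_mul_left (singleton_subset_iff.mpr hb'C)
  have hcardU : (K ∪ K * {b'}).ncard = K.ncard + K.ncard := by
    rw [Set.ncard_union_eq hdisj hK.1 (hK.1.mul (finite_singleton b')), hKb']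
  have hKle : K.ncard + K.ncard ≤ (K * C).ncard := by
    rw [← hcardU]
    exact Set.ncard_le_ncard hsubU (hK.1.mul hCfin)
  -- step 5: |C| ≤ |K * C|
  have hCle : C.ncard ≤ (K * C).ncard := by
    have : C ⊆ K * C := by
      intro c hc
      exact ⟨1, hK1, c, hc, one_mul c⟩
    exact Set.ncard_le_ncard this (hK.1.mul hCfin)
  omega


/-- In the finite case, if the atom is not larger than every reverse fragment,
the "bad case" is impossible. -/
lemma bad_kill {C K : Set G} [Finite G] (hCfin : C.Finite) (h1 : (1:G) ∈ C)
    (hK : QQ C K) (hKfrag : (K * C).ncard = K.ncard + kap C)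
    (hK1 : (1:G) ∈ K)
    (hsmall : ∀ W, QQ C⁻¹ W → (W * C⁻¹).ncard = W.ncard + kap C⁻¹ → K.ncard ≤ W.ncard)
    {g : G} (hg : g ∈ K) (hU : (K ∪ g • K) * C = Set.univ) : False := by
  have h1' : (1:G) ∈ C⁻¹ := by simpa using h1
  have hQne : ∃ V, QQ C V := ⟨K, hK⟩
  -- kap C = kap C⁻¹
  have hQne' : ∃ W, QQ C⁻¹ W := ⟨(K * C)ᶜ, (rev_mem hK).1⟩
  have hk1 : kap C⁻¹ ≤ kap C := kap_rev_le hCfin h1 hQne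
  have hk2 : kap C ≤ kap C⁻¹ := by
    have := kap_rev_le (C := C⁻¹) (Set.toFinite _) h1' hQne'
    rwa [inv_inv] at this
  -- F := (K * C)ᶜ is a reverse fragment
  obtain ⟨hFQ, hFsub⟩ := rev_mem hK
  have hgrowF := grow (Set.toFinite C⁻¹) h1' hFQ
  have hleF : ((K * C)ᶜ * C⁻¹).ncard ≤ Kᶜ.ncard := Set.ncard_le_ncard hFsub (Set.toFinite _)
  have e1 : (K * C).ncard + (K * C)ᶜ.ncard = Nat.card G := Set.ncard_add_ncard_compl _
  have e2 : K.ncard + Kᶜ.ncard = Nat.card G := Set.ncard_add_ncard_compl _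
  have hFfrag : ((K * C)ᶜ * C⁻¹).ncard = (K * C)ᶜ.ncard + kap C⁻¹ := by omega
  have hKF : K.ncard ≤ (K * C)ᶜ.ncard := hsmall _ hFQ hFfrag
  -- the intersection K ∩ g•K
  have hgK : QQ C (g • K) := hK.smul g
  have hIne : (K ∩ g • K).Nonempty := ⟨g, hg, ⟨1, hK1, by simp⟩⟩
  have hIQ : QQ C (K ∩ g • K) := by
    refine ⟨hK.1.subset inter_subset_left, hIne, fun hc => hK.2.2 ?_⟩
    exact univ_subset_iff.mp (hc ▸ Set.mul_subset_mul_right inter_subset_left)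
  have hIgrow := grow hCfin h1 hIQ
  have hIpos : 1 ≤ (K ∩ g • K).ncard := by
    rw [Nat.one_le_iff_ne_zero]
    exact fun hc => hIne.ne_empty ((Set.ncard_eq_zero (hK.1.subset inter_subset_left)).mp hc)
  -- union inequality
  have hUu : (K ∪ g • K) * C = (K * C) ∪ (g • K) * C := Set.union_mul
  have hIsub : (K ∩ g • K) * C ⊆ (K * C) ∩ ((g • K) * C) :=
    subset_inter (Set.mul_subset_mul_right inter_subset_left)
      (Set.mul_subset_mul_right inter_subset_right)
  have hKCfin : (K * C).Finite := hK.1.mul hCfin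
  have hgKCfin : ((g • K) * C).Finite := hgK.1.mul hCfin
  have huniv : ((K * C) ∪ (g • K) * C).ncard = Nat.card G := by
    rw [← hUu, hU, Set.ncard_univ]
  have hie : ((K * C) ∪ (g • K) * C).ncard + ((K * C) ∩ ((g • K) * C)).ncard
      = (K * C).ncard + ((g • K) * C).ncard :=
    Set.ncard_union_add_ncard_inter _ _ hKCfin hgKCfin
  have hImono : ((K ∩ g • K) * C).ncard ≤ ((K * C) ∩ ((g • K) * C)).ncard :=
    Set.ncard_le_ncard hIsub (hKCfin.inter_of_left _)
  have hgKC : ((g • K) * C).ncard = (K * C).ncard := by rw [smul_mul_assoc, ncard_smul]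
  omega

/-- The core Hamidoune–Olson type theorem. -/
theorem core {B T : Set G} (hBfin : B.Finite) (hB1 : (1:G) ∈ B)
    (hgen : ∀ H : Subgroup G, B ⊆ (H : Set G) → H = ⊤)
    (hTfin : T.Finite) (hTne : T.Nonempty) (hTB : T * B ≠ Set.univ) :
    2 * T.ncard + B.ncard ≤ 2 * (T * B).ncard := by
  have hQT : QQ B T := ⟨hTfin, hTne, hTB⟩
  have hQne : ∃ V, QQ B V := ⟨T, hQT⟩
  have hBC : B.ncard ≤ 2 * kap B := by
    obtain ⟨K, hK, hKfrag, hKmin, hK1⟩ := atom_exists hBfin hB1 hQne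
    cases finite_or_infinite G with
    | inr hinf =>
      refine main_ineq hBfin hB1 hgen hK hKfrag hKmin hK1 ?_
      intro g hg hc
      have huf : (Set.univ : Set G).Finite := hc ▸ ((hK.1.union (hK.1.smul_set)).mul hBfin)
      haveI : Finite G := Set.finite_univ_iff.mp huf
      haveI : Infinite G := hinf
      exact not_finite G
    | inl hfin =>
      haveI : Finite G := hfin
      have h1' : (1:G) ∈ B⁻¹ := by simpa using hB1
      have hQne' : ∃ W, QQ B⁻¹ W := ⟨(T * B)ᶜ, (rev_mem hQT).1⟩
      obtain ⟨K', hK', hK'frag, hK'min, hK'1⟩ := atom_exists (Set.toFinite B⁻¹) h1' hQne'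
      rcases le_total K.ncard K'.ncard with hle | hle
      · refine main_ineq hBfin hB1 hgen hK hKfrag hKmin hK1 ?_
        intro g hg hc
        exact bad_kill hBfin hB1 hK hKfrag hK1
          (fun W hW hWfrag => le_trans hle (hK'min W hW hWfrag)) hg hc
      · have hgen' : ∀ H : Subgroup G, B⁻¹ ⊆ (H : Set G) → H = ⊤ := by
          intro H hsub
          apply hgen H
          intro b hb
          have : b⁻¹ ∈ B⁻¹ := by simpa using hb
          simpa using H.inv_mem (hsub this)
        have hmain : B⁻¹.ncard ≤ 2 * kap B⁻¹ := by
          refine main_ineq (Set.toFinite B⁻¹) h1' hgen' hK' hK'frag hK'min hK'1 ?_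
          intro g hg hc
          refine bad_kill (Set.toFinite B⁻¹) h1' hK' hK'frag hK'1 ?_ hg hc
          intro W hW hWfrag
          rw [inv_inv] at hW hWfrag
          exact le_trans hle (hKmin W hW hWfrag)
        have hrev : kap B⁻¹ ≤ kap B := kap_rev_le hBfin hB1 hQne
        rw [ncard_inv] at hmain
        omega
  have := grow hBfin hB1 hQT
  omega


section Reduction

variable {X : Type*} [MulAction G X]

lemma fiber_facts (htX : MulAction.IsPretransitive G X) {w : ℕ} (hw : 0 < w)
    (hs : ∀ x : X, Nat.card (MulAction.stabilizer G x) = w) (x₀ x : X) :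
    {g : G | g • x₀ = x}.ncard = w ∧ {g : G | g • x₀ = x}.Finite ∧
      {g : G | g • x₀ = x}.Nonempty := by
  haveI := htX
  obtain ⟨g₀, hg₀⟩ := MulAction.exists_smul_eq G x₀ x
  haveI hstabfin : Finite (MulAction.stabilizer G x₀) :=
    (Nat.card_pos_iff.mp (by rw [hs x₀]; exact hw)).2
  have heq : {g : G | g • x₀ = x} = (g₀ * ·) '' (MulAction.stabilizer G x₀ : Set G) := by
    ext g
    simp only [mem_setOf_eq, mem_image, SetLike.mem_coe, MulAction.mem_stabilizer_iff]
    constructor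
    · intro hg
      refine ⟨g₀⁻¹ * g, ?_, by group⟩
      rw [mul_smul, hg, ← hg₀, inv_smul_smul]
    · rintro ⟨h, hh, rfl⟩
      rw [mul_smul, hh, hg₀]
  have hcard : {g : G | g • x₀ = x}.ncard = w := by
    rw [heq, Set.ncard_image_of_injective _ (mul_right_injective g₀),
      ← Nat.card_coe_set_eq]
    simpa using hs x₀
  refine ⟨hcard, ?_, ⟨g₀, by simpa using hg₀⟩⟩
  rw [heq]
  exact (Set.toFinite _).image _

lemma preimage_facts (htX : MulAction.IsPretransitive G X) {w : ℕ} (hw : 0 < w)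
    (hs : ∀ x : X, Nat.card (MulAction.stabilizer G x) = w) (x₀ : X)
    {W : Set X} (hW : W.Finite) :
    ((fun g : G => g • x₀) ⁻¹' W).Finite ∧
      ((fun g : G => g • x₀) ⁻¹' W).ncard = w * W.ncard := by
  refine Set.Finite.induction_on
    (motive := fun W _ => ((fun g : G => g • x₀) ⁻¹' W).Finite ∧
      ((fun g : G => g • x₀) ⁻¹' W).ncard = w * W.ncard) W hW (by simp) ?_
  intro a W' ha hW' ih
  · have hsplit : ((fun g : G => g • x₀) ⁻¹' insert a W') =
        {g : G | g • x₀ = a} ∪ ((fun g : G => g • x₀) ⁻¹' W') := by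
      ext g; simp [Set.mem_insert_iff]
    obtain ⟨hfc, hff, -⟩ := fiber_facts htX hw hs x₀ a
    have hdisj : Disjoint {g : G | g • x₀ = a} ((fun g : G => g • x₀) ⁻¹' W') := by
      rw [Set.disjoint_left]
      intro g hg hg'
      simp only [Set.mem_setOf_eq] at hg
      exact ha (hg ▸ hg')
    constructor
    · rw [hsplit]; exact hff.union ih.1
    · rw [hsplit, Set.ncard_union_eq hdisj hff ih.1, hfc, ih.2,
        Set.ncard_insert_of_notMem ha hW']
      ring

end Reduction

end Duet17


theorem statement17 {G X Y : Type*} [Group G] [MulAction G X] [MulAction G Y]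
    [Nonempty X] [Nonempty Y]
    (htX : MulAction.IsPretransitive G X) (htY : MulAction.IsPretransitive G Y)
    (r : X → Y → Prop)
    (hr : ∀ (g : G) (x : X) (y : Y), r x y ↔ r (g • x) (g • y))
    (wX wY d : ℕ) (hwX : 0 < wX) (hwY : 0 < wY)
    -- w(Δ) is positive : the relation is nonempty
    (hdpos : 0 < d)
    (hsX : ∀ x : X, Nat.card (MulAction.stabilizer G x) = wX)
    (hsY : ∀ y : Y, Nat.card (MulAction.stabilizer G y) = wY)
    -- w(Δ) is finite : each N(x) is finite, of weight wY * d
    (hd : ∀ x : X, {y : Y | r x y}.Finite ∧ {y : Y | r x y}.ncard = d)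
    (A : Set X) (hAfin : A.Finite) (hAne : A.Nonempty)
    -- the only block of imprimitivity containing A is X itself
    (hclosure : ∀ T : Set X, (∀ g : G, g • T = T ∨ g • T ∩ T = ∅) → A ⊆ T →
      T = Set.univ)
    (hNA : {y : Y | ∃ a ∈ A, r a y} ≠ Set.univ) :
    -- 2·δ(A) ≤ w(A)
    wX * A.ncard + 2 * (wY * d) ≤ 2 * (wY * {y : Y | ∃ a ∈ A, r a y}.ncard) ∧
    -- if G is finite then 3·δ(A) ≤ |G|
    (Finite G →
      3 * (wX * A.ncard + wY * d) ≤
        Nat.card G + 3 * (wY * {y : Y | ∃ a ∈ A, r a y}.ncard)) := by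
    classical
  obtain ⟨x₀⟩ := ‹Nonempty X›
  obtain ⟨y₀⟩ := ‹Nonempty Y›
  haveI := htX; haveI := htY
  set S : Set G := (fun g : G => g • x₀) ⁻¹' A with hSdef
  set Λ : Set G := (fun g : G => g • y₀) ⁻¹' {y : Y | r x₀ y} with hΛdef
  set NA : Set Y := {y : Y | ∃ a ∈ A, r a y} with hNAdef
  -- finiteness and cardinality facts
  have hNAfin : NA.Finite := by
    have : NA = ⋃ a ∈ A, {y : Y | r a y} := by
      ext y; simp [hNAdef]
    rw [this]
    exact hAfin.biUnion (fun a _ => (hd a).1)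
  obtain ⟨hSfin, hScard⟩ := Duet17.preimage_facts htX hwX hsX x₀ hAfin
  obtain ⟨hΛfin, hΛcard⟩ := Duet17.preimage_facts htY hwY hsY y₀ (hd x₀).1
  rw [(hd x₀).2] at hΛcard
  obtain ⟨hPfin, hPcard⟩ := Duet17.preimage_facts htY hwY hsY y₀ hNAfin
  rw [← hSdef] at hSfin hScard
  rw [← hΛdef] at hΛfin hΛcard
  have hΛne : Λ.Nonempty := by
    rw [Set.nonempty_iff_ne_empty]
    intro hc
    rw [hc, Set.ncard_empty] at hΛcard
    have := Nat.mul_pos hwY hdpos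
    omega
  have hSne : S.Nonempty := by
    obtain ⟨a, ha⟩ := hAne
    obtain ⟨s, hs⟩ := MulAction.exists_smul_eq G x₀ a
    exact ⟨s, by rw [hSdef, Set.mem_preimage, hs]; exact ha⟩
  -- the key product identity
  have hSΛ : S * Λ = (fun g : G => g • y₀) ⁻¹' NA := by
    ext g
    constructor
    · rintro ⟨s, hs, u, hu, rfl⟩
      rw [Set.mem_preimage]
      rw [hSdef, Set.mem_preimage] at hs
      rw [hΛdef, Set.mem_preimage, Set.mem_setOf_eq] at hu
      have h2 := (hr s x₀ (u • y₀)).mp hu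
      rw [← mul_smul] at h2
      exact ⟨s • x₀, hs, h2⟩
    · intro hg
      rw [Set.mem_preimage] at hg
      obtain ⟨a, ha, hra⟩ := hg
      obtain ⟨s, hsx⟩ := MulAction.exists_smul_eq G x₀ a
      have hsS : s ∈ S := by rw [hSdef, Set.mem_preimage, hsx]; exact ha
      have h2 := (hr s⁻¹ a (g • y₀)).mp hra
      rw [← hsx, inv_smul_smul, ← mul_smul] at h2
      exact ⟨s, hsS, s⁻¹ * g, by rw [hΛdef, Set.mem_preimage]; exact h2, by group⟩
  have hSΛfin : (S * Λ).Finite := hSΛ ▸ hPfin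
  have hSΛcard : (S * Λ).ncard = wY * NA.ncard := hSΛ ▸ hPcard
  have hSΛuniv : S * Λ ≠ Set.univ := by
    obtain ⟨y, hy⟩ := (Set.ne_univ_iff_exists_notMem _).mp hNA
    obtain ⟨g, hg⟩ := MulAction.exists_smul_eq G y₀ y
    intro hc
    apply hy
    have : g ∈ S * Λ := hc ▸ Set.mem_univ g
    rw [hSΛ, Set.mem_preimage, hg] at this
    exact this
  -- choose a base point of S
  obtain ⟨s₁, hs₁⟩ := hSne
  have hx₁A : s₁ • x₀ ∈ A := by rwa [hSdef, Set.mem_preimage] at hs₁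
  set x₁ : X := s₁ • x₀ with hx₁def
  -- the sets for the core theorem
  set B : Set G := {s₁} * S⁻¹ with hBdef
  set T : Set G := Λ⁻¹ * {s₁⁻¹} with hTdef
  have hB1 : (1:G) ∈ B := by
    have : s₁ * s₁⁻¹ ∈ B := Set.mul_mem_mul rfl (by simpa using hs₁)
    simpa using this
  have hBfin : B.Finite := (Set.finite_singleton _).mul hSfin.inv
  have hTfin : T.Finite := hΛfin.inv.mul (Set.finite_singleton _)
  have hTne : T.Nonempty := (hΛne.inv).mul ⟨s₁⁻¹, rfl⟩
  have hTB : T * B = (S * Λ)⁻¹ := by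
    rw [hTdef, hBdef, mul_assoc, ← mul_assoc ({s₁⁻¹} : Set G),
      Set.singleton_mul_singleton, inv_mul_cancel, Set.singleton_one, one_mul,
      mul_inv_rev]
  have hTBuniv : T * B ≠ Set.univ := by
    rw [hTB]
    intro hc
    apply hSΛuniv
    have := congrArg (fun s : Set G => s⁻¹) hc
    simpa using this
  -- cardinalities
  have hBcard : B.ncard = wX * A.ncard := by
    rw [hBdef, Set.singleton_mul,
      Set.ncard_image_of_injective _ (mul_right_injective s₁), Duet17.ncard_inv, hScard]
  have hTcard : T.ncard = wY * d := by
    rw [hTdef, Set.mul_singleton,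
      Set.ncard_image_of_injective _ (mul_left_injective s₁⁻¹), Duet17.ncard_inv, hΛcard]
  have hTBcard : (T * B).ncard = wY * NA.ncard := by
    rw [hTB, Duet17.ncard_inv, hSΛcard]
  -- the generation condition
  have hgen : ∀ H : Subgroup G, B ⊆ (H : Set G) → H = ⊤ := by
    intro H hsub
    have hstab : ∀ p : G, p • x₁ = x₁ → p ∈ H := by
      intro p hp
      have hs₂ : s₁ * (s₁⁻¹ * p * s₁)⁻¹ ∈ S := by
        rw [hSdef, Set.mem_preimage]
        have hq : (s₁⁻¹ * p * s₁) • x₀ = x₀ := by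
          rw [mul_smul, mul_smul, ← hx₁def, hp, inv_smul_smul]
        have hq' : (s₁⁻¹ * p * s₁)⁻¹ • x₀ = x₀ := by
          conv_lhs => rw [← hq, inv_smul_smul]
        rw [mul_smul, hq', ← hx₁def]
        exact hx₁A
      have hmem : s₁ * (s₁ * (s₁⁻¹ * p * s₁)⁻¹)⁻¹ ∈ B :=
        Set.mul_mem_mul rfl (by simpa using hs₂)
      have : s₁ * (s₁ * (s₁⁻¹ * p * s₁)⁻¹)⁻¹ = p := by group
      rw [this] at hmem
      exact hsub hmem
    set TX : Set X := {x : X | ∃ h : G, h ∈ H ∧ h • x₁ = x} with hTXdef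
    have hblock : ∀ g : G, g • TX = TX ∨ g • TX ∩ TX = ∅ := by
      intro g
      rcases Set.eq_empty_or_nonempty (g • TX ∩ TX) with hemp | hne
      · exact Or.inr hemp
      · left
        obtain ⟨x, hx1, hx2⟩ := hne
        rw [Set.mem_smul_set] at hx1
        obtain ⟨x', hx', rfl⟩ := hx1
        obtain ⟨h, hh, rfl⟩ := hx'
        obtain ⟨h', hh', hh'eq⟩ := hx2
        have hp : (h'⁻¹ * (g * h)) • x₁ = x₁ := by
          rw [mul_smul, mul_smul g h, ← hh'eq, inv_smul_smul]
        have hgH : g ∈ H := by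
          have hpH := hstab _ hp
          have hgid : g = h' * (h'⁻¹ * (g * h)) * h⁻¹ := by group
          rw [hgid]
          exact H.mul_mem (H.mul_mem hh' hpH) (H.inv_mem hh)
        ext x
        constructor
        · intro hx
          rw [Set.mem_smul_set] at hx
          obtain ⟨x', ⟨h'', hh'', rfl⟩, rfl⟩ := hx
          exact ⟨g * h'', H.mul_mem hgH hh'', (mul_smul g h'' x₁)⟩
        · rintro ⟨h'', hh'', rfl⟩
          rw [Set.mem_smul_set]
          refine ⟨(g⁻¹ * h'') • x₁, ⟨g⁻¹ * h'', H.mul_mem (H.inv_mem hgH) hh'', rfl⟩, ?_⟩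
          rw [smul_smul]
          simp
    have hATX : A ⊆ TX := by
      intro a ha
      obtain ⟨s, hsx⟩ := MulAction.exists_smul_eq G x₀ a
      have hsS : s ∈ S := by rw [hSdef, Set.mem_preimage, hsx]; exact ha
      have hmem : s₁ * s⁻¹ ∈ B := Set.mul_mem_mul rfl (by simpa using hsS)
      have hH : s * s₁⁻¹ ∈ H := by
        have := H.inv_mem (hsub hmem)
        simpa using this
      exact ⟨s * s₁⁻¹, hH, by rw [hx₁def, mul_smul, inv_smul_smul, hsx]⟩
    have huniv : TX = Set.univ := hclosure TX hblock hATX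
    rw [Subgroup.eq_top_iff']
    intro g
    have hgx : g • x₁ ∈ TX := huniv ▸ Set.mem_univ _
    obtain ⟨h, hh, hhx⟩ := hgx
    have hp : (g⁻¹ * h) • x₁ = x₁ := by rw [mul_smul, hhx, inv_smul_smul]
    have hpH := hstab _ hp
    have hgid : g = h * (g⁻¹ * h)⁻¹ := by group
    rw [hgid]
    exact H.mul_mem hh (H.inv_mem hpH)
  -- apply the core theorem
  have hcore := Duet17.core hBfin hB1 hgen hTfin hTne hTBuniv
  rw [hBcard, hTcard, hTBcard] at hcore
  constructor
  · omega
  · intro hGfin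
    haveI := hGfin
    -- second part : 3δ(A) ≤ |G|
    set Sstar : Set G := {g : G | ∀ u ∈ Λ, g * u ∈ S * Λ} with hSstardef
    have hSsub : S ⊆ Sstar := fun s hs u hu => Set.mul_mem_mul hs hu
    have hFne : (S * Λ)ᶜ.Nonempty := Set.nonempty_compl.mpr hSΛuniv
    have hcompl : Sstarᶜ = (S * Λ)ᶜ * Λ⁻¹ := by
      ext g
      simp only [Set.mem_compl_iff, hSstardef, Set.mem_setOf_eq, not_forall]
      constructor
      · rintro ⟨u, hu, hgu⟩
        have : (g * u) * u⁻¹ ∈ (S * Λ)ᶜ * Λ⁻¹ :=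
          Set.mul_mem_mul hgu (by simpa using hu)
        simpa [mul_assoc] using this
      · rintro ⟨f, hf, v, hv, rfl⟩
        refine ⟨v⁻¹, by simpa using hv, ?_⟩
        simpa [mul_assoc] using hf
    have hpart : Sstar.ncard + Sstarᶜ.ncard = Nat.card G := Set.ncard_add_ncard_compl _
    have hb1 : S.ncard ≤ Sstar.ncard := Set.ncard_le_ncard hSsub (Set.toFinite _)
    have hb2 : Λ.ncard ≤ Sstarᶜ.ncard := by
      rw [hcompl]
      obtain ⟨f₀, hf₀⟩ := hFne
      have hsub : {f₀} * Λ⁻¹ ⊆ (S * Λ)ᶜ * Λ⁻¹ :=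
        Set.mul_subset_mul_right (Set.singleton_subset_iff.mpr hf₀)
      have hcard : ({f₀} * Λ⁻¹).ncard = Λ.ncard := by
        rw [Set.singleton_mul,
          Set.ncard_image_of_injective _ (mul_right_injective f₀), Duet17.ncard_inv]
      rw [← hcard]
      exact Set.ncard_le_ncard hsub (Set.toFinite _)
    have hb3 : S.ncard ≤ (S * Λ).ncard := by
      obtain ⟨u₀, hu₀⟩ := hΛne
      have hsub : S * {u₀} ⊆ S * Λ :=
        Set.mul_subset_mul_left (Set.singleton_subset_iff.mpr hu₀)
      have hcard : (S * {u₀}).ncard = S.ncard := by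
        rw [Set.mul_singleton, Set.ncard_image_of_injective _ (mul_left_injective u₀)]
      rw [← hcard]
      exact Set.ncard_le_ncard hsub (Set.toFinite _)
    rw [hScard] at hb1 hb3
    rw [hΛcard] at hb2
    rw [hSΛcard] at hb3
    omega
end

section
/- Let V and E be nonempty sets, let i be an incidence relation between V and E such that every e ∈ E is incident with exactly 2 elements of V and every v ∈ V is incident with exactly 3 elements of E, and let a group G act on V and on E preserving the relation i (i(v,e) holds iff i(g•v, g•e) holds), with both actions transitive and all point stabilizers finite. Call a tuple (x,y,z,e,f) a two-edge path if x, y, z are distinct vertices, e ≠ f are edges, e is incident with x and with y, and f is incident with y and with z. Then G acts transitively on two-edge paths up to reversal: for any two two-edge paths (x,y,z,e,f) and (x',y',z',e',f') there exists g ∈ G with g•y = y', {g•x, g•z} = {x', z'}, and {g•e, g•f} = {e', f'}. -/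
open MulAction Set Pointwise

section
variable {G V E : Type*} [Group G] [MulAction G V] [MulAction G E]

private lemma aux19_card_stab_smul {X : Type*} [MulAction G X] (g : G) (v : X) :
    Nat.card (stabilizer G (g • v)) = Nat.card (stabilizer G v) := by
  rw [MulAction.stabilizer_smul_eq_stabilizer_map_conj]
  exact (Nat.card_congr (Subgroup.equivMapOfInjective _ _ ((MulAut.conj g).injective)).toEquiv).symm

private lemma aux19_orbit_stab {H X : Type*} [Group H] [MulAction H X] (x : X) :
    (orbit H x).ncard * Nat.card (stabilizer H x) = Nat.card H := by
  rw [← MulAction.index_stabilizer, mul_comm, Subgroup.card_mul_index]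

private def aux19_eqv (v : V) (e : E) :
    stabilizer (stabilizer G v) e ≃ stabilizer (stabilizer G e) v where
  toFun h := ⟨⟨(h.1 : G), mem_stabilizer_iff.mpr h.2⟩, mem_stabilizer_iff.mpr h.1.2⟩
  invFun h := ⟨⟨(h.1 : G), mem_stabilizer_iff.mpr h.2⟩, mem_stabilizer_iff.mpr h.1.2⟩
  left_inv h := rfl
  right_inv h := rfl

private lemma aux19_star (v : V) (e : E) :
    (orbit (stabilizer G v) e).ncard * Nat.card (stabilizer G e)
      = (orbit (stabilizer G e) v).ncard * Nat.card (stabilizer G v) := by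
  have h1 := aux19_orbit_stab (H := stabilizer G v) e
  have h2 := aux19_orbit_stab (H := stabilizer G e) v
  have hd : Nat.card (stabilizer (stabilizer G v) e)
      = Nat.card (stabilizer (stabilizer G e) v) := Nat.card_congr (aux19_eqv v e)
  calc (orbit (stabilizer G v) e).ncard * Nat.card (stabilizer G e)
      = (orbit (stabilizer G v) e).ncard * ((orbit (stabilizer G e) v).ncard
          * Nat.card (stabilizer (stabilizer G e) v)) := by rw [h2]
    _ = (orbit (stabilizer G e) v).ncard * ((orbit (stabilizer G v) e).ncard
          * Nat.card (stabilizer (stabilizer G v) e)) := by rw [hd]; ring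
    _ = (orbit (stabilizer G e) v).ncard * Nat.card (stabilizer G v) := by rw [h1]


private lemma aux19_orbit_smul (g : G) (v : V) (e : E) :
    orbit (stabilizer G (g • e)) (g • v) = g • (orbit (stabilizer G e) v : Set V) := by
  ext u
  constructor
  · intro hu
    obtain ⟨h, hh⟩ := MulAction.mem_orbit_iff.mp hu
    have hmem : h.1 • (g • e) = g • e := h.2
    refine ⟨(g⁻¹ * h.1 * g) • v, ?_, ?_⟩
    · refine MulAction.mem_orbit_iff.mpr ⟨⟨g⁻¹ * h.1 * g, mem_stabilizer_iff.mpr ?_⟩, rfl⟩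
      rw [mul_smul, mul_smul, hmem, inv_smul_smul]
    · rw [← hh]
      show g • ((g⁻¹ * h.1 * g) • v) = (h.1 : G) • (g • v)
      rw [← mul_smul, ← mul_smul]
      congr 1
      group
  · rintro ⟨u', hu', rfl⟩
    obtain ⟨h, hh⟩ := MulAction.mem_orbit_iff.mp hu'
    have hmem : h.1 • e = e := h.2
    refine MulAction.mem_orbit_iff.mpr ⟨⟨g * h.1 * g⁻¹, mem_stabilizer_iff.mpr ?_⟩, ?_⟩
    · rw [mul_smul, mul_smul, inv_smul_smul, hmem]
    · rw [← hh]
      show (g * h.1 * g⁻¹) • (g • v) = g • ((h.1 : G) • v)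
      rw [← mul_smul, ← mul_smul]
      congr 1
      group

private lemma aux19_m_smul (g : G) (v : V) (e : E) :
    (orbit (stabilizer G (g • e)) (g • v)).ncard = (orbit (stabilizer G e) v).ncard := by
  rw [aux19_orbit_smul, ← Set.image_smul, Set.ncard_image_of_injective _ (MulAction.injective g)]

private lemma aux19_m_same {i : V → E → Prop} (he : ∀ e : E, {v : V | i v e}.encard = 2)
    (hinv : ∀ (g : G) (v : V) (e : E), i v e ↔ i (g • v) (g • e))
    (e : E) (v w : V) (hv : i v e) (hw : i w e) :
    (orbit (stabilizer G e) v).ncard = (orbit (stabilizer G e) w).ncard := by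
  by_cases hvw : v = w
  · rw [hvw]
  have horb : ∀ u : V, i u e → orbit (stabilizer G e) u ⊆ {x | i x e} := by
    rintro u hu x hx
    obtain ⟨h, rfl⟩ := MulAction.mem_orbit_iff.mp hx
    have hmem : h.1 • e = e := h.2
    have := (hinv h.1 u e).mp hu
    rw [hmem] at this
    exact this
  have hVset : {x | i x e} = {v, w} := by
    obtain ⟨a, b, hab, hset⟩ := Set.encard_eq_two.mp (he e)
    rw [hset]
    have hv' : v ∈ ({a, b} : Set V) := hset ▸ hv
    have hw' : w ∈ ({a, b} : Set V) := hset ▸ hw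
    rcases hv' with rfl | rfl <;> rcases hw' with rfl | rfl <;> simp_all [Set.pair_comm]
  by_cases hmem : w ∈ orbit (stabilizer G e) v
  · rw [MulAction.orbit_eq_iff.mpr hmem]
  · have hmem' : v ∉ orbit (stabilizer G e) w := by
      intro hc
      exact hmem (MulAction.orbit_eq_iff.mpr hc ▸ MulAction.mem_orbit_self w)
    have h1 : orbit (stabilizer G e) v = {v} := by
      apply subset_antisymm
      · intro x hx
        have := horb v hv hx
        rw [hVset] at this
        rcases this with rfl | rfl
        · rfl
        · exact absurd hx hmem
      · simp [MulAction.mem_orbit_self]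
    have h2 : orbit (stabilizer G e) w = {w} := by
      apply subset_antisymm
      · intro x hx
        have := horb w hw hx
        rw [hVset] at this
        rcases this with rfl | rfl
        · exact absurd hx hmem'
        · rfl
      · simp [MulAction.mem_orbit_self]
    rw [h1, h2, Set.ncard_singleton, Set.ncard_singleton]


private lemma aux19_card_stab_const {X : Type*} [MulAction G X]
    (ht : MulAction.IsPretransitive G X) (v w : X) :
    Nat.card (stabilizer G v) = Nat.card (stabilizer G w) := by
  obtain ⟨g, hg⟩ := ht.exists_smul_eq v w
  rw [← hg, aux19_card_stab_smul]

private lemma aux19_m_const {i : V → E → Prop} (he : ∀ e : E, {v : V | i v e}.encard = 2)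
    (hinv : ∀ (g : G) (v : V) (e : E), i v e ↔ i (g • v) (g • e))
    (htE : MulAction.IsPretransitive G E)
    (v : V) (e : E) (w : V) (f : E) (hv : i v e) (hw : i w f) :
    (orbit (stabilizer G e) v).ncard = (orbit (stabilizer G f) w).ncard := by
  obtain ⟨g, hg⟩ := htE.exists_smul_eq e f
  have h1 := aux19_m_smul g v e
  rw [hg] at h1
  have h2 : i (g • v) f := by
    have := (hinv g v e).mp hv
    rwa [hg] at this
  rw [← h1]
  exact aux19_m_same he hinv f (g • v) w h2 hw

private lemma aux19_k_const {i : V → E → Prop} (he : ∀ e : E, {v : V | i v e}.encard = 2)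
    (hinv : ∀ (g : G) (v : V) (e : E), i v e ↔ i (g • v) (g • e))
    (htV : MulAction.IsPretransitive G V) (htE : MulAction.IsPretransitive G E)
    (hsE : ∀ e : E, Finite (MulAction.stabilizer G e))
    (v : V) (e : E) (w : V) (f : E) (hv : i v e) (hw : i w f) :
    (orbit (stabilizer G v) e).ncard = (orbit (stabilizer G w) f).ncard := by
  have s1 := aux19_star (G := G) v e
  have s2 := aux19_star (G := G) w f
  have hm := aux19_m_const he hinv htE v e w f hv hw
  have hs := aux19_card_stab_const htV v w
  have ht := aux19_card_stab_const htE e f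
  haveI := hsE e
  have htpos : 0 < Nat.card (stabilizer G e) := Nat.card_pos
  apply Nat.eq_of_mul_eq_mul_right htpos
  rw [s1, ht, s2, hm, hs]

private lemma aux19_third {α : Type*} {S : Set α} (hS : S.encard = 2) {u1 u2 u3 : α}
    (h1 : u1 ∈ S) (h2 : u2 ∈ S) (h3 : u3 ∈ S) (h12 : u1 ≠ u2) (h32 : u3 ≠ u2) : u3 = u1 := by
  obtain ⟨x, y, hxy, rfl⟩ := Set.encard_eq_two.mp hS
  simp only [Set.mem_insert_iff, Set.mem_singleton_iff] at h1 h2 h3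
  rcases h1 with rfl | rfl <;> rcases h2 with rfl | rfl <;> rcases h3 with rfl | rfl <;>
    first | rfl | (exfalso; tauto)

private lemma aux19_loc {i : V → E → Prop} (he : ∀ e : E, {v : V | i v e}.encard = 2)
    (hv : ∀ v : V, {e : E | i v e}.encard = 3)
    (hinv : ∀ (g : G) (v : V) (e : E), i v e ↔ i (g • v) (g • e))
    (htV : MulAction.IsPretransitive G V) (htE : MulAction.IsPretransitive G E)
    (hsE : ∀ e : E, Finite (MulAction.stabilizer G e))
    (v : V) (p q : E) (hp : i v p) (hq : i v q) :
    ∃ g : G, g • v = v ∧ g • p = q := by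
  by_contra hcon
  push_neg at hcon
  have hqo : q ∉ orbit (stabilizer G v) p := by
    intro hmem
    obtain ⟨g, hg⟩ := MulAction.mem_orbit_iff.mp hmem
    exact hcon g.1 g.2 hg
  obtain ⟨a, b, c, hab, hac, hbc, hAeq⟩ := Set.encard_eq_three.mp (hv v)
  have hAfin : ({e | i v e} : Set E).Finite := by
    rw [hAeq]
    exact (((Set.finite_singleton c).insert b).insert a)
  have hA3 : ({e | i v e} : Set E).ncard = 3 :=
    Set.ncard_eq_three.mpr ⟨a, b, c, hab, hac, hbc, hAeq⟩
  have horb : ∀ r : E, i v r → orbit (stabilizer G v) r ⊆ {e | i v e} := by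
    rintro r hr x hx
    obtain ⟨g, rfl⟩ := MulAction.mem_orbit_iff.mp hx
    have hmem : g.1 • v = v := g.2
    have := (hinv g.1 v r).mp hr
    rw [hmem] at this
    exact this
  have finp : (orbit (stabilizer G v) p).Finite := hAfin.subset (horb p hp)
  have finq : (orbit (stabilizer G v) q).Finite := hAfin.subset (horb q hq)
  have hdisj : Disjoint (orbit (stabilizer G v) p) (orbit (stabilizer G v) q) := by
    rw [Set.disjoint_left]
    intro x hxp hxq
    have h1 := MulAction.orbit_eq_iff.mpr hxp
    have h2 := MulAction.orbit_eq_iff.mpr hxq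
    exact hqo (by rw [← h1, h2]; exact MulAction.mem_orbit_self q)
  have hsum : (orbit (stabilizer G v) p).ncard + (orbit (stabilizer G v) q).ncard ≤ 3 := by
    rw [← Set.ncard_union_eq hdisj finp finq, ← hA3]
    exact Set.ncard_le_ncard (Set.union_subset (horb p hp) (horb q hq)) hAfin
  have hppos : 0 < (orbit (stabilizer G v) p).ncard :=
    (Set.ncard_pos finp).mpr ⟨p, MulAction.mem_orbit_self p⟩
  have hkpq : (orbit (stabilizer G v) p).ncard = (orbit (stabilizer G v) q).ncard :=
    aux19_k_const he hinv htV htE hsE v p v q hp hq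
  have hk1 : (orbit (stabilizer G v) p).ncard = 1 := by omega
  have FIX : ∀ (w : V) (r : E), i w r → ∀ g : G, g • w = w → g • r = r := by
    intro w r hwr g hgw
    have hk : (orbit (stabilizer G w) r).ncard = 1 := by
      rw [aux19_k_const he hinv htV htE hsE w r v p hwr hp]; exact hk1
    obtain ⟨x, hx⟩ := Set.ncard_eq_one.mp hk
    have h1 : r ∈ orbit (stabilizer G w) r := MulAction.mem_orbit_self r
    have h2 : g • r ∈ orbit (stabilizer G w) r :=
      MulAction.mem_orbit_iff.mpr ⟨⟨g, hgw⟩, rfl⟩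
    rw [hx, Set.mem_singleton_iff] at h1 h2
    rw [h2, ← h1]
  have hia : i v a := by
    have : a ∈ {e | i v e} := by rw [hAeq]; exact Set.mem_insert _ _
    exact this
  have hib : i v b := by
    have : b ∈ {e | i v e} := by
      rw [hAeq]; exact Set.mem_insert_of_mem _ (Set.mem_insert _ _)
    exact this
  have hic : i v c := by
    have : c ∈ {e | i v e} := by
      rw [hAeq]; exact Set.mem_insert_of_mem _ (Set.mem_insert_of_mem _ rfl)
    exact this
  obtain ⟨w, hwv, hiwa⟩ : ∃ w, w ≠ v ∧ i w a := by
    obtain ⟨x1, x2, h12, hset⟩ := Set.encard_eq_two.mp (he a)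
    have hx1 : i x1 a := by
      have : x1 ∈ {u | i u a} := by rw [hset]; exact Set.mem_insert _ _
      exact this
    have hx2 : i x2 a := by
      have : x2 ∈ {u | i u a} := by
        rw [hset]; exact Set.mem_insert_of_mem _ rfl
      exact this
    have hv1 : v ∈ ({x1, x2} : Set V) := hset ▸ hia
    rcases hv1 with rfl | rfl
    · exact ⟨x2, Ne.symm h12, hx2⟩
    · exact ⟨x1, h12, hx1⟩
  obtain ⟨g, hg⟩ := htE.exists_smul_eq a b
  have hgvne : g • v ≠ v := fun h => hab ((FIX v a hia g h).symm.trans hg)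
  have higv : i (g • v) b := by have := (hinv g v a).mp hia; rwa [hg] at this
  have higw : i (g • w) b := by have := (hinv g w a).mp hiwa; rwa [hg] at this
  have hgw : g • w = v :=
    aux19_third (he b) hib higv higw (Ne.symm hgvne)
      (fun h0 => hwv (MulAction.injective g h0))
  obtain ⟨h, hh⟩ := htE.exists_smul_eq a c
  have hhvne : h • v ≠ v := fun h0 => hac ((FIX v a hia h h0).symm.trans hh)
  have hihv : i (h • v) c := by have := (hinv h v a).mp hia; rwa [hh] at this
  have hihw : i (h • w) c := by have := (hinv h w a).mp hiwa; rwa [hh] at this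
  have hhw : h • w = v :=
    aux19_third (he c) hic hihv hihw (Ne.symm hhvne)
      (fun h0 => hwv (MulAction.injective h h0))
  have hphiv : (h * g⁻¹) • v = v := by
    have hg' : g⁻¹ • v = w := by rw [← hgw, inv_smul_smul]
    rw [mul_smul, hg', hhw]
  have hphib : (h * g⁻¹) • b = c := by
    have hg' : g⁻¹ • b = a := by rw [← hg, inv_smul_smul]
    rw [mul_smul, hg', hh]
  exact hbc ((FIX v b hib (h * g⁻¹) hphiv).symm.trans hphib)
end

theorem statement19 {G V E : Type*} [Group G] [MulAction G V] [MulAction G E]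
    [Nonempty V] [Nonempty E]
    (i : V → E → Prop)
    -- every edge is incident with exactly 2 vertices
    (he : ∀ e : E, {v : V | i v e}.encard = 2)
    -- every vertex is incident with exactly 3 edges
    (hv : ∀ v : V, {e : E | i v e}.encard = 3)
    -- G preserves the incidence relation
    (hinv : ∀ (g : G) (v : V) (e : E), i v e ↔ i (g • v) (g • e))
    (htV : MulAction.IsPretransitive G V) (htE : MulAction.IsPretransitive G E)
    (hsV : ∀ v : V, Finite (MulAction.stabilizer G v))
    (hsE : ∀ e : E, Finite (MulAction.stabilizer G e))
    (x y z : V) (e f : E)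
    (hpath : x ≠ y ∧ y ≠ z ∧ x ≠ z ∧ e ≠ f ∧ i x e ∧ i y e ∧ i y f ∧ i z f)
    (x' y' z' : V) (e' f' : E)
    (hpath' : x' ≠ y' ∧ y' ≠ z' ∧ x' ≠ z' ∧ e' ≠ f' ∧
      i x' e' ∧ i y' e' ∧ i y' f' ∧ i z' f') :
    ∃ g : G, g • y = y' ∧ ({g • x, g • z} : Set V) = {x', z'} ∧
      ({g • e, g • f} : Set E) = {e', f'} := by
  obtain ⟨hxy, hyz, hxz, hef, hxe, hye, hyf, hzf⟩ := hpath
  obtain ⟨hxy', hyz', hxz', hef', hxe', hye', hyf', hzf'⟩ := hpath'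
  -- Step 1: find g with g • y = y' and {g • e, g • f} = {e', f'}
  obtain ⟨g, hgy, hpair⟩ : ∃ g : G, g • y = y' ∧ ({g • e, g • f} : Set E) = {e', f'} := by
    obtain ⟨g0, hg0⟩ := htV.exists_smul_eq y y'
    have h1 : i y' (g0 • e) := by have := (hinv g0 y e).mp hye; rwa [hg0] at this
    obtain ⟨t1, ht1v, ht1e⟩ := aux19_loc he hv hinv htV htE hsE y' (g0 • e) e' h1 hye'
    set g1 := t1 * g0 with hg1def
    have hg1y : g1 • y = y' := by rw [hg1def, mul_smul, hg0, ht1v]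
    have hg1e : g1 • e = e' := by rw [hg1def, mul_smul, ht1e]
    have hg1f : i y' (g1 • f) := by have := (hinv g1 y f).mp hyf; rwa [hg1y] at this
    have hg1ef : g1 • e ≠ g1 • f := fun h0 => hef (MulAction.injective g1 h0)
    by_cases hcase : g1 • f = f'
    · exact ⟨g1, hg1y, by rw [hg1e, hcase]⟩
    · set c := g1 • f with hcdef
      have hce' : c ≠ e' := by rw [← hg1e]; exact fun h0 => hg1ef h0.symm
      have hcf' : c ≠ f' := hcase
      obtain ⟨τ, hτv, hτf'⟩ := aux19_loc he hv hinv htV htE hsE y' f' c hyf' hg1f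
      -- the edge set at y' is exactly {e', f', c}
      have hBeq : {r | i y' r} = {e', f', c} := by
        refine (Set.Finite.eq_of_subset_of_encard_le ?_ ?_ ?_).symm
        · exact ((Set.finite_singleton c).insert f').insert e'
        · intro r hr
          simp only [Set.mem_insert_iff, Set.mem_singleton_iff] at hr
          rcases hr with rfl | rfl | rfl
          · exact hye'
          · exact hyf'
          · exact hg1f
        · rw [hv y', Set.encard_eq_three.mpr ⟨e', f', c, hef', Ne.symm hce', Ne.symm hcf', rfl⟩]
      have hτe'B : τ • e' ∈ ({e', f', c} : Set E) := by
        rw [← hBeq]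
        have := (hinv τ y' e').mp hye'
        rwa [hτv] at this
      have hτcB : τ • c ∈ ({e', f', c} : Set E) := by
        rw [← hBeq]
        have := (hinv τ y' c).mp hg1f
        rwa [hτv] at this
      have hτe'c : τ • e' ≠ c := by
        rw [← hτf']
        exact fun h0 => hef' (MulAction.injective τ h0)
      have hτcc : τ • c ≠ c := fun h0 =>
        hcf' (MulAction.injective τ (h0.trans hτf'.symm))
      have hτe'cne : τ • e' ≠ τ • c := fun h0 => hce' ((MulAction.injective τ h0).symm)
      have hτe'mem : τ • e' ∈ ({e', f'} : Set E) := by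
        simp only [Set.mem_insert_iff, Set.mem_singleton_iff] at hτe'B ⊢
        rcases hτe'B with h0 | h0 | h0
        · exact Or.inl h0
        · exact Or.inr h0
        · exact absurd h0 hτe'c
      have hτcmem : τ • c ∈ ({e', f'} : Set E) := by
        simp only [Set.mem_insert_iff, Set.mem_singleton_iff] at hτcB ⊢
        rcases hτcB with h0 | h0 | h0
        · exact Or.inl h0
        · exact Or.inr h0
        · exact absurd h0 hτcc
      refine ⟨τ * g1, by rw [mul_smul, hg1y, hτv], ?_⟩
      have hA1 : (τ * g1) • e = τ • e' := by rw [mul_smul, hg1e]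
      have hA2 : (τ * g1) • f = τ • c := by rw [mul_smul, ← hcdef]
      rw [hA1, hA2]
      -- {τ • e', τ • c} = {e', f'}
      simp only [Set.mem_insert_iff, Set.mem_singleton_iff] at hτe'mem hτcmem
      rcases hτe'mem with h0 | h0 <;> rcases hτcmem with h0' | h0'
      · exact absurd (h0.trans h0'.symm) hτe'cne
      · rw [h0, h0']
      · rw [h0, h0']; exact Set.pair_comm _ _
      · exact absurd (h0.trans h0'.symm) hτe'cne
  -- Step 2: deduce the vertex part
  refine ⟨g, hgy, ?_, hpair⟩
  have hgef : g • e ≠ g • f := fun h0 => hef (MulAction.injective g h0)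
  have hgemem : g • e ∈ ({e', f'} : Set E) := hpair ▸ Set.mem_insert _ _
  have hgfmem : g • f ∈ ({e', f'} : Set E) := hpair ▸ Set.mem_insert_of_mem _ rfl
  simp only [Set.mem_insert_iff, Set.mem_singleton_iff] at hgemem hgfmem
  have hgxy' : g • x ≠ y' := by rw [← hgy]; exact fun h0 => hxy (MulAction.injective g h0)
  have hgzy' : g • z ≠ y' := by
    rw [← hgy]; exact fun h0 => hyz (MulAction.injective g h0).symm
  have hixge : i (g • x) (g • e) := (hinv g x e).mp hxe
  have hizgf : i (g • z) (g • f) := (hinv g z f).mp hzf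
  rcases hgemem with h0 | h0 <;> rcases hgfmem with h1 | h1
  · exact absurd (h0.trans h1.symm) hgef
  · -- g • e = e', g • f = f'
    rw [h0] at hixge; rw [h1] at hizgf
    have hgx : g • x = x' := aux19_third (he e') hxe' hye' hixge hxy' hgxy'
    have hgz : g • z = z' := aux19_third (he f') hzf' hyf' hizgf (Ne.symm hyz') hgzy'
    rw [hgx, hgz]
  · -- g • e = f', g • f = e'
    rw [h0] at hixge; rw [h1] at hizgf
    have hgx : g • x = z' := aux19_third (he f') hzf' hyf' hixge (Ne.symm hyz') hgxy'
    have hgz : g • z = x' := aux19_third (he e') hxe' hye' hizgf hxy' hgzy'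
    rw [hgx, hgz]; exact Set.pair_comm _ _
  · exact absurd (h0.trans h1.symm) hgef
end
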